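/- arXiv:0712.4002 — 10 statements merged into one kernel-verified Lean document; each statement's English description precedes it below -/
import Mathlib

section
/- For every integer q with |q| ≥ 2, the value f(1/q) = 1 + Σ_{n=1}^∞ (1/q)^{n²} / ∏_{k=1}^{n} (1 + (1/q)^k)² is irrational; i.e., Ramanujan's third-order mock theta function f takes an irrational value at each point ±1/2, ±1/3, ±1/4, … . -/
noncomputable def ramP (q : ℤ) (m : ℕ) : ℝ := ∏ k ∈ Finset.range m, ((q:ℝ)^(k+1)+1)^2
noncomputable def ramu (q : ℤ) (n : ℕ) : ℝ := (q:ℝ)^(n+1) / ramP q (n+1)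
def ramD (q : ℤ) (m : ℕ) : ℤ := ∏ k ∈ Finset.range m, (q^(k+1)+1)^2

variable {q : ℤ}

lemma ram_q2 (hq : 2 ≤ |q|) : (2:ℝ) ≤ |(q:ℝ)| := by
  rw [← Int.cast_abs]; exact_mod_cast hq

lemma ram_factor_lb (hq : 2 ≤ |q|) (k : ℕ) : |(q:ℝ)|^k ≤ |(q:ℝ)^(k+1)+1| := by
  have h2 := ram_q2 hq
  have h1 : (1:ℝ) ≤ |(q:ℝ)|^k := one_le_pow₀ (by linarith)
  have key : |(q:ℝ)|^k + 1 ≤ |(q:ℝ)|^(k+1) := by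
    have : |(q:ℝ)|^(k+1) = |(q:ℝ)|^k * |(q:ℝ)| := pow_succ _ _
    nlinarith
  have habs := abs_add_le ((q:ℝ)^(k+1)+1) (-1)
  simp only [add_neg_cancel_right, abs_neg, abs_one] at habs
  rw [abs_pow] at habs
  linarith

lemma ram_factor_ne (hq : 2 ≤ |q|) (k : ℕ) : ((q:ℝ)^(k+1)+1) ≠ 0 := by
  have h := ram_factor_lb hq k
  have h1 : (1:ℝ) ≤ |(q:ℝ)|^k := one_le_pow₀ (by linarith [ram_q2 hq])
  intro h0; rw [h0] at h; simp at h; linarith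

lemma ramP_ne (hq : 2 ≤ |q|) (m : ℕ) : ramP q m ≠ 0 :=
  Finset.prod_ne_zero_iff.2 fun k _ => pow_ne_zero _ (ram_factor_ne hq k)

lemma ramq_ne (hq : 2 ≤ |q|) : (q:ℝ) ≠ 0 := by
  have h := ram_q2 hq; intro h0; rw [h0] at h; simp at h; linarith

lemma ramu_ne (hq : 2 ≤ |q|) (n : ℕ) : ramu q n ≠ 0 :=
  div_ne_zero (pow_ne_zero _ (ramq_ne hq)) (ramP_ne hq _)

lemma ramu_succ (hq : 2 ≤ |q|) (n : ℕ) :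
    ramu q (n+1) = ramu q n * ((q:ℝ) / ((q:ℝ)^(n+2)+1)^2) := by
  have hP : ramP q (n+2) = ramP q (n+1) * ((q:ℝ)^(n+2)+1)^2 := by
    rw [ramP, ramP, Finset.prod_range_succ]
  have h1 := ramP_ne hq (n+1)
  have h2 := ram_factor_ne hq (n+1)
  rw [ramu, ramu, hP]
  field_simp
  ring

lemma ram_ratio (hq : 2 ≤ |q|) (n : ℕ) :
    |ramu q (n+1)| ≤ (1/2)^(2*n+1) * |ramu q n| := by
  have h2 := ram_q2 hq
  have key : |(q:ℝ)| * 2^(2*n+1) ≤ |((q:ℝ)^(n+2)+1)^2| := by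
    rw [abs_pow]
    have h1 : |(q:ℝ)|^(n+1) ≤ |(q:ℝ)^(n+2)+1| := ram_factor_lb hq (n+1)
    have h2' : |(q:ℝ)|^(n+1) * |(q:ℝ)|^(n+1) = |(q:ℝ)| * |(q:ℝ)|^(2*n+1) := by
      rw [← pow_add, ← pow_succ']; ring_nf
    have h3 : (2:ℝ)^(2*n+1) ≤ |(q:ℝ)|^(2*n+1) := pow_le_pow_left₀ (by norm_num) h2 _
    have h5 : |(q:ℝ)|^(n+1) * |(q:ℝ)|^(n+1) ≤ |(q:ℝ)^(n+2)+1| * |(q:ℝ)^(n+2)+1| :=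
      mul_le_mul h1 h1 (by positivity) (abs_nonneg _)
    have h4 : |(q:ℝ)^(n+2)+1| ^ 2 = |(q:ℝ)^(n+2)+1| * |(q:ℝ)^(n+2)+1| := sq _
    nlinarith
  rw [ramu_succ hq, abs_mul, abs_div]
  have hd : (0:ℝ) < |((q:ℝ)^(n+2)+1)^2| := by
    have : ((q:ℝ)^(n+2)+1) ≠ 0 := ram_factor_ne hq (n+1)
    positivity
  rw [mul_comm ((1/2:ℝ)^(2*n+1)) _]
  apply mul_le_mul_of_nonneg_left _ (abs_nonneg _)
  rw [div_le_iff₀ hd]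
  calc |(q:ℝ)| = |(q:ℝ)| * 2^(2*n+1) * (1/2)^(2*n+1) := by
        rw [mul_assoc, ← mul_pow]; norm_num
    _ ≤ |((q:ℝ)^(n+2)+1)^2| * (1/2)^(2*n+1) := by
        apply mul_le_mul_of_nonneg_right key (by positivity)
    _ = (1/2)^(2*n+1) * |((q:ℝ)^(n+2)+1)^2| := mul_comm _ _

lemma ram_half (hq : 2 ≤ |q|) (n : ℕ) : |ramu q (n+1)| ≤ (1/2) * |ramu q n| := by
  have h := ram_ratio hq n
  have : ((1:ℝ)/2)^(2*n+1) ≤ 1/2 := by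
    apply pow_le_of_le_one (by norm_num) (by norm_num) ; omega
  nlinarith [abs_nonneg (ramu q n)]

lemma ram_eighth (hq : 2 ≤ |q|) (n : ℕ) (hn : 1 ≤ n) :
    |ramu q (n+1)| ≤ (1/8) * |ramu q n| := by
  have h := ram_ratio hq n
  have h3 : 3 ≤ 2*n+1 := by omega
  have : ((1:ℝ)/2)^(2*n+1) ≤ (1/2)^3 :=
    pow_le_pow_of_le_one (by norm_num) (by norm_num) h3
  nlinarith [abs_nonneg (ramu q n)]

lemma ram_decay (hq : 2 ≤ |q|) (N : ℕ) : ∀ n : ℕ, |ramu q (n + N)| ≤ |ramu q N| * (1/2)^n := by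
  intro n
  induction n with
  | zero => simp
  | succ n ih =>
    have h := ram_half hq (n + N)
    calc |ramu q (n+1+N)| = |ramu q ((n+N)+1)| := by ring_nf
      _ ≤ (1/2) * |ramu q (n+N)| := h
      _ ≤ (1/2) * (|ramu q N| * (1/2)^n) := by linarith
      _ = |ramu q N| * (1/2)^(n+1) := by ring

lemma ram_geom_bound (v : ℕ → ℝ) (c : ℝ) (h : ∀ n, |v n| ≤ c * (1/2)^n) :
    Summable v ∧ |∑' n, v n| ≤ 2 * c := by
  have hg : Summable (fun n : ℕ => c * (1/2:ℝ)^n) :=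
    (summable_geometric_of_lt_one (by norm_num) (by norm_num)).mul_left c
  have habs : Summable (fun n => |v n|) := hg.of_nonneg_of_le (fun n => abs_nonneg _) h
  have hv : Summable v := habs.of_abs
  refine ⟨hv, ?_⟩
  have hnorm : |∑' n, v n| ≤ ∑' n, |v n| := by
    have := norm_tsum_le_tsum_norm (f := v) (by simpa only [Real.norm_eq_abs] using habs)
    simpa only [Real.norm_eq_abs] using this
  calc |∑' n, v n| ≤ ∑' n, |v n| := hnorm
    _ ≤ ∑' n : ℕ, c * (1/2:ℝ)^n := Summable.tsum_le_tsum h habs hg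
    _ = 2 * c := by
        rw [tsum_mul_left, tsum_geometric_of_lt_one (by norm_num) (by norm_num)]
        norm_num; ring

lemma ram_summable (hq : 2 ≤ |q|) : Summable (ramu q) := by
  have := ram_geom_bound (fun n => ramu q (n + 0)) |ramu q 0| (ram_decay hq 0)
  simpa using this.1

lemma ram_tail_summable (hq : 2 ≤ |q|) (N : ℕ) : Summable (fun n => ramu q (n + N)) :=
  (ram_geom_bound _ |ramu q N| (ram_decay hq N)).1

lemma ram_tail_le (hq : 2 ≤ |q|) (N : ℕ) :
    |∑' n, ramu q (n + N)| ≤ 2 * |ramu q N| :=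
  (ram_geom_bound _ |ramu q N| (ram_decay hq N)).2

lemma ram_tail_ne (hq : 2 ≤ |q|) (N : ℕ) (hN : 1 ≤ N) :
    (∑' n, ramu q (n + N)) ≠ 0 := by
  have hsplit : (∑' n, ramu q (n + N)) = ramu q N + ∑' n, ramu q (n + (N+1)) := by
    rw [Summable.tsum_eq_zero_add (ram_tail_summable hq N)]
    simp only [zero_add]
    congr 1
    apply tsum_congr
    intro n
    congr 1
    omega
  have h1 : |∑' n, ramu q (n + (N+1))| ≤ 2 * |ramu q (N+1)| := ram_tail_le hq (N+1)
  have h2 : |ramu q (N+1)| ≤ (1/8) * |ramu q N| := ram_eighth hq N hN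
  have h3 : 0 < |ramu q N| := abs_pos.2 (ramu_ne hq N)
  intro h0
  rw [h0] at hsplit
  have : ramu q N = - ∑' n, ramu q (n + (N+1)) := by linarith [hsplit]
  have : |ramu q N| ≤ 2 * |ramu q (N+1)| := by
    rw [this, abs_neg]; exact h1
  linarith

lemma ram_prod_eq (hq : 2 ≤ |q|) (m : ℕ) :
    ∏ k ∈ Finset.range m, (1+(1/(q:ℝ))^(k+1))^2 = ramP q m / (q:ℝ)^(m*(m+1)) := by
  have hq0 : (q:ℝ) ≠ 0 := ramq_ne hq
  induction m with
  | zero => simp [ramP]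
  | succ m ih =>
    rw [Finset.prod_range_succ, ih]
    have hPs : ramP q (m+1) = ramP q m * ((q:ℝ)^(m+1)+1)^2 := by
      rw [ramP, ramP, Finset.prod_range_succ]
    have h1 : (1+(1/(q:ℝ))^(m+1)) = ((q:ℝ)^(m+1)+1) / (q:ℝ)^(m+1) := by
      field_simp
      rw [add_mul, one_mul, ← mul_pow, one_div_mul_cancel hq0, one_pow]
    have e : (q:ℝ)^((m+1)*(m+1+1)) = (q:ℝ)^(m*(m+1)) * ((q:ℝ)^(m+1))^2 := by
      rw [← pow_mul, ← pow_add]; congr 1; ring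
    rw [hPs, h1, div_pow, e]
    ring

lemma ram_term_eq (hq : 2 ≤ |q|) (n : ℕ) :
    (1/(q:ℝ))^((n+1)^2) / ∏ k ∈ Finset.range (n+1), (1+(1/(q:ℝ))^(k+1))^2 = ramu q n := by
  have hq0 : (q:ℝ) ≠ 0 := ramq_ne hq
  have hP : ramP q (n+1) ≠ 0 := ramP_ne hq (n+1)
  rw [ram_prod_eq hq (n+1), ramu]
  rw [div_div_eq_mul_div, one_div, inv_pow, inv_mul_eq_div]
  have key : (q:ℝ)^((n+1)*(n+1+1)) / (q:ℝ)^((n+1)^2) = (q:ℝ)^(n+1) := by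
    rw [show (n+1)*(n+1+1) = (n+1)^2+(n+1) from by ring, pow_add]
    field_simp
  rw [key]

lemma ramD_cast (m : ℕ) : ((ramD q m : ℤ) : ℝ) = ramP q m := by
  rw [ramD, ramP]
  push_cast
  rfl

lemma ram_int (hq : 2 ≤ |q|) (N : ℕ) :
    ∃ z : ℤ, (ramP q N) * (∑ n ∈ Finset.range N, ramu q n) = (z : ℝ) := by
  refine ⟨∑ n ∈ Finset.range N, q^(n+1) * ∏ k ∈ Finset.Ico (n+1) N, (q^(k+1)+1)^2, ?_⟩
  rw [Finset.mul_sum]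
  push_cast
  apply Finset.sum_congr rfl
  intro n hn
  have hn' : n + 1 ≤ N := Finset.mem_range.1 hn
  have hsplit : ramP q N = ramP q (n+1) * ∏ k ∈ Finset.Ico (n+1) N, ((q:ℝ)^(k+1)+1)^2 := by
    rw [ramP, ramP, Finset.prod_range_mul_prod_Ico _ hn']
  rw [hsplit, ramu]
  have hP : ramP q (n+1) ≠ 0 := ramP_ne hq (n+1)
  field_simp

/-- Ramanujan's third-order mock theta function
`f(x) = 1 + Σ_{n=1}^∞ x^{n²} / ∏_{k=1}^{n} (1 + x^k)²`
takes an irrational value at `x = 1/q` for every integer `q` with `|q| ≥ 2`. -/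
theorem ramanujan_f_irrational (q : ℤ) (hq : 2 ≤ |q|) :
    Irrational (1 + ∑' n : ℕ,
      (1 / (q : ℝ)) ^ ((n + 1) ^ 2) /
        ∏ k ∈ Finset.range (n + 1), (1 + (1 / (q : ℝ)) ^ (k + 1)) ^ 2) := by
  rintro ⟨ξ, hξ⟩
  have hsum : Summable (ramu q) := ram_summable hq
  have hts : (∑' n : ℕ, (1/(q:ℝ))^((n+1)^2) /
      ∏ k ∈ Finset.range (n+1), (1+(1/(q:ℝ))^(k+1))^2) = ∑' n, ramu q n :=
    tsum_congr (ram_term_eq hq)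
  rw [hts] at hξ
  have hA2 : (2:ℝ) ≤ |(q:ℝ)| := ram_q2 hq
  set b := ξ.den with hbdef
  have hb : 0 < b := ξ.pos
  set N := 4*b+4 with hNdef
  have hN1 : 1 ≤ N := by omega
  have hPpos : 0 < ramP q N := by
    rw [ramP]
    apply Finset.prod_pos
    intro k _
    have := ram_factor_ne hq k
    positivity
  set S := ∑ n ∈ Finset.range N, ramu q n with hSdef
  set T := ∑' n, ramu q (n+N) with hTdef
  have hsplit : S + T = ∑' n, ramu q n := Summable.sum_add_tsum_nat_add N hsum
  obtain ⟨z, hz⟩ := ram_int hq N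
  have hnum : ((ξ.num:ℝ)) = (ξ:ℝ) * b := by
    rw [Rat.cast_def]
    field_simp [hbdef]
    rfl
  have hT : T = (ξ:ℝ) - 1 - S := by rw [hξ]; linarith [hsplit]
  set m : ℤ := ramD q N * (ξ.num - b) - b * z with hmdef
  have hcast : ((m:ℤ):ℝ) = ramP q N * ((ξ.num:ℝ) - b) - b * z := by
    rw [hmdef]; push_cast [ramD_cast]; ring
  have hme : ((m:ℤ):ℝ) = (b:ℝ) * ramP q N * T := by
    rw [hcast, hT, hnum, ← hz]; ring
  have hm0 : m ≠ 0 := by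
    rw [← Int.cast_ne_zero (α := ℝ), hme]
    exact mul_ne_zero (mul_ne_zero (Nat.cast_ne_zero.2 hb.ne') hPpos.ne')
      (ram_tail_ne hq N hN1)
  have h1le : (1:ℝ) ≤ |((m:ℤ):ℝ)| := by
    rw [← Int.cast_abs]
    exact_mod_cast Int.one_le_abs hm0
  -- size bound
  have hApos : (0:ℝ) < |(q:ℝ)| := by linarith
  have hFne : ((q:ℝ)^(N+1)+1) ≠ 0 := ram_factor_ne hq N
  have hPu : ramP q N * ramu q N = (q:ℝ)^(N+1) / ((q:ℝ)^(N+1)+1)^2 := by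
    rw [ramu, show ramP q (N+1) = ramP q N * ((q:ℝ)^(N+1)+1)^2 from by
      rw [ramP, ramP, Finset.prod_range_succ]]
    field_simp
  have hfpos : (0:ℝ) < ((q:ℝ)^(N+1)+1)^2 := by positivity
  have hfl : |(q:ℝ)|^(2*N) ≤ ((q:ℝ)^(N+1)+1)^2 := by
    have h := ram_factor_lb hq N
    have h2 := mul_le_mul h h (by positivity) (abs_nonneg _)
    calc |(q:ℝ)|^(2*N) = |(q:ℝ)|^N * |(q:ℝ)|^N := by rw [← pow_add]; congr 1; ring
      _ ≤ |(q:ℝ)^(N+1)+1| * |(q:ℝ)^(N+1)+1| := h2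
      _ = ((q:ℝ)^(N+1)+1)^2 := by rw [← sq, sq_abs]
  have hbound : |((m:ℤ):ℝ)| ≤ 2 * b * (|(q:ℝ)|^(N+1) / |(q:ℝ)|^(2*N)) := by
    rw [hme, abs_mul, abs_mul, Nat.abs_cast, abs_of_pos hPpos]
    have h4 : |ramP q N * ramu q N| ≤ |(q:ℝ)|^(N+1) / |(q:ℝ)|^(2*N) := by
      rw [hPu, abs_div, abs_pow, abs_of_pos hfpos]
      gcongr
    calc (b:ℝ) * ramP q N * |T|
        ≤ (b:ℝ) * ramP q N * (2 * |ramu q N|) :=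
          mul_le_mul_of_nonneg_left (ram_tail_le hq N) (by positivity)
      _ = 2 * b * |ramP q N * ramu q N| := by
          rw [abs_mul, abs_of_pos hPpos]; ring
      _ ≤ 2 * b * (|(q:ℝ)|^(N+1) / |(q:ℝ)|^(2*N)) := by
          apply mul_le_mul_of_nonneg_left h4 (by positivity)
  have hlt : 2 * (b:ℝ) * (|(q:ℝ)|^(N+1) / |(q:ℝ)|^(2*N)) < 1 := by
    have hA : |(q:ℝ)|^(2*N) = |(q:ℝ)|^(N+1) * |(q:ℝ)|^(N-1) := by
      rw [← pow_add]; congr 1; omega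
    have hsimp : |(q:ℝ)|^(N+1) / |(q:ℝ)|^(2*N) = 1 / |(q:ℝ)|^(N-1) := by
      rw [hA, ← div_div, div_self (by positivity : |(q:ℝ)|^(N+1) ≠ 0)]
    rw [hsimp]
    rw [mul_one_div, div_lt_one (by positivity)]
    have hnat : 2*b < 2^(N-1) := by
      calc 2*b < 2^(2*b) := Nat.lt_two_pow_self
        _ ≤ 2^(N-1) := Nat.pow_le_pow_right (by norm_num) (by omega)
    calc 2 * (b:ℝ) < 2^(N-1) := by exact_mod_cast hnat
      _ ≤ |(q:ℝ)|^(N-1) := pow_le_pow_left₀ (by norm_num) hA2 _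
  linarith
end

section
/- For every integer q with |q| ≥ 2, the value φ(1/q) = 1 + Σ_{n=1}^∞ (1/q)^{n²} / ∏_{k=1}^{n} (1 + (1/q)^{2k}) is irrational; i.e., Ramanujan's third-order mock theta function φ takes an irrational value at each point ±1/2, ±1/3, ±1/4, … . -/
open Finset

set_option maxHeartbeats 1000000

private def rP (q : ℤ) (m : ℕ) : ℤ := ∏ k ∈ Finset.range m, (q ^ (2 * (k + 1)) + 1)

private noncomputable def ra (q : ℤ) (n : ℕ) : ℝ := (q : ℝ) ^ (n + 1) / ((rP q (n + 1) : ℤ) : ℝ)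

private lemma rP_factor_pos (q : ℤ) (k : ℕ) : 0 < q ^ (2 * (k + 1)) + 1 := by
  have h : (0:ℤ) ≤ q ^ (2 * (k + 1)) := by
    rw [pow_mul]; positivity
  linarith

private lemma rP_pos (q : ℤ) (m : ℕ) : 0 < rP q m :=
  Finset.prod_pos fun k _ => rP_factor_pos q k

private lemma rP_split (q : ℤ) {m n : ℕ} (h : m ≤ n) :
    rP q n = rP q m * ∏ k ∈ Finset.Ico m n, (q ^ (2 * (k + 1)) + 1) :=
  (Finset.prod_range_mul_prod_Ico _ h).symm

private lemma key (q : ℤ) (hq : 2 ≤ |q|) {N n : ℕ} (h : N ≤ n) :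
    |((rP q N : ℤ) : ℝ) * ra q n| ≤ (|(q:ℝ)|⁻¹) ^ (n + 1) := by
  have habsq : (2:ℝ) ≤ |(q:ℝ)| := by
    have h2 : ((2:ℤ):ℝ) ≤ ((|q|:ℤ):ℝ) := by exact_mod_cast hq
    push_cast at h2
    exact h2
  have habs2 : (0:ℝ) < |(q:ℝ)| := by linarith
  have hq0 : (q:ℝ) ≠ 0 := by
    intro h0
    rw [h0, abs_zero] at habs2
    exact lt_irrefl _ habs2
  have hsplit := rP_split q (h.trans (Nat.le_succ n))
  set Q : ℤ := ∏ k ∈ Finset.Ico N (n + 1), (q ^ (2 * (k + 1)) + 1) with hQ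
  have hQpos : 0 < Q := Finset.prod_pos fun k _ => rP_factor_pos q k
  have hPN : ((rP q N : ℤ):ℝ) ≠ 0 := by
    exact_mod_cast (rP_pos q N).ne'
  have hQ0 : ((Q : ℤ):ℝ) ≠ 0 := by exact_mod_cast hQpos.ne'
  have heq : ((rP q N : ℤ):ℝ) * ra q n = (q:ℝ) ^ (n+1) / (Q:ℝ) := by
    rw [ra, hsplit]
    push_cast
    field_simp
  rw [heq]
  have hQcast : (0:ℝ) < (Q:ℝ) := by exact_mod_cast hQpos
  rw [abs_div, abs_pow, abs_of_pos hQcast]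
  have hQge : (|(q:ℝ)|) ^ (2*(n+1)) ≤ (Q:ℝ) := by
    have hlast : Q = (∏ k ∈ Finset.Ico N n, (q ^ (2 * (k + 1)) + 1)) * (q ^ (2 * (n + 1)) + 1) := by
      rw [hQ, Finset.prod_Ico_succ_top h]
    have hppos : (0:ℤ) < ∏ k ∈ Finset.Ico N n, (q ^ (2 * (k + 1)) + 1) :=
      Finset.prod_pos fun k _ => rP_factor_pos q k
    have hone : (1:ℤ) ≤ ∏ k ∈ Finset.Ico N n, (q ^ (2 * (k + 1)) + 1) := hppos
    have h2 : q ^ (2 * (n + 1)) ≤ Q := by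
      have hfp := rP_factor_pos q n
      calc q ^ (2 * (n + 1)) ≤ q ^ (2 * (n + 1)) + 1 := by linarith
        _ ≤ (∏ k ∈ Finset.Ico N n, (q ^ (2 * (k + 1)) + 1)) * (q ^ (2 * (n + 1)) + 1) := by
            nlinarith
        _ = Q := hlast.symm
    have habseq : (|(q:ℝ)|) ^ (2*(n+1)) = ((q ^ (2*(n+1)) : ℤ) : ℝ) := by
      rw [← abs_pow, pow_mul, pow_mul]
      push_cast
      rw [abs_of_nonneg (by positivity : (0:ℝ) ≤ ((q:ℝ)^2)^(n+1))]
    rw [habseq]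
    exact_mod_cast h2
  calc |(q:ℝ)| ^ (n+1) / (Q:ℝ) ≤ |(q:ℝ)| ^ (n+1) / (|(q:ℝ)|) ^ (2*(n+1)) := by
        apply div_le_div_of_nonneg_left (by positivity) (by positivity) hQge
    _ = (|(q:ℝ)|⁻¹) ^ (n + 1) := by
        rw [inv_pow, inv_eq_one_div, div_eq_div_iff (by positivity) (by positivity), one_mul,
          ← pow_add]
        congr 1
        ring

private lemma absq_ge (q : ℤ) (hq : 2 ≤ |q|) : (2:ℝ) ≤ |(q:ℝ)| := by
  have h2 : ((2:ℤ):ℝ) ≤ ((|q|:ℤ):ℝ) := by exact_mod_cast hq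
  push_cast at h2
  exact h2

private lemma summable_ra (q : ℤ) (hq : 2 ≤ |q|) : Summable (ra q) := by
  have habsq := absq_ge q hq
  have hW0 : (0:ℝ) ≤ |(q:ℝ)|⁻¹ := by positivity
  have hW1 : |(q:ℝ)|⁻¹ < 1 := inv_lt_one_of_one_lt₀ (by linarith)
  have hb : ∀ n : ℕ, ‖ra q n‖ ≤ |(q:ℝ)|⁻¹ * (|(q:ℝ)|⁻¹) ^ n := by
    intro n
    have hk := key q hq (Nat.zero_le n)
    simp only [rP, Finset.range_zero, Finset.prod_empty, Int.cast_one, one_mul] at hk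
    rw [Real.norm_eq_abs]
    calc |ra q n| ≤ (|(q:ℝ)|⁻¹) ^ (n+1) := hk
      _ = |(q:ℝ)|⁻¹ * (|(q:ℝ)|⁻¹) ^ n := by ring
  exact Summable.of_norm (Summable.of_nonneg_of_le (fun n => norm_nonneg _) hb
    ((summable_geometric_of_lt_one hW0 hW1).mul_left _))

private lemma tail_bound (q : ℤ) (hq : 2 ≤ |q|) (N : ℕ) :
    |((rP q N : ℤ):ℝ) * ∑' n : ℕ, ra q (n + N)| ≤ 2 * (|(q:ℝ)|⁻¹) ^ (N + 1) := by
  have habsq := absq_ge q hq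
  set W : ℝ := |(q:ℝ)|⁻¹ with hWdef
  have hW0 : (0:ℝ) ≤ W := by positivity
  have hWhalf : W ≤ 1/2 := by
    rw [hWdef, inv_le_comm₀ (by linarith) (by norm_num)]
    linarith
  have hW1 : W < 1 := by linarith
  have hsum : Summable (fun n => ra q (n + N)) :=
    (summable_nat_add_iff N).mpr (summable_ra q hq)
  have hb : ∀ n : ℕ, |((rP q N : ℤ):ℝ) * ra q (n + N)| ≤ W ^ (N+1) * W ^ n := by
    intro n
    calc |((rP q N : ℤ):ℝ) * ra q (n + N)| ≤ W ^ (n + N + 1) := key q hq (Nat.le_add_left N n)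
      _ = W ^ (N+1) * W ^ n := by rw [← pow_add]; congr 1; omega
  have hgs : Summable (fun n : ℕ => W ^ (N+1) * W ^ n) :=
    (summable_geometric_of_lt_one hW0 hW1).mul_left _
  have hSn : Summable (fun n => |((rP q N : ℤ):ℝ) * ra q (n + N)|) :=
    Summable.of_nonneg_of_le (fun n => abs_nonneg _) hb hgs
  have hinv : (1 - W)⁻¹ ≤ 2 := by
    rw [inv_le_comm₀ (by linarith) (by norm_num)]
    linarith
  calc |((rP q N : ℤ):ℝ) * ∑' n : ℕ, ra q (n + N)|
      = |∑' n : ℕ, ((rP q N : ℤ):ℝ) * ra q (n + N)| := by rw [tsum_mul_left]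
    _ ≤ ∑' n : ℕ, |((rP q N : ℤ):ℝ) * ra q (n + N)| := by
        have hnn := norm_tsum_le_tsum_norm (f := fun n : ℕ => ((rP q N : ℤ):ℝ) * ra q (n + N))
          (by simpa only [Real.norm_eq_abs] using hSn)
        simpa only [Real.norm_eq_abs] using hnn
    _ ≤ ∑' n : ℕ, W ^ (N+1) * W ^ n := Summable.tsum_le_tsum hb hSn hgs
    _ = W ^ (N+1) * (1 - W)⁻¹ := by rw [tsum_mul_left, tsum_geometric_of_lt_one hW0 hW1]
    _ ≤ 2 * W ^ (N + 1) := by nlinarith [pow_nonneg hW0 (N+1)]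

private lemma term_eq (q : ℤ) (hq : 2 ≤ |q|) (n : ℕ) :
    (1 / (q : ℝ)) ^ ((n + 1) ^ 2) /
        ∏ k ∈ Finset.range (n + 1), (1 + (1 / (q : ℝ)) ^ (2 * (k + 1))) = ra q n := by
  have habsq := absq_ge q hq
  have hq0 : (q:ℝ) ≠ 0 := by
    intro h0; rw [h0, abs_zero] at habsq; linarith
  have hPn : ((rP q (n+1) : ℤ):ℝ) ≠ 0 := by exact_mod_cast (rP_pos q (n+1)).ne'
  have hsum : ∀ m : ℕ, ∑ k ∈ Finset.range m, 2*(k+1) = m*(m+1) := by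
    intro m
    induction m with
    | zero => simp
    | succ m ih => rw [Finset.sum_range_succ, ih]; ring
  have hepow : (q:ℝ)^((n+1)*(n+2)) = ∏ k ∈ Finset.range (n+1), (q:ℝ)^(2*(k+1)) := by
    rw [Finset.prod_pow_eq_pow_sum, hsum (n+1)]
  have hprod : (∏ k ∈ Finset.range (n+1), (1 + (1/(q:ℝ))^(2*(k+1)))) * (q:ℝ)^((n+1)*(n+2))
      = ((rP q (n+1) : ℤ):ℝ) := by
    rw [hepow, ← Finset.prod_mul_distrib, rP]
    push_cast
    apply Finset.prod_congr rfl
    intro k _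
    have hne : (q:ℝ)^(2*(k+1)) ≠ 0 := pow_ne_zero _ hq0
    field_simp
    rw [one_div, inv_pow, add_mul, inv_mul_cancel₀ hne]; ring
  have hprodeq : ∏ k ∈ Finset.range (n+1), (1 + (1/(q:ℝ))^(2*(k+1)))
      = ((rP q (n+1):ℤ):ℝ) / (q:ℝ)^((n+1)*(n+2)) := by
    rw [eq_div_iff (pow_ne_zero _ hq0)]
    exact hprod
  rw [hprodeq, ra, div_div_eq_mul_div]
  congr 1
  have hee : (n+1)*(n+2) = (n+1)^2 + (n+1) := by ring
  rw [hee, pow_add, one_div, inv_pow, ← mul_assoc, inv_mul_cancel₀ (pow_ne_zero _ hq0), one_mul]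

/-- Ramanujan's third-order mock theta function
`φ(x) = 1 + Σ_{n=1}^∞ x^{n²} / ∏_{k=1}^{n} (1 + x^{2k})`
takes an irrational value at `x = 1/q` for every integer `q` with `|q| ≥ 2`. -/
theorem ramanujan_phi_irrational (q : ℤ) (hq : 2 ≤ |q|) :
    Irrational (1 + ∑' n : ℕ,
      (1 / (q : ℝ)) ^ ((n + 1) ^ 2) /
        ∏ k ∈ Finset.range (n + 1), (1 + (1 / (q : ℝ)) ^ (2 * (k + 1)))) := by
  have habsq := absq_ge q hq
  have hq0 : (q:ℝ) ≠ 0 := by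
    intro h0; rw [h0, abs_zero] at habsq; linarith
  have hrw : (∑' n : ℕ, (1 / (q : ℝ)) ^ ((n + 1) ^ 2) /
        ∏ k ∈ Finset.range (n + 1), (1 + (1 / (q : ℝ)) ^ (2 * (k + 1))))
      = ∑' n : ℕ, ra q n := tsum_congr fun n => term_eq q hq n
  rw [hrw]
  have hsum := summable_ra q hq
  have hirr : Irrational (∑' n : ℕ, ra q n) := by
    rintro ⟨c, hc⟩
    set W : ℝ := |(q:ℝ)|⁻¹ with hWdef
    have hW0 : (0:ℝ) ≤ W := by positivity
    have hWhalf : W ≤ 1/2 := by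
      rw [hWdef, inv_le_comm₀ (by linarith) (by norm_num)]
      linarith
    set N : ℕ := c.den with hNdef
    have hdenpos : (0:ℝ) < (c.den : ℝ) := by exact_mod_cast c.pos
    set T : ℝ := ∑' n : ℕ, ra q (n + N) with hTdef
    have hT : (∑ n ∈ Finset.range N, ra q n) + T = ∑' n : ℕ, ra q n :=
      Summable.sum_add_tsum_nat_add N hsum
    have hint : ∀ n, n < N → ((rP q N : ℤ):ℝ) * ra q n
        = (((q^(n+1) * ∏ k ∈ Finset.Ico (n+1) N, (q^(2*(k+1))+1)) : ℤ) : ℝ) := by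
      intro n hn
      have hsplit := rP_split q (Nat.succ_le_of_lt hn)
      have hPn : ((rP q (n+1) : ℤ):ℝ) ≠ 0 := by exact_mod_cast (rP_pos q (n+1)).ne'
      rw [ra, hsplit]
      push_cast
      field_simp
    set A : ℤ := c.num * rP q N
      - (c.den : ℤ) * ∑ n ∈ Finset.range N, (q^(n+1) * ∏ k ∈ Finset.Ico (n+1) N, (q^(2*(k+1))+1))
      with hAdef
    have hnum : (c.den:ℝ) * (c:ℝ) = (c.num:ℝ) := by
      rw [Rat.cast_def]
      field_simp
    have hA : (A:ℝ) = (c.den:ℝ) * (((rP q N : ℤ):ℝ) * T) := by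
      have hTval : T = (c:ℝ) - ∑ n ∈ Finset.range N, ra q n := by
        rw [hc]; linarith [hT]
      rw [hAdef, hTval]
      push_cast
      rw [mul_sub, mul_sub, ← mul_assoc, mul_comm ((c.den:ℝ)) (((rP q N : ℤ):ℝ))]
      rw [mul_assoc ((rP q N : ℤ):ℝ) (c.den:ℝ) (c:ℝ), hnum]
      rw [Finset.mul_sum, Finset.mul_sum]
      congr 1
      · push_cast; ring
      · rw [Finset.mul_sum]
        apply Finset.sum_congr rfl
        intro n hn
        have := hint n (Finset.mem_range.mp hn)
        push_cast at this ⊢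
        rw [mul_comm ((c.den:ℝ)), mul_assoc]
        rw [this]
        ring
    have hPNne : ((rP q N : ℤ):ℝ) ≠ 0 := by exact_mod_cast (rP_pos q N).ne'
    -- T ≠ 0
    have hTne : T ≠ 0 := by
      have hsum' : Summable (fun n => ra q (n + N)) :=
        (summable_nat_add_iff N).mpr hsum
      have h1 : T = ra q N + ∑' n : ℕ, ra q (n + (N+1)) := by
        rw [hTdef, Summable.tsum_eq_zero_add hsum']
        simp only [zero_add]
        congr 1
        apply tsum_congr
        intro n
        congr 1
        omega
      intro h0
      have hPsucc : (0:ℝ) < ((rP q (N+1) : ℤ):ℝ) := by exact_mod_cast rP_pos q (N+1)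
      have hval : |((rP q (N+1):ℤ):ℝ) * ra q N| = |(q:ℝ)|^(N+1) := by
        rw [ra, mul_div_assoc']
        rw [mul_comm, mul_div_assoc, div_self hPsucc.ne', mul_one, abs_pow]
      have htail := tail_bound q hq (N+1)
      have h2 : ((rP q (N+1):ℤ):ℝ) * ra q N
          = - (((rP q (N+1):ℤ):ℝ) * ∑' n : ℕ, ra q (n + (N+1))) := by
        have : ra q N = - ∑' n : ℕ, ra q (n + (N+1)) := by linarith [h1, h0]
        rw [this]; ring
      have h3 : |(q:ℝ)|^(N+1) ≤ 2 * W ^ (N+1+1) := by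
        rw [← hval, h2, abs_neg]
        exact htail
      have h4 : (2:ℝ) ≤ |(q:ℝ)|^(N+1) := by
        calc (2:ℝ) = 2^1 := by norm_num
          _ ≤ 2^(N+1) := by
              apply pow_le_pow_right₀ (by norm_num)
              omega
          _ ≤ |(q:ℝ)|^(N+1) := pow_le_pow_left₀ (by norm_num) habsq _
      have h5 : W ^ (N+1+1) ≤ (1/2:ℝ)^(N+1+1) := pow_le_pow_left₀ hW0 hWhalf _
      have h6 : ((1:ℝ)/2)^(N+1+1) ≤ (1/2)^2 := by
        apply pow_le_pow_of_le_one (by norm_num) (by norm_num)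
        omega
      norm_num at h6
      linarith
    have hAne : A ≠ 0 := by
      intro h0
      apply hTne
      have hz : (c.den:ℝ) * (((rP q N : ℤ):ℝ) * T) = 0 := by
        rw [← hA, h0, Int.cast_zero]
      rcases mul_eq_zero.mp hz with h | h
      · exact absurd h hdenpos.ne'
      rcases mul_eq_zero.mp h with h | h
      · exact absurd h hPNne
      · exact h
    have h1le : (1:ℝ) ≤ |(A:ℝ)| := by
      rw [← Int.cast_abs]
      exact_mod_cast Int.one_le_abs hAne
    have hbd : |(A:ℝ)| ≤ (c.den:ℝ) * (2 * W ^ (N+1)) := by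
      rw [hA, abs_mul]
      rw [abs_of_pos hdenpos]
      exact mul_le_mul_of_nonneg_left (tail_bound q hq N) hdenpos.le
    -- final contradiction
    have hWp : W ^ (N+1) ≤ (1/2:ℝ)^(N+1) := pow_le_pow_left₀ hW0 hWhalf _
    have hNlt : (c.den:ℝ) < 2^N := by
      exact_mod_cast (Nat.lt_two_pow_self : c.den < 2 ^ c.den)
    have h2N : (0:ℝ) < 2^N := by positivity
    have hpow : ((1:ℝ)/2)^(N+1) = (1/2) * (2^N)⁻¹ := by
      rw [pow_succ]
      rw [one_div, inv_pow]
      ring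
    rw [hpow] at hWp
    have : |(A:ℝ)| < 1 := by
      calc |(A:ℝ)| ≤ (c.den:ℝ) * (2 * W ^ (N+1)) := hbd
        _ ≤ (c.den:ℝ) * (2 * ((1/2) * (2^N)⁻¹)) := by
            apply mul_le_mul_of_nonneg_left _ hdenpos.le
            apply mul_le_mul_of_nonneg_left hWp (by norm_num)
        _ = (c.den:ℝ) * (2^N)⁻¹ := by ring
        _ < 2^N * (2^N)⁻¹ := by
            apply mul_lt_mul_of_pos_right hNlt (by positivity)
        _ = 1 := mul_inv_cancel₀ h2N.ne'
    linarith
  simpa using Irrational.ratCast_add (q := 1) hirr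
end

section
/- For every integer q with |q| ≥ 2, the value ψ(1/q) = Σ_{n=1}^∞ (1/q)^{n²} / ∏_{k=1}^{n} (1 − (1/q)^{2k−1}) is irrational; i.e., Ramanujan's third-order mock theta function ψ takes an irrational value at each point ±1/2, ±1/3, ±1/4, … . -/
open Finset

private lemma rat_approx_aux (ξ : ℚ) (P D : ℤ) (hD : D ≠ 0)
    (hne : (ξ : ℝ) ≠ (P : ℝ) / (D : ℝ)) :
    1 / ((ξ.den : ℝ) * |(D : ℝ)|) ≤ |(ξ : ℝ) - (P : ℝ) / (D : ℝ)| := by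
  have hden : (0:ℝ) < (ξ.den : ℝ) := by exact_mod_cast ξ.pos
  have hDR : ((D:ℤ) : ℝ) ≠ 0 := Int.cast_ne_zero.mpr hD
  obtain ⟨z, hzdef⟩ : ∃ z : ℤ, z = ξ.num * D - P * ξ.den := ⟨_, rfl⟩
  have hz : z ≠ 0 := by
    intro h
    apply hne
    have h' : (ξ.num : ℝ) * D = P * ξ.den := by
      have : ξ.num * D = P * ξ.den := by omega
      exact_mod_cast this
    rw [Rat.cast_def, div_eq_div_iff (ne_of_gt hden) hDR]
    exact h'
  have h1 : (1:ℝ) ≤ |(z:ℝ)| := by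
    rw [← Int.cast_abs]
    exact_mod_cast Int.one_le_abs hz
  have key : (ξ:ℝ) - (P:ℝ)/(D:ℝ) = (z:ℝ) / ((ξ.den:ℝ) * (D:ℝ)) := by
    rw [Rat.cast_def]
    rw [hzdef]
    field_simp
    push_cast
    ring
  rw [key, abs_div, abs_mul, abs_of_pos hden]
  gcongr

private lemma sum_odd_sq (m : ℕ) : ∑ k ∈ range m, (2 * k + 1) = m ^ 2 := by
  induction m with
  | zero => simp
  | succ n ih => rw [Finset.sum_range_succ, ih]; ring

/-- Ramanujan's third-order mock theta function
`ψ(x) = Σ_{n=1}^∞ x^{n²} / ∏_{k=1}^{n} (1 - x^{2k-1})`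
takes an irrational value at `x = 1/q` for every integer `q` with `|q| ≥ 2`. -/
theorem ramanujan_psi_irrational (q : ℤ) (hq : 2 ≤ |q|) :
    Irrational (∑' n : ℕ,
      (1 / (q : ℝ)) ^ ((n + 1) ^ 2) /
        ∏ k ∈ Finset.range (n + 1), (1 - (1 / (q : ℝ)) ^ (2 * k + 1))) := by
  have habs : (2:ℝ) ≤ |(q:ℝ)| := by exact_mod_cast hq
  have hq0 : (q:ℝ) ≠ 0 := by
    intro h; rw [h] at habs; simp at habs; linarith
  set f : ℕ → ℝ := fun k => (q:ℝ) ^ (2 * k + 1) - 1 with hfdef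
  set u : ℕ → ℝ := fun n => (∏ k ∈ range (n + 1), f k)⁻¹ with hudef
  -- factor bounds
  have hfb : ∀ k : ℕ, (2:ℝ) ^ (2 * k + 1) - 1 ≤ |f k| := by
    intro k
    have h1 : (2:ℝ) ^ (2 * k + 1) ≤ |(q:ℝ) ^ (2 * k + 1)| := by
      rw [abs_pow]
      exact pow_le_pow_left₀ (by norm_num) habs _
    have h2 : |(q:ℝ) ^ (2 * k + 1)| - |(1:ℝ)| ≤ |f k| := abs_sub_abs_le_abs_sub _ _
    simp only [abs_one] at h2
    linarith
  have hf1 : ∀ k : ℕ, 1 ≤ |f k| := by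
    intro k
    have h2 : (2:ℝ) ^ 1 ≤ (2:ℝ) ^ (2 * k + 1) := pow_le_pow_right₀ (by norm_num) (by omega)
    have := hfb k
    norm_num at h2
    linarith
  have hf7 : ∀ k : ℕ, 7 ≤ |f (k + 1)| := by
    intro k
    have h2 : (2:ℝ) ^ 3 ≤ (2:ℝ) ^ (2 * (k + 1) + 1) := pow_le_pow_right₀ (by norm_num) (by omega)
    have := hfb (k + 1)
    norm_num at h2
    linarith
  have hf0 : ∀ k : ℕ, f k ≠ 0 := by
    intro k h
    have := hf1 k
    rw [h] at this; simp at this; linarith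
  have hD0 : ∀ n : ℕ, (∏ k ∈ range (n + 1), f k) ≠ 0 :=
    fun n => Finset.prod_ne_zero_iff.mpr fun k _ => hf0 k
  have hu0 : ∀ n : ℕ, u n ≠ 0 := fun n => inv_ne_zero (hD0 n)
  have huabs : ∀ n : ℕ, 0 < |u n| := fun n => abs_pos.mpr (hu0 n)
  -- decay
  have hstep : ∀ n : ℕ, |u (n + 1)| ≤ |u n| * (1 / 7) := by
    intro n
    have : u (n + 1) = u n * (f (n + 1))⁻¹ := by
      simp only [hudef, Finset.prod_range_succ, mul_inv]
    rw [this, abs_mul]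
    have h7 := hf7 n
    have hinv : |(f (n + 1))⁻¹| ≤ 1 / 7 := by
      rw [abs_inv, one_div]
      exact inv_anti₀ (by norm_num) h7
    exact mul_le_mul_of_nonneg_left hinv (abs_nonneg (u n))
  have hgeo : ∀ a i : ℕ, |u (a + i)| ≤ |u a| * (1 / 7) ^ i := by
    intro a i
    induction i with
    | zero => simp
    | succ j ih =>
        have := hstep (a + j)
        calc |u (a + (j + 1))| = |u (a + j + 1)| := by ring_nf
          _ ≤ |u (a + j)| * (1 / 7) := hstep (a + j)
          _ ≤ |u a| * (1 / 7) ^ j * (1 / 7) := by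
              have : (0:ℝ) ≤ 1/7 := by norm_num
              nlinarith [abs_nonneg (u (a + j))]
          _ = |u a| * (1 / 7) ^ (j + 1) := by ring
  have hsum : Summable u := by
    apply Summable.of_norm_bounded (g := fun n => |u 0| * (1 / 7) ^ n)
    · exact (summable_geometric_of_lt_one (by norm_num) (by norm_num)).mul_left _
    · intro n
      have := hgeo 0 n
      simpa using this
  -- tail bounds
  have htail : ∀ N : ℕ, |∑' i : ℕ, u (i + N)| ≤ |u N| * (7 / 6) := by
    intro N
    have hs : Summable fun i => u (i + N) := (summable_nat_add_iff N).mpr hsum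
    have hsg : Summable fun i : ℕ => |u N| * (1 / 7) ^ i :=
      (summable_geometric_of_lt_one (by norm_num) (by norm_num)).mul_left _
    calc |∑' i : ℕ, u (i + N)| ≤ ∑' i : ℕ, |u (i + N)| := by
          simpa [Real.norm_eq_abs] using norm_tsum_le_tsum_norm (f := fun i => u (i + N))
            (by simpa [Real.norm_eq_abs] using hs.abs)
      _ ≤ ∑' i : ℕ, |u N| * (1 / 7) ^ i := by
          apply Summable.tsum_le_tsum _ hs.abs hsg
          intro i
          simpa [add_comm] using hgeo N i
      _ = |u N| * (1 - 1 / 7)⁻¹ := by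
          rw [tsum_mul_left, tsum_geometric_of_lt_one (by norm_num) (by norm_num)]
      _ = |u N| * (7 / 6) := by norm_num
  have hlow : ∀ N : ℕ, (5 / 6) * |u (N + 1)| ≤ |∑' i : ℕ, u (i + (N + 1))| := by
    intro N
    have hs : Summable fun i => u (i + (N + 1)) := (summable_nat_add_iff (N + 1)).mpr hsum
    have hsplit : u (N + 1) + ∑' i : ℕ, u (i + (N + 2)) = ∑' i : ℕ, u (i + (N + 1)) := by
      have := Summable.sum_add_tsum_nat_add (f := fun i => u (i + (N + 1))) 1 hs
      simpa [Finset.sum_range_one, add_assoc, add_comm, add_left_comm] using this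
    have h2 : |∑' i : ℕ, u (i + (N + 2))| ≤ |u (N + 2)| * (7 / 6) := htail (N + 2)
    have h3 : |u (N + 2)| ≤ |u (N + 1)| * (1 / 7) := hstep (N + 1)
    have h4 : |u (N + 1)| - |∑' i : ℕ, u (i + (N + 2))| ≤ |∑' i : ℕ, u (i + (N + 1))| := by
      rw [← hsplit]
      have := abs_add_le (u (N + 1) + ∑' i : ℕ, u (i + (N + 2))) (-(∑' i : ℕ, u (i + (N + 2))))
      simp only [add_neg_cancel_right, abs_neg] at this
      linarith
    nlinarith [abs_nonneg (∑' i : ℕ, u (i + (N + 2)))]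
  -- rewrite each term of the series
  have hterm : ∀ n : ℕ,
      (1 / (q : ℝ)) ^ ((n + 1) ^ 2) /
        ∏ k ∈ Finset.range (n + 1), (1 - (1 / (q : ℝ)) ^ (2 * k + 1)) = u n := by
    intro n
    have hpowprod : (q:ℝ) ^ ((n + 1) ^ 2) = ∏ k ∈ range (n + 1), (q:ℝ) ^ (2 * k + 1) := by
      rw [Finset.prod_pow_eq_pow_sum, sum_odd_sq]
    have hprod : (∏ k ∈ Finset.range (n + 1), (1 - (1 / (q : ℝ)) ^ (2 * k + 1)))
          * (q:ℝ) ^ ((n + 1) ^ 2)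
        = ∏ k ∈ range (n + 1), f k := by
      rw [hpowprod, ← Finset.prod_mul_distrib]
      apply Finset.prod_congr rfl
      intro k _
      have hk : ((q:ℝ)) ^ (2 * k + 1) ≠ 0 := pow_ne_zero _ hq0
      simp only [hfdef]
      field_simp
      rw [sub_mul, one_div, inv_pow, inv_mul_cancel₀ hk, one_mul]
    calc (1 / (q : ℝ)) ^ ((n + 1) ^ 2) /
          ∏ k ∈ Finset.range (n + 1), (1 - (1 / (q : ℝ)) ^ (2 * k + 1))
        = ((q:ℝ) ^ ((n + 1) ^ 2))⁻¹
            * (∏ k ∈ Finset.range (n + 1), (1 - (1 / (q : ℝ)) ^ (2 * k + 1)))⁻¹ := by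
          rw [one_div, inv_pow, div_eq_mul_inv]
      _ = ((∏ k ∈ Finset.range (n + 1), (1 - (1 / (q : ℝ)) ^ (2 * k + 1)))
            * (q:ℝ) ^ ((n + 1) ^ 2))⁻¹ := by
          rw [mul_inv, mul_comm]
      _ = u n := by rw [hprod]
  have hrw : (∑' n : ℕ,
      (1 / (q : ℝ)) ^ ((n + 1) ^ 2) /
        ∏ k ∈ Finset.range (n + 1), (1 - (1 / (q : ℝ)) ^ (2 * k + 1))) = ∑' n : ℕ, u n :=
    tsum_congr hterm
  rw [hrw]
  -- integer denominators
  set d : ℕ → ℤ := fun n => ∏ k ∈ range (n + 1), (q ^ (2 * k + 1) - 1) with hddef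
  have hdc : ∀ n : ℕ, ((d n : ℤ) : ℝ) = ∏ k ∈ range (n + 1), f k := by
    intro n
    simp only [hddef, hfdef]
    push_cast
    rfl
  have hdz : ∀ n : ℕ, d n ≠ 0 := by
    intro n h
    apply hD0 n
    rw [← hdc n, h]
    simp
  have hdvd : ∀ n m : ℕ, n ≤ m → d n ∣ d m := by
    intro n m h
    simp only [hddef]
    exact Finset.prod_dvd_prod_of_subset _ _ _ (Finset.range_subset_range.mpr (by omega))
  have hpart : ∀ m : ℕ, ∑ n ∈ range (m + 1), u n
      = (((∑ n ∈ range (m + 1), (d m / d n)) : ℤ) : ℝ) / ((d m : ℤ) : ℝ) := by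
    intro m
    rw [Int.cast_sum, Finset.sum_div]
    apply Finset.sum_congr rfl
    intro n hn
    have hnm : n ≤ m := Nat.lt_succ_iff.mp (Finset.mem_range.mp hn)
    rw [Int.cast_div_charZero (hdvd n m hnm)]
    have h1 : u n = ((d n : ℤ):ℝ)⁻¹ := by rw [hdc n]
    have h2 : ((d n : ℤ):ℝ) ≠ 0 := Int.cast_ne_zero.mpr (hdz n)
    have h3 : ((d m : ℤ):ℝ) ≠ 0 := Int.cast_ne_zero.mpr (hdz m)
    rw [h1]
    field_simp
  -- suppose the sum is rational
  rintro ⟨ξ, hξ⟩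
  set b : ℕ := ξ.den with hbdef
  have hb1 : 1 ≤ b := ξ.pos
  have hdecomp := Summable.sum_add_tsum_nat_add (f := u) (b + 1) hsum
  set T : ℝ := ∑' i : ℕ, u (i + (b + 1)) with hTdef
  set A : ℤ := ∑ n ∈ range (b + 1), (d b / d n) with hAdef
  have hTlow : (5 / 6) * |u (b + 1)| ≤ |T| := hlow b
  have hTne : T ≠ 0 := by
    intro h
    rw [h] at hTlow
    simp at hTlow
    have := huabs (b + 1)
    linarith
  have hxi : (ξ:ℝ) = ((A:ℤ):ℝ) / ((d b : ℤ):ℝ) + T := by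
    rw [hξ, ← hdecomp, hpart b]
  have hne : (ξ:ℝ) ≠ ((A:ℤ):ℝ) / ((d b : ℤ):ℝ) := by
    intro h
    apply hTne
    rw [h] at hxi
    linarith
  have happ := rat_approx_aux ξ A (d b) (hdz b) hne
  have hsub : (ξ:ℝ) - ((A:ℤ):ℝ) / ((d b : ℤ):ℝ) = T := by rw [hxi]; ring
  rw [hsub] at happ
  -- upper bound on |T|
  have hup : |T| ≤ |u (b + 1)| * (7 / 6) := htail (b + 1)
  have humu : |u (b + 1)| = (|((d b : ℤ):ℝ)| * |f (b + 1)|)⁻¹ := by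
    have : u (b + 1) = ((∏ k ∈ range (b + 1), f k) * f (b + 1))⁻¹ := by
      simp only [hudef, Finset.prod_range_succ]
    rw [this, ← hdc b, abs_inv, abs_mul]
  -- numeric contradiction
  have hX : (0:ℝ) < |((d b : ℤ):ℝ)| :=
    abs_pos.mpr (Int.cast_ne_zero.mpr (hdz b))
  have hFpos : (0:ℝ) < |f (b + 1)| := lt_of_lt_of_le (by norm_num) (hf7 b)
  have hbR : (1:ℝ) ≤ (b:ℝ) := by exact_mod_cast hb1
  have hnat : 2 * b + 4 ≤ 2 ^ (2 * b + 3) := by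
    have := Nat.lt_two_pow_self (n := 2 * b + 3)
    omega
  have hnatR : 2 * (b:ℝ) + 4 ≤ 2 ^ (2 * (b + 1) + 1) := by
    have he : 2 * (b + 1) + 1 = 2 * b + 3 := by omega
    rw [he]
    exact_mod_cast hnat
  have hF : 2 * (b:ℝ) + 3 ≤ |f (b + 1)| := by
    have := hfb (b + 1)
    linarith
  -- chain the inequalities
  have hchain : 1 / ((b:ℝ) * |((d b : ℤ):ℝ)|)
      ≤ (7 / 6) / (|((d b : ℤ):ℝ)| * |f (b + 1)|) := by
    calc 1 / ((b:ℝ) * |((d b : ℤ):ℝ)|) ≤ |T| := happ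
      _ ≤ |u (b + 1)| * (7 / 6) := hup
      _ = (7 / 6) / (|((d b : ℤ):ℝ)| * |f (b + 1)|) := by rw [humu]; ring
  rw [div_le_div_iff₀ (by positivity) (by positivity)] at hchain
  nlinarith [mul_pos hX hFpos, hX, hF, hbR]
end

section
/- For every integer q with |q| ≥ 2, the value χ(1/q) = 1 + Σ_{n=1}^∞ (1/q)^{n²} / ∏_{k=1}^{n} (1 − (1/q)^k + (1/q)^{2k}) is irrational; i.e., Ramanujan's third-order mock theta function χ takes an irrational value at each point ±1/2, ±1/3, ±1/4, … . -/
open Finset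

namespace RamChi

def dZ (q : ℤ) (k : ℕ) : ℤ := q ^ (2 * (k + 1)) - q ^ (k + 1) + 1

def DZ (q : ℤ) (n : ℕ) : ℤ := ∏ k ∈ range n, dZ q k

noncomputable def t (q : ℤ) (n : ℕ) : ℝ := (q : ℝ) ^ (n + 1) / (DZ q (n + 1) : ℝ)

def A (q : ℤ) (n : ℕ) : ℤ :=
  ∑ m ∈ range n, q ^ (m + 1) * ∏ k ∈ Ico (m + 1) n, dZ q k

lemma abs_pow_ge {q : ℤ} (hq : (2 : ℝ) ≤ |(q : ℝ)|) (k : ℕ) :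
    (2 : ℝ) ^ (k + 1) ≤ |(q : ℝ) ^ (k + 1)| := by
  rw [abs_pow]
  exact pow_le_pow_left₀ (by norm_num) hq _

lemma two_le_two_pow (k : ℕ) : (2:ℝ) ≤ (2:ℝ)^(k+1) := by
  calc (2:ℝ) = 2^1 := by norm_num
  _ ≤ 2^(k+1) := by apply pow_le_pow_right₀ <;> norm_num

lemma dZ_cast (q : ℤ) (k : ℕ) :
    ((dZ q k : ℤ) : ℝ) = ((q:ℝ)^(k+1))^2 - (q:ℝ)^(k+1) + 1 := by
  have : (2 * (k+1)) = (k+1) * 2 := by ring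
  rw [dZ, this]
  push_cast [pow_mul]
  ring

lemma dZ_lb {q : ℤ} (hq : (2 : ℝ) ≤ |(q : ℝ)|) (k : ℕ) :
    ((q:ℝ)^(k+1))^2 / 2 ≤ (dZ q k : ℝ) := by
  rw [dZ_cast]
  have h := abs_pow_ge hq k
  have h2 := two_le_two_pow k
  rcases abs_cases ((q:ℝ)^(k+1)) with ⟨he, _⟩ | ⟨he, _⟩ <;> nlinarith

lemma dZ_ub {q : ℤ} (hq : (2 : ℝ) ≤ |(q : ℝ)|) (k : ℕ) :
    (dZ q k : ℝ) ≤ 2 * ((q:ℝ)^(k+1))^2 := by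
  rw [dZ_cast]
  have h := abs_pow_ge hq k
  have h2 := two_le_two_pow k
  rcases abs_cases ((q:ℝ)^(k+1)) with ⟨he, _⟩ | ⟨he, _⟩ <;> nlinarith

lemma dZ_one_le {q : ℤ} (hq : (2 : ℝ) ≤ |(q : ℝ)|) (k : ℕ) :
    (1:ℝ) ≤ (dZ q k : ℝ) := by
  rw [dZ_cast]
  have h := abs_pow_ge hq k
  have h2 := two_le_two_pow k
  rcases abs_cases ((q:ℝ)^(k+1)) with ⟨he, _⟩ | ⟨he, _⟩ <;> nlinarith

lemma dZ_pos {q : ℤ} (hq : (2 : ℝ) ≤ |(q : ℝ)|) (k : ℕ) :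
    (0:ℝ) < (dZ q k : ℝ) := lt_of_lt_of_le one_pos (dZ_one_le hq k)

lemma DZ_cast (q : ℤ) (n : ℕ) :
    ((DZ q n : ℤ) : ℝ) = ∏ k ∈ range n, (dZ q k : ℝ) := by simp [DZ]

lemma DZ_one_le {q : ℤ} (hq : (2 : ℝ) ≤ |(q : ℝ)|) (n : ℕ) :
    (1:ℝ) ≤ (DZ q n : ℝ) := by
  rw [DZ_cast]
  calc (1:ℝ) = ∏ _k ∈ range n, 1 := by simp
  _ ≤ ∏ k ∈ range n, (dZ q k : ℝ) :=
    Finset.prod_le_prod (by intros; norm_num) (fun k _ => dZ_one_le hq k)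

lemma DZ_pos {q : ℤ} (hq : (2 : ℝ) ≤ |(q : ℝ)|) (n : ℕ) :
    (0:ℝ) < (DZ q n : ℝ) := lt_of_lt_of_le one_pos (DZ_one_le hq n)

lemma DZ_succ (q : ℤ) (n : ℕ) : DZ q (n+1) = DZ q n * dZ q n := Finset.prod_range_succ _ _


lemma q_ne_zero {q : ℤ} (hq : (2 : ℝ) ≤ |(q : ℝ)|) : (q:ℝ) ≠ 0 := by
  intro h; rw [h] at hq; simp at hq; linarith

lemma t_succ (q : ℤ) (n : ℕ) :
    t q (n+1) = t q n * ((q:ℝ) / (dZ q (n+1) : ℝ)) := by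
  rw [t, t, show n+1+1 = (n+1)+1 from rfl, DZ_succ]
  push_cast
  rw [pow_succ]
  ring

lemma dZ_ge_four_abs {q : ℤ} (hq : (2 : ℝ) ≤ |(q : ℝ)|) (n : ℕ) :
    4 * |(q:ℝ)| ≤ (dZ q (n+1) : ℝ) := by
  have hd := dZ_lb hq (n+1)
  have h1 : ((q:ℝ)^(n+2))^2 = |(q:ℝ)|^(2*n+4) := by
    rw [← sq_abs, abs_pow, ← pow_mul]; ring_nf
  have h2 : |(q:ℝ)|^(2*n+4) = |(q:ℝ)| * |(q:ℝ)|^(2*n+3) := by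
    rw [← pow_succ']
  have h3 : (2:ℝ)^(2*n+3) ≤ |(q:ℝ)|^(2*n+3) := pow_le_pow_left₀ (by norm_num) hq _
  have h4 : (8:ℝ) ≤ (2:ℝ)^(2*n+3) := by
    calc (8:ℝ) = 2^3 := by norm_num
    _ ≤ 2^(2*n+3) := by apply pow_le_pow_right₀ <;> [norm_num; omega]
  have hq0 : (0:ℝ) ≤ |(q:ℝ)| := abs_nonneg _
  nlinarith

lemma ratio {q : ℤ} (hq : (2 : ℝ) ≤ |(q : ℝ)|) (n : ℕ) :
    |t q (n+1)| ≤ (1/4) * |t q n| := by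
  rw [t_succ, abs_mul, abs_div]
  have hd1 := dZ_ge_four_abs hq n
  have hdpos := dZ_pos hq (n+1)
  have habs : |(dZ q (n+1) : ℝ)| = (dZ q (n+1) : ℝ) := abs_of_pos hdpos
  rw [habs, mul_comm]
  apply mul_le_mul_of_nonneg_right _ (abs_nonneg _)
  rw [div_le_iff₀ hdpos]
  nlinarith [abs_nonneg (q:ℝ)]

lemma decay {q : ℤ} (hq : (2 : ℝ) ≤ |(q : ℝ)|) (N m : ℕ) :
    |t q (m + N)| ≤ |t q N| * (1/4)^m := by
  induction m with
  | zero => simp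
  | succ m ih =>
    have : |t q (m + N + 1)| ≤ (1/4) * |t q (m + N)| := ratio hq _
    calc |t q (m + 1 + N)| = |t q (m + N + 1)| := by ring_nf
    _ ≤ (1/4) * |t q (m + N)| := this
    _ ≤ (1/4) * (|t q N| * (1/4)^m) := by linarith
    _ = |t q N| * (1/4)^(m+1) := by ring

lemma summable_t {q : ℤ} (hq : (2 : ℝ) ≤ |(q : ℝ)|) : Summable (t q) := by
  apply summable_of_ratio_norm_eventually_le (r := 1/4) (by norm_num)
  filter_upwards with n
  simpa [Real.norm_eq_abs] using ratio hq n

lemma summable_abs_shift {q : ℤ} (hq : (2 : ℝ) ≤ |(q : ℝ)|) (N : ℕ) :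
    Summable (fun m => |t q (m + N)|) := by
  exact ((summable_nat_add_iff N).2 (summable_t hq)).abs

noncomputable def T (q : ℤ) (N : ℕ) : ℝ := ∑' m : ℕ, t q (m + N)

lemma T_upper {q : ℤ} (hq : (2 : ℝ) ≤ |(q : ℝ)|) (N : ℕ) :
    |T q N| ≤ (4/3) * |t q N| := by
  have hsum := summable_abs_shift hq N
  have hgeo : Summable (fun m : ℕ => |t q N| * (1/4:ℝ)^m) :=
    (summable_geometric_of_lt_one (by norm_num) (by norm_num)).mul_left _
  calc |T q N| ≤ ∑' m : ℕ, |t q (m + N)| := by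
        simpa [Real.norm_eq_abs, T] using
          norm_tsum_le_tsum_norm (f := fun m => t q (m + N)) (by simpa [Real.norm_eq_abs] using hsum)
  _ ≤ ∑' m : ℕ, |t q N| * (1/4:ℝ)^m := Summable.tsum_le_tsum (fun m => decay hq N m) hsum hgeo
  _ = |t q N| * (4/3) := by
      rw [tsum_mul_left, tsum_geometric_of_lt_one (by norm_num) (by norm_num)]
      norm_num
  _ = (4/3) * |t q N| := by ring

lemma T_split {q : ℤ} (hq : (2 : ℝ) ≤ |(q : ℝ)|) (N : ℕ) :
    T q N = t q N + T q (N+1) := by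
  have hs : Summable (fun m => t q (m + N)) := (summable_nat_add_iff N).2 (summable_t hq)
  rw [T, Summable.tsum_eq_zero_add hs]
  congr 1
  · simp
  · rw [T]
    apply tsum_congr
    intro m
    congr 1
    omega

lemma T_lower {q : ℤ} (hq : (2 : ℝ) ≤ |(q : ℝ)|) (N : ℕ) :
    (2/3) * |t q N| ≤ |T q N| := by
  have h1 := T_split hq N
  have h2 := T_upper hq (N+1)
  have h3 := ratio hq N
  have h4 : |t q N| - |T q (N+1)| ≤ |T q N| := by
    rw [h1]
    have := abs_add_le (t q N + T q (N+1)) (-(T q (N+1)))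
    simp at this
    calc |t q N| - |T q (N+1)| ≤ |t q N + T q (N+1)| + |T q (N+1)| - |T q (N+1)| := by
          linarith [this]
    _ = |t q N + T q (N+1)| := by ring
  linarith

lemma t_pos_abs {q : ℤ} (hq : (2 : ℝ) ≤ |(q : ℝ)|) (N : ℕ) : 0 < |t q N| := by
  rw [t, abs_div]
  apply div_pos
  · rw [abs_pow]
    have : (0:ℝ) < |(q:ℝ)| := by linarith
    positivity
  · exact lt_of_lt_of_le (DZ_pos hq (N+1)) (le_abs_self _)

lemma DZ_mul_partial {q : ℤ} (hq : (2 : ℝ) ≤ |(q : ℝ)|) (n : ℕ) :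
    (DZ q n : ℝ) * (∑ m ∈ range n, t q m) = (A q n : ℝ) := by
  rw [Finset.mul_sum, A]
  push_cast
  apply Finset.sum_congr rfl
  intro m hm
  have hmn : m + 1 ≤ n := Finset.mem_range.1 hm
  have hsplit : (DZ q n : ℝ) = (DZ q (m+1) : ℝ) * ∏ k ∈ Ico (m+1) n, (dZ q k : ℝ) := by
    rw [DZ_cast, DZ_cast, ← Finset.prod_range_mul_prod_Ico _ hmn]
  have hne : (DZ q (m+1) : ℝ) ≠ 0 := ne_of_gt (DZ_pos hq (m+1))
  rw [hsplit, t]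
  field_simp

lemma sum_two_mul (n : ℕ) : ∑ k ∈ range n, 2*(k+1) = n*(n+1) := by
  induction n with
  | zero => simp
  | succ n ih => rw [Finset.sum_range_succ, ih]; ring

lemma factor_eq {q : ℤ} (hq : (2 : ℝ) ≤ |(q : ℝ)|) (k : ℕ) :
    1 - (1/(q:ℝ))^(k+1) + (1/(q:ℝ))^(2*(k+1)) = (dZ q k : ℝ) / (q:ℝ)^(2*(k+1)) := by
  have hq0 := q_ne_zero hq
  rw [dZ_cast]
  have h2 : (q:ℝ)^(2*(k+1)) = ((q:ℝ)^(k+1))^2 := by rw [← pow_mul]; ring_nf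
  rw [h2, show (1/(q:ℝ))^(2*(k+1)) = 1/((q:ℝ)^(k+1))^2 by rw [one_div_pow, h2], one_div_pow]
  have hy : (q:ℝ)^(k+1) ≠ 0 := pow_ne_zero _ hq0
  generalize (q:ℝ)^(k+1) = y at hy ⊢
  field_simp

lemma summand_eq {q : ℤ} (hq : (2 : ℝ) ≤ |(q : ℝ)|) (n : ℕ) :
    (1 / (q : ℝ)) ^ ((n + 1) ^ 2) /
        ∏ k ∈ Finset.range (n + 1),
          (1 - (1 / (q : ℝ)) ^ (k + 1) + (1 / (q : ℝ)) ^ (2 * (k + 1))) = t q n := by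
  have hq0 := q_ne_zero hq
  have hprod : ∏ k ∈ Finset.range (n + 1),
      (1 - (1 / (q : ℝ)) ^ (k + 1) + (1 / (q : ℝ)) ^ (2 * (k + 1)))
      = (DZ q (n+1) : ℝ) / (q:ℝ)^((n+1)*(n+2)) := by
    rw [Finset.prod_congr rfl fun k _ => factor_eq hq k, Finset.prod_div_distrib,
      Finset.prod_pow_eq_pow_sum, sum_two_mul, ← DZ_cast]
  rw [hprod, t]
  have hDne : (DZ q (n+1) : ℝ) ≠ 0 := ne_of_gt (DZ_pos hq (n+1))
  have hpow : (q:ℝ)^((n+1)*(n+2)) = (q:ℝ)^((n+1)^2) * (q:ℝ)^(n+1) := by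
    rw [← pow_add]; ring_nf
  rw [hpow]
  rw [div_div_eq_mul_div, one_div, inv_pow]
  rw [← mul_assoc, inv_mul_cancel₀ (pow_ne_zero _ hq0), one_mul]

lemma DZ_mul_t_abs {q : ℤ} (hq : (2 : ℝ) ≤ |(q : ℝ)|) (n : ℕ) :
    (DZ q n : ℝ) * |t q n| ≤ 2 / 2^(n+1) := by
  have hDpos := DZ_pos hq n
  have hdpos := dZ_pos hq n
  have habs : |t q n| = |(q:ℝ)|^(n+1) / ((DZ q n : ℝ) * (dZ q n : ℝ)) := by
    rw [t, abs_div, abs_pow, DZ_succ]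
    push_cast
    rw [abs_of_pos (mul_pos hDpos hdpos)]
  rw [habs]
  have hDne : (DZ q n : ℝ) ≠ 0 := ne_of_gt hDpos
  have heq : (DZ q n : ℝ) * (|(q:ℝ)|^(n+1) / ((DZ q n : ℝ) * (dZ q n : ℝ)))
      = |(q:ℝ)|^(n+1) / (dZ q n : ℝ) := by
    field_simp
  rw [heq]
  set a : ℝ := |(q:ℝ)|^(n+1) with ha
  have h1 : (2:ℝ)^(n+1) ≤ a := by
    rw [ha]; exact pow_le_pow_left₀ (by norm_num) hq _
  have h2 : a^2 / 2 ≤ (dZ q n : ℝ) := by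
    have := dZ_lb hq n
    have : ((q:ℝ)^(n+1))^2 = a^2 := by rw [ha, ← abs_pow, sq_abs]
    linarith [dZ_lb hq n, this.symm.le, this.le]
  rw [div_le_div_iff₀ hdpos (by positivity)]
  have hapos : 0 < a := lt_of_lt_of_le (by positivity) h1
  nlinarith

end RamChi

open RamChi in
/-- Ramanujan's third-order mock theta function
`χ(x) = 1 + Σ_{n=1}^∞ x^{n²} / ∏_{k=1}^{n} (1 - x^k + x^{2k})`
takes an irrational value at `x = 1/q` for every integer `q` with `|q| ≥ 2`. -/
theorem ramanujan_chi_irrational (q : ℤ) (hq : 2 ≤ |q|) :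
    Irrational (1 + ∑' n : ℕ,
      (1 / (q : ℝ)) ^ ((n + 1) ^ 2) /
        ∏ k ∈ Finset.range (n + 1),
          (1 - (1 / (q : ℝ)) ^ (k + 1) + (1 / (q : ℝ)) ^ (2 * (k + 1)))) := by
  have hq' : (2 : ℝ) ≤ |(q : ℝ)| := by
    have : ((2:ℤ):ℝ) ≤ ((|q|:ℤ):ℝ) := by exact_mod_cast hq
    simpa using this
  rw [show (∑' n : ℕ, (1 / (q : ℝ)) ^ ((n + 1) ^ 2) /
        ∏ k ∈ Finset.range (n + 1),
          (1 - (1 / (q : ℝ)) ^ (k + 1) + (1 / (q : ℝ)) ^ (2 * (k + 1)))) = ∑' n, t q n from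
    tsum_congr fun n => summand_eq hq' n]
  rintro ⟨x, hx⟩
  set S : ℝ := ∑' n, t q n with hSdef
  set p : ℚ := x - 1 with hp
  have hS : S = (p : ℝ) := by push_cast [hp]; linarith [hx.symm]
  set b : ℤ := (p.den : ℤ) with hb
  have hbpos : (0:ℝ) < (b:ℝ) := by
    rw [hb]; exact_mod_cast p.pos
  obtain ⟨n, hn⟩ := pow_unbounded_of_one_lt (3 * (b:ℝ)) one_lt_two
  -- hn : 3 * b < 2 ^ n
  have hsplit : S = (∑ m ∈ range n, t q m) + T q n := by
    rw [hSdef, T]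
    exact (Summable.sum_add_tsum_nat_add n (summable_t hq')).symm
  have hbS : (b:ℝ) * S = (p.num : ℝ) := by
    rw [hS, Rat.cast_def, hb]
    have hdne : ((p.den:ℤ):ℝ) ≠ 0 := by positivity
    push_cast
    field_simp
  have hDP := DZ_mul_partial hq' n
  set e : ℤ := p.num * DZ q n - b * A q n with he_def
  have he : (e:ℝ) = (b:ℝ) * (DZ q n:ℝ) * T q n := by
    push_cast [he_def]
    linear_combination (-(DZ q n : ℝ)) * hbS + (b:ℝ) * hDP + (b:ℝ)*(DZ q n:ℝ) * hsplit
  have hDpos := DZ_pos hq' n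
  have htpos := t_pos_abs hq' n
  have habs : |(e:ℝ)| = (b:ℝ) * (DZ q n:ℝ) * |T q n| := by
    rw [he, abs_mul, abs_mul, abs_of_pos hbpos, abs_of_pos hDpos]
  -- upper bound
  have hup : |(e:ℝ)| ≤ (4/3) * (b:ℝ) * (2 / 2^(n+1)) := by
    rw [habs]
    have h1 := T_upper hq' n
    have h2 := DZ_mul_t_abs hq' n
    calc (b:ℝ) * (DZ q n:ℝ) * |T q n| ≤ (b:ℝ) * (DZ q n:ℝ) * ((4/3) * |t q n|) := by
          apply mul_le_mul_of_nonneg_left h1 (by positivity)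
    _ = (4/3) * (b:ℝ) * ((DZ q n:ℝ) * |t q n|) := by ring
    _ ≤ (4/3) * (b:ℝ) * (2 / 2^(n+1)) := by
          apply mul_le_mul_of_nonneg_left h2 (by positivity)
  have hpow2 : (0:ℝ) < 2^n := by positivity
  have hlt1 : |(e:ℝ)| < 1 := by
    have heq2 : (4/3) * (b:ℝ) * (2 / 2^(n+1)) = (4*(b:ℝ))/(3*2^n) := by
      rw [pow_succ]; field_simp
    rw [heq2] at hup
    have hfin : (4*(b:ℝ))/(3*2^n) < 1 := by
      rw [div_lt_one (by positivity)]
      nlinarith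
    linarith
  -- lower bound : e ≠ 0
  have hlow : 0 < |(e:ℝ)| := by
    rw [habs]
    have h1 := T_lower hq' n
    have : 0 < |T q n| := lt_of_lt_of_le (by positivity) h1
    positivity
  have he0 : e ≠ 0 := by
    intro h
    rw [h] at hlow
    simp at hlow
  have hone : (1:ℝ) ≤ |(e:ℝ)| := by
    have := Int.one_le_abs he0
    calc (1:ℝ) = ((1:ℤ):ℝ) := by norm_num
    _ ≤ ((|e|:ℤ):ℝ) := by exact_mod_cast this
    _ = |(e:ℝ)| := by push_cast; simp
  linarith
end

section
/- For every integer q with |q| ≥ 2, the value ω(1/q) = Σ_{n=0}^∞ (1/q)^{2n(n+1)} / ∏_{k=0}^{n} (1 − (1/q)^{2k+1})² is irrational; i.e., Watson's third-order mock theta function ω takes an irrational value at each point ±1/2, ±1/3, ±1/4, … . -/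
open Finset

namespace WatsonAux

noncomputable def t (q : ℤ) (n : ℕ) : ℝ :=
  (1 / (q : ℝ)) ^ (2 * n * (n + 1)) /
    ∏ k ∈ range (n + 1), (1 - (1 / (q : ℝ)) ^ (2 * k + 1)) ^ 2

noncomputable def D (q : ℤ) (n : ℕ) : ℝ :=
  ∏ k ∈ range (n + 1), ((q : ℝ) ^ (2 * k + 1) - 1) ^ 2

def Dz (q : ℤ) (n : ℕ) : ℤ := ∏ k ∈ range (n + 1), (q ^ (2 * k + 1) - 1) ^ 2

variable {q : ℤ}

lemma Dz_cast (n : ℕ) : ((Dz q n : ℤ) : ℝ) = D q n := by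
  unfold Dz D
  push_cast
  ring

section
variable (hq : 2 ≤ |q|)
include hq

lemma ha : 2 ≤ |(q : ℝ)| := by
  rw [← Int.cast_abs]
  exact_mod_cast hq

lemma hq0 : (q : ℝ) ≠ 0 := by
  have h := ha hq
  intro h0
  rw [h0] at h
  simp at h
  linarith

lemma two_le_pow (m : ℕ) (hm : 1 ≤ m) : 2 ≤ |(q : ℝ)| ^ m := by
  have h := ha hq
  calc (2:ℝ) = 2 ^ 1 := by norm_num
  _ ≤ 2 ^ m := by apply pow_le_pow_right₀ (by norm_num) hm
  _ ≤ |(q:ℝ)| ^ m := pow_le_pow_left₀ (by norm_num) h m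

lemma two_pow_le (m : ℕ) : (2:ℝ) ^ m ≤ |(q : ℝ)| ^ m :=
  pow_le_pow_left₀ (by norm_num) (ha hq) m

/-- key square bound: `(|q|^(2k+1))² / 4 ≤ (q^(2k+1) - 1)²` -/
lemma key_sq (k : ℕ) :
    |(q:ℝ)| ^ (2*k+1) * |(q:ℝ)| ^ (2*k+1) / 4 ≤ ((q:ℝ) ^ (2*k+1) - 1) ^ 2 := by
  set m := 2*k+1 with hm
  have h2 : (2:ℝ) ≤ |(q:ℝ)| ^ m := two_le_pow hq m (by omega)
  have habs : |(q:ℝ)| ^ m - 1 ≤ |(q:ℝ) ^ m - 1| := by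
    have h := abs_sub_abs_le_abs_sub ((q:ℝ) ^ m) 1
    rw [abs_one, abs_pow] at h
    exact h
  have hnn : (0:ℝ) ≤ |(q:ℝ)| ^ m - 1 := by linarith
  have hsq : (|(q:ℝ)| ^ m - 1)^2 ≤ ((q:ℝ)^m - 1)^2 := by
    rw [← sq_abs ((q:ℝ)^m - 1)]
    exact pow_le_pow_left₀ hnn habs 2
  nlinarith [hsq, h2]

lemma factor_pos (k : ℕ) : 0 < ((q:ℝ) ^ (2*k+1) - 1) ^ 2 := by
  have h := key_sq hq k
  have h2 : (2:ℝ) ≤ |(q:ℝ)| ^ (2*k+1) := two_le_pow hq (2*k+1) (by omega)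
  nlinarith

lemma D_pos (n : ℕ) : 0 < D q n := by
  unfold D
  exact prod_pos fun k _ => factor_pos hq k

omit hq in
lemma D_succ (n : ℕ) : D q (n+1) = D q n * ((q:ℝ)^(2*(n+1)+1) - 1)^2 := by
  unfold D
  rw [prod_range_succ]

lemma prod_eq (n : ℕ) :
    ∏ k ∈ range (n+1), (1 - (1/(q:ℝ)) ^ (2*k+1)) ^ 2
      = D q n / (q:ℝ) ^ (2*(n+1)^2) := by
  have h0 := hq0 hq
  induction n with
  | zero =>
      unfold D
      norm_num
      rw [eq_div_iff (pow_ne_zero _ h0)]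
      have h1 : (1 - ((q:ℝ))⁻¹) * (q:ℝ) = (q:ℝ) - 1 := by
        rw [sub_mul, one_mul, inv_mul_cancel₀ h0]
      calc (1 - ((q:ℝ))⁻¹)^2 * (q:ℝ)^2 = ((1 - ((q:ℝ))⁻¹) * (q:ℝ))^2 := by ring
      _ = ((q:ℝ) - 1)^2 := by rw [h1]
  | succ n ih =>
      have hfac : (1 - (1/(q:ℝ)) ^ (2*(n+1)+1)) ^ 2
          = ((q:ℝ)^(2*(n+1)+1) - 1)^2 / (q:ℝ)^(2*(2*(n+1)+1)) := by
        rw [eq_div_iff (pow_ne_zero _ h0)]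
        rw [show 2*(2*(n+1)+1) = (2*(n+1)+1)*2 from by ring, pow_mul]
        have h1 : (1 - (1/(q:ℝ))^(2*(n+1)+1)) * (q:ℝ)^(2*(n+1)+1)
            = (q:ℝ)^(2*(n+1)+1) - 1 := by
          rw [sub_mul, one_mul, one_div, inv_pow, inv_mul_cancel₀ (pow_ne_zero _ h0)]
        calc (1 - (1/(q:ℝ))^(2*(n+1)+1))^2 * ((q:ℝ)^(2*(n+1)+1))^2
            = ((1 - (1/(q:ℝ))^(2*(n+1)+1)) * (q:ℝ)^(2*(n+1)+1))^2 := by ring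
        _ = ((q:ℝ)^(2*(n+1)+1) - 1)^2 := by rw [h1]
      rw [prod_range_succ, ih, hfac, D_succ]
      rw [show 2*(n+1+1)^2 = 2*(n+1)^2 + (2*(2*(n+1)+1)) from by ring]
      rw [pow_add ((q:ℝ)) (2*(n+1)^2) (2*(2*(n+1)+1))]
      rw [div_mul_div_comm]

lemma t_eq (n : ℕ) : t q n = (q:ℝ)^(2*n+2) / D q n := by
  have h0 := hq0 hq
  have hD := (D_pos hq n).ne'
  unfold t
  rw [prod_eq hq]
  rw [div_div_eq_mul_div]
  congr 1
  have hexp : 2*(n+1)^2 = 2*n*(n+1) + (2*n+2) := by ring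
  rw [hexp, pow_add]
  rw [one_div, inv_pow]
  rw [inv_mul_cancel_left₀ (pow_ne_zero _ h0)]

lemma t_pos (n : ℕ) : 0 < t q n := by
  rw [t_eq hq]
  apply div_pos _ (D_pos hq n)
  have h0 := hq0 hq
  have h2 : (q:ℝ)^(2*n+2) = ((q:ℝ)^(n+1))^2 := by
    rw [← pow_mul]; ring_nf
  rw [h2]
  exact lt_of_le_of_ne (sq_nonneg _) (Ne.symm (pow_ne_zero 2 (pow_ne_zero (n+1) h0)))


lemma t_ratio (n : ℕ) : t q (n+1) ≤ (1/4) * t q n := by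
  have hDn := D_pos hq n
  have hf := factor_pos hq (n+1)
  rw [t_eq hq, t_eq hq, D_succ]
  have hrw : (1/4:ℝ) * ((q:ℝ)^(2*n+2)/D q n) = (q:ℝ)^(2*n+2)/(4*D q n) := by ring
  rw [hrw, div_le_div_iff₀ (by positivity) (by positivity)]
  have hsplit : (q:ℝ)^(2*(n+1)+2) = (q:ℝ)^(2*n+2) * (q:ℝ)^2 := by
    rw [← pow_add]; congr 1 <;> ring
  have heven : (0:ℝ) ≤ (q:ℝ)^(2*n+2) := by
    have : (q:ℝ)^(2*n+2) = ((q:ℝ)^(n+1))^2 := by rw [← pow_mul]; ring_nf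
    rw [this]; exact sq_nonneg _
  have hkey := key_sq hq (n+1)
  have hmul : |(q:ℝ)|^(2*(n+1)+1) * |(q:ℝ)|^(2*(n+1)+1) = |(q:ℝ)|^2 * |(q:ℝ)|^(4*n+4) := by
    rw [← pow_add, ← pow_add]; congr 1 <;> ring
  have hh : (16:ℝ) ≤ |(q:ℝ)|^(4*n+4) := by
    calc (16:ℝ) = 2^4 := by norm_num
    _ ≤ 2^(4*n+4) := by apply pow_le_pow_right₀ (by norm_num) (by omega)
    _ ≤ |(q:ℝ)|^(4*n+4) := two_pow_le hq _
  have ha2q : |(q:ℝ)|^2 = (q:ℝ)^2 := sq_abs _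
  have h4q : 4*(q:ℝ)^2 ≤ ((q:ℝ)^(2*(n+1)+1) - 1)^2 := by
    rw [hmul, ha2q] at hkey
    nlinarith [sq_nonneg ((q:ℝ))]
  rw [hsplit]
  nlinarith [mul_le_mul_of_nonneg_left h4q (mul_nonneg heven hDn.le)]

lemma base_bound (N : ℕ) : D q N * t q (N+1) ≤ (1/4:ℝ)^N := by
  have hDN := D_pos hq N
  have hf := factor_pos hq (N+1)
  rw [t_eq hq, D_succ]
  have hrw : D q N * ((q:ℝ)^(2*(N+1)+2) / (D q N * ((q:ℝ)^(2*(N+1)+1)-1)^2))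
      = (q:ℝ)^(2*(N+1)+2)/((q:ℝ)^(2*(N+1)+1)-1)^2 := by
    field_simp
  rw [hrw, div_le_iff₀ hf]
  set a := |(q:ℝ)| with haa
  have hqa : (q:ℝ)^(2*(N+1)+2) = a^(2*N+4) := by
    rw [haa]
    rw [show 2*(N+1)+2 = 2*N+4 from by ring]
    exact (Even.pow_abs ⟨N+2, by ring⟩ _).symm
  have hkey := key_sq hq (N+1)
  have hmul : a^(2*(N+1)+1) * a^(2*(N+1)+1) = a^(2*N+4) * a^(2*N+2) := by
    rw [← pow_add, ← pow_add]; congr 1 <;> ring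
  rw [hmul] at hkey
  have h4 : (4:ℝ)^(N+1) ≤ a^(2*N+2) := by
    have h1 : ((4:ℝ))^(N+1) ≤ (a^2)^(N+1) := by
      apply pow_le_pow_left₀ (by norm_num)
      nlinarith [ha hq]
    calc ((4:ℝ))^(N+1) ≤ (a^2)^(N+1) := h1
    _ = a^(2*N+2) := by rw [← pow_mul]; ring_nf
  have hXnn : (0:ℝ) ≤ a^(2*N+4) := pow_nonneg (abs_nonneg _) _
  have hs : a^(2*N+4) * (4:ℝ)^(N+1) ≤ 4 * ((q:ℝ)^(2*(N+1)+1) - 1)^2 := by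
    calc a^(2*N+4) * (4:ℝ)^(N+1) ≤ a^(2*N+4) * a^(2*N+2) :=
          mul_le_mul_of_nonneg_left h4 hXnn
    _ ≤ 4 * ((q:ℝ)^(2*(N+1)+1) - 1)^2 := by linarith
  have h44 : ((1/4:ℝ))^N * 4^(N+1) = 4 := by
    rw [one_div, inv_pow, pow_succ]
    field_simp
  rw [hqa]
  have h4pos : (0:ℝ) < (4:ℝ)^(N+1) := by positivity
  rw [← mul_le_mul_iff_of_pos_right h4pos]
  have hcomm : (1/4:ℝ)^N * ((q:ℝ)^(2*(N+1)+1) - 1)^2 * 4^(N+1)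
      = ((q:ℝ)^(2*(N+1)+1) - 1)^2 * ((1/4:ℝ)^N * 4^(N+1)) := by ring
  rw [hcomm, h44]
  linarith

lemma tail_bound (N n : ℕ) : D q N * t q (N+1+n) ≤ (1/4:ℝ)^(N+n) := by
  induction n with
  | zero => simpa using base_bound hq N
  | succ n ih =>
      have h := t_ratio hq (N+1+n)
      have hD := (D_pos hq N).le
      calc D q N * t q (N+1+(n+1)) = D q N * t q ((N+1+n)+1) := by
            rw [show N+1+(n+1) = (N+1+n)+1 from by omega]
      _ ≤ D q N * ((1/4) * t q (N+1+n)) := mul_le_mul_of_nonneg_left h hD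
      _ = (1/4) * (D q N * t q (N+1+n)) := by ring
      _ ≤ (1/4) * (1/4)^(N+n) := by linarith
      _ = (1/4)^(N+(n+1)) := by
            rw [show N+(n+1) = (N+n)+1 from by omega, pow_succ]; ring

lemma t_le_geom (n : ℕ) : t q n ≤ t q 0 * (1/4:ℝ)^n := by
  induction n with
  | zero => simp
  | succ n ih =>
      calc t q (n+1) ≤ (1/4) * t q n := t_ratio hq n
      _ ≤ (1/4) * (t q 0 * (1/4)^n) := by linarith
      _ = t q 0 * (1/4)^(n+1) := by rw [pow_succ]; ring

lemma summable_t : Summable (t q) := by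
  apply Summable.of_nonneg_of_le (fun n => (t_pos hq n).le) (t_le_geom hq)
  exact (summable_geometric_of_lt_one (by norm_num) (by norm_num)).mul_left _

end

def Sz (q : ℤ) (N : ℕ) : ℤ :=
  ∑ n ∈ range (N+1), q^(2*n+2) * ∏ i ∈ range (N - n), (q^(2*(n+1+i)+1) - 1)^2

variable (hq : 2 ≤ |q|)
include hq

lemma Sz_cast (N : ℕ) : ((Sz q N : ℤ):ℝ) = D q N * ∑ n ∈ range (N+1), t q n := by
  unfold Sz
  push_cast
  rw [mul_sum]
  apply sum_congr rfl
  intro n hn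
  have hnN : n ≤ N := by
    have := mem_range.mp hn; omega
  have hsplit : D q N = D q n * ∏ i ∈ range (N - n), ((q:ℝ)^(2*(n+1+i)+1) - 1)^2 := by
    unfold D
    rw [show N+1 = (n+1) + (N - n) from by omega]
    rw [prod_range_add]
  rw [t_eq hq, hsplit]
  have hDn := (D_pos hq n).ne'
  field_simp

end WatsonAux


open WatsonAux

/-- Watson's third-order mock theta function
`ω(x) = Σ_{n=0}^∞ x^{2n(n+1)} / ∏_{k=0}^{n} (1 - x^{2k+1})²`
takes an irrational value at `x = 1/q` for every integer `q` with `|q| ≥ 2`. -/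
theorem watson_omega_irrational (q : ℤ) (hq : 2 ≤ |q|) :
    Irrational (∑' n : ℕ,
      (1 / (q : ℝ)) ^ (2 * n * (n + 1)) /
        ∏ k ∈ Finset.range (n + 1), (1 - (1 / (q : ℝ)) ^ (2 * k + 1)) ^ 2) := by
  show Irrational (∑' n : ℕ, t q n)
  intro hS
  obtain ⟨r, hr⟩ := hS
  set N := r.den with hN
  have hd1 : 1 ≤ r.den := r.pos
  have hdR : (0:ℝ) < (r.den : ℝ) := by exact_mod_cast hd1
  have hsum : Summable (t q) := summable_t hq
  have htail : Summable (fun n => t q (n + (N+1))) :=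
    (summable_nat_add_iff (N+1)).mpr hsum
  set T := ∑' n : ℕ, t q (n + (N+1)) with hT
  have hsplit : (∑ i ∈ Finset.range (N+1), t q i) + T = ∑' n, t q n :=
    Summable.sum_add_tsum_nat_add (N+1) hsum
  have hTpos : 0 < T :=
    Summable.tsum_pos htail (fun i => (t_pos hq _).le) 0 (t_pos hq _)
  have hDN := D_pos hq N
  -- the integer
  set E : ℤ := r.num * Dz q N - (r.den : ℤ) * Sz q N with hE
  have hnum : (r.num : ℝ) = (r : ℝ) * (r.den : ℝ) := by
    rw [Rat.cast_def]
    field_simp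
  have hEcast : (E : ℝ) = (r.den : ℝ) * D q N * T := by
    rw [hE]
    push_cast
    rw [Dz_cast, Sz_cast hq, hnum, hr, ← hsplit]
    ring
  have hEpos : (0:ℝ) < (E:ℝ) := by
    rw [hEcast]
    positivity
  have hE1 : (1:ℝ) ≤ (E:ℝ) := by
    have : (0:ℤ) < E := by exact_mod_cast hEpos
    exact_mod_cast this
  -- upper bound
  have hDT : D q N * T = ∑' n : ℕ, D q N * t q (n + (N+1)) := by
    rw [tsum_mul_left]
  have hgeo : Summable (fun n : ℕ => ((1/4:ℝ))^N * (1/4)^n) :=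
    (summable_geometric_of_lt_one (by norm_num) (by norm_num)).mul_left _
  have hbound : D q N * T ≤ (1/4:ℝ)^N * (4/3) := by
    rw [hDT]
    have hle : ∀ n : ℕ, D q N * t q (n + (N+1)) ≤ ((1/4:ℝ))^N * (1/4)^n := by
      intro n
      calc D q N * t q (n+(N+1)) = D q N * t q (N+1+n) := by
            rw [show n+(N+1) = N+1+n from by omega]
      _ ≤ ((1/4:ℝ))^(N+n) := tail_bound hq N n
      _ = ((1/4:ℝ))^N * (1/4)^n := by rw [pow_add]
    calc ∑' n : ℕ, D q N * t q (n + (N+1)) ≤ ∑' n : ℕ, ((1/4:ℝ))^N * (1/4)^n :=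
          Summable.tsum_le_tsum hle (htail.mul_left _) hgeo
    _ = ((1/4:ℝ))^N * ∑' n : ℕ, ((1/4:ℝ))^n := tsum_mul_left
    _ = ((1/4:ℝ))^N * (1 - 1/4)⁻¹ := by
          rw [tsum_geometric_of_lt_one (by norm_num) (by norm_num)]
    _ = ((1/4:ℝ))^N * (4/3) := by norm_num
  have hupper : (E:ℝ) ≤ (r.den:ℝ) * ((1/4:ℝ)^N * (4/3)) := by
    rw [hEcast, mul_assoc]
    exact mul_le_mul_of_nonneg_left hbound hdR.le
  -- numeric: den * (1/4)^den * 4/3 < 1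
  have hfin : (r.den:ℝ) * ((1/4:ℝ)^N * (4/3)) < 1 := by
    have h2d : (N:ℝ) < 2^N := by exact_mod_cast Nat.lt_two_pow_self (n := N)
    have h2d2 : (2:ℝ) ≤ 2^N := by
      calc (2:ℝ) = 2^1 := by norm_num
      _ ≤ 2^N := pow_le_pow_right₀ (by norm_num) hd1
    have h4d : (4:ℝ)^N = 2^N * 2^N := by
      rw [← mul_pow]; norm_num
    have h4pos : (0:ℝ) < (4:ℝ)^N := by positivity
    have hquarter : ((1/4:ℝ))^N = 1/(4:ℝ)^N := by
      rw [div_pow, one_pow]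
    rw [hquarter]
    rw [show (r.den:ℝ) * (1/(4:ℝ)^N * (4/3)) = ((N:ℝ) * (4/3))/(4:ℝ)^N from by
      rw [hN]; ring]
    rw [div_lt_one h4pos]
    nlinarith [h2d, h2d2, h4d]
  linarith
end

section
/- For every integer q with |q| ≥ 2, the value ν(1/q) = Σ_{n=0}^∞ (1/q)^{n(n+1)} / ∏_{k=0}^{n} (1 + (1/q)^{2k+1}) is irrational; i.e., Watson's third-order mock theta function ν takes an irrational value at each point ±1/2, ±1/3, ±1/4, … . -/
open Finset

namespace WatsonNuAux

noncomputable def u (q : ℤ) (k : ℕ) : ℝ := (q : ℝ) / ((q : ℝ) ^ (2 * k + 1) + 1)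

noncomputable def t (q : ℤ) (n : ℕ) : ℝ := ∏ k ∈ range (n + 1), u q k

def d (q : ℤ) (n : ℕ) : ℤ := ∏ k ∈ range (n + 1), (q ^ (2 * k + 1) + 1)

variable {q : ℤ} (hq : 2 ≤ |q|)
include hq

lemma habsx : (2 : ℝ) ≤ |(q : ℝ)| := by
  rw [← Int.cast_abs]
  exact_mod_cast hq

lemma hx0 : (q : ℝ) ≠ 0 := by
  have := habsx hq
  intro h; rw [h] at this; simp at this; linarith

lemma pow_abs_ge (k : ℕ) : (2 : ℝ) ^ k ≤ |(q : ℝ)| ^ k :=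
  pow_le_pow_left₀ (by norm_num) (habsx hq) k

lemma two_le_pow_abs (k : ℕ) : (2 : ℝ) ≤ |(q : ℝ)| ^ (2 * k + 1) := by
  calc (2:ℝ) = 2 ^ 1 := by norm_num
  _ ≤ (2:ℝ) ^ (2*k+1) := by
      apply pow_le_pow_right₀ (by norm_num); omega
  _ ≤ |(q : ℝ)| ^ (2*k+1) := pow_abs_ge hq _

lemma u_pos (k : ℕ) : 0 < u q k := by
  rcases le_abs'.mp hq with h | h
  · -- q ≤ -2
    have hx : (q : ℝ) ≤ -2 := by
      have : ((q:ℝ)) ≤ ((-2:ℤ):ℝ) := by exact_mod_cast h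
      push_cast at this; linarith
    have h1 : (q : ℝ) ^ (2 * k + 1) ≤ -2 := by
      have hodd : (q:ℝ) ^ (2*k+1) < 0 :=
        Odd.pow_neg ⟨k, by ring⟩ (by linarith)
      have : |(q:ℝ) ^ (2*k+1)| = -((q:ℝ) ^ (2*k+1)) := abs_of_neg hodd
      have h2 := two_le_pow_abs hq k
      rw [← abs_pow] at h2
      linarith [this ▸ h2]
    have : (q : ℝ) ^ (2 * k + 1) + 1 < 0 := by linarith
    exact div_pos_iff.mpr (Or.inr ⟨by linarith, this⟩)
  · have hx : (2:ℝ) ≤ (q : ℝ) := by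
      have : (((2:ℤ)):ℝ) ≤ (q:ℝ) := by exact_mod_cast h
      push_cast at this; linarith
    have : (0:ℝ) < (q:ℝ) ^ (2*k+1) := by positivity
    exact div_pos (by linarith) (by linarith)

lemma den_abs_ge (k : ℕ) : |(q : ℝ)| ^ (2 * k + 1) / 2 ≤ |(q : ℝ) ^ (2 * k + 1) + 1| := by
  have h2 := two_le_pow_abs hq k
  have := abs_add_le ((q:ℝ) ^ (2*k+1) + 1) (-1)
  simp only [add_neg_cancel_right, abs_neg, abs_one] at this
  rw [abs_pow] at *
  linarith

lemma u_le (k : ℕ) : u q k ≤ 2 / |(q : ℝ)| ^ (2 * k) := by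
  have hpos := u_pos hq k
  have h2 := two_le_pow_abs hq k
  have hd := den_abs_ge hq k
  have hden : (0:ℝ) < |(q : ℝ) ^ (2 * k + 1) + 1| := by
    rw [abs_pos]; intro h0
    rw [u, h0, div_zero] at hpos; exact lt_irrefl _ hpos
  have habs : u q k = |(q:ℝ)| / |(q : ℝ) ^ (2 * k + 1) + 1| := by
    rw [← abs_of_pos hpos, u, abs_div]
  rw [habs]
  have hx : (0:ℝ) < |(q:ℝ)| := by linarith [habsx hq]
  rw [div_le_div_iff₀ hden (by positivity)]
  have : |(q:ℝ)| ^ (2*k) * (|(q:ℝ)| ^ (2*k+1) / 2) = |(q:ℝ)| ^ (2*k+1) / 2 * |(q:ℝ)| ^ (2*k) := by ring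
  calc |(q:ℝ)| * |(q:ℝ)| ^ (2*k) = |(q:ℝ)| ^ (2*k+1) := by rw [pow_succ]; ring
  _ = 2 * (|(q:ℝ)| ^ (2*k+1) / 2) := by ring
  _ ≤ 2 * |(q : ℝ) ^ (2 * k + 1) + 1| := by linarith

lemma u_le_two (k : ℕ) : u q k ≤ 2 := by
  calc u q k ≤ 2 / |(q : ℝ)| ^ (2 * k) := u_le hq k
  _ ≤ 2 / 1 := by
      apply div_le_div_of_nonneg_left (by norm_num) (by norm_num)
      calc (1:ℝ) = 2 ^ 0 := by norm_num
      _ ≤ 2 ^ (2*k) := by apply pow_le_pow_right₀ (by norm_num); omega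
      _ ≤ _ := pow_abs_ge hq _
  _ = 2 := by norm_num

lemma u_le_half {k : ℕ} (hk : 1 ≤ k) : u q k ≤ 1 / 2 := by
  calc u q k ≤ 2 / |(q : ℝ)| ^ (2 * k) := u_le hq k
  _ ≤ 2 / 4 := by
      apply div_le_div_of_nonneg_left (by norm_num) (by norm_num)
      calc (4:ℝ) = 2 ^ 2 := by norm_num
      _ ≤ 2 ^ (2*k) := by apply pow_le_pow_right₀ (by norm_num); omega
      _ ≤ _ := pow_abs_ge hq _
  _ = 1/2 := by norm_num


lemma den_ne (k : ℕ) : (q : ℝ) ^ (2 * k + 1) + 1 ≠ 0 := by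
  intro h0
  have := u_pos hq k
  rw [u, h0, div_zero] at this
  exact lt_irrefl _ this

omit hq in
lemma d_cast (n : ℕ) : ((d q n : ℤ) : ℝ) = ∏ k ∈ range (n + 1), ((q : ℝ) ^ (2 * k + 1) + 1) := by
  rw [d]
  push_cast
  rfl

lemma d_ne (n : ℕ) : ((d q n : ℤ) : ℝ) ≠ 0 := by
  rw [d_cast]
  exact Finset.prod_ne_zero_iff.mpr fun k _ => den_ne hq k

omit hq in
lemma t_eq (n : ℕ) : t q n = (q : ℝ) ^ (n + 1) / ((d q n : ℤ) : ℝ) := by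
  rw [t, d_cast,
    show ((q:ℝ)) ^ (n+1) = ∏ _k ∈ range (n+1), (q:ℝ) by
      rw [Finset.prod_const, Finset.card_range],
    ← Finset.prod_div_distrib]
  exact Finset.prod_congr rfl fun k _ => rfl

lemma t_pos (n : ℕ) : 0 < t q n :=
  Finset.prod_pos fun k _ => u_pos hq k

omit hq in
lemma sum_odd (m : ℕ) : ∑ k ∈ range m, (2 * k + 1) = m ^ 2 := by
  induction m with
  | zero => simp
  | succ n ih => rw [Finset.sum_range_succ, ih]; ring

lemma key (n : ℕ) :
    (1 / (q : ℝ)) ^ (n * (n + 1)) /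
        ∏ k ∈ Finset.range (n + 1), (1 + (1 / (q : ℝ)) ^ (2 * k + 1)) = t q n := by
  have hx := hx0 hq
  have hprod : ∏ k ∈ Finset.range (n + 1), (1 + (1 / (q : ℝ)) ^ (2 * k + 1))
      = (∏ k ∈ range (n + 1), ((q : ℝ) ^ (2 * k + 1) + 1)) / (q : ℝ) ^ ((n+1)^2) := by
    rw [← sum_odd (n+1), ← Finset.prod_pow_eq_pow_sum, ← Finset.prod_div_distrib]
    apply Finset.prod_congr rfl
    intro k _
    rw [div_pow, one_pow]
    field_simp
  rw [hprod, t_eq, d_cast]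
  rw [div_pow, one_pow]
  have hP : (∏ k ∈ range (n + 1), ((q : ℝ) ^ (2 * k + 1) + 1)) ≠ 0 :=
    Finset.prod_ne_zero_iff.mpr fun k _ => den_ne hq k
  field_simp
  rw [show (n+1)^2 = (n+1) + n*(n+1) by ring, pow_add]
  ring


lemma t_le (n : ℕ) : t q n ≤ 2 * (1 / 2) ^ n := by
  rw [t, Finset.prod_range_succ']
  have h1 : ∏ i ∈ range n, u q (i + 1) ≤ (1 / 2) ^ n := by
    rw [show (1/2:ℝ)^n = ∏ _i ∈ range n, (1/2:ℝ) by
      rw [Finset.prod_const, Finset.card_range]]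
    exact Finset.prod_le_prod (fun i _ => (u_pos hq _).le)
      (fun i _ => u_le_half hq (by omega))
  have h2 := u_le_two hq 0
  have h3 := (u_pos hq 0).le
  have h4 : (0:ℝ) ≤ ∏ i ∈ range n, u q (i + 1) :=
    Finset.prod_nonneg fun i _ => (u_pos hq _).le
  calc (∏ i ∈ range n, u q (i + 1)) * u q 0 ≤ (1/2)^n * 2 :=
        mul_le_mul h1 h2 h3 (by positivity)
  _ = 2 * (1/2)^n := by ring

lemma summable_t : Summable (t q) := by
  apply Summable.of_nonneg_of_le (fun n => (t_pos hq n).le) (t_le hq)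
  exact (summable_geometric_of_lt_one (by norm_num) (by norm_num)).mul_left 2

lemma main : Irrational (∑' n, t q n) := by
  have hsum := summable_t hq
  rintro ⟨r, hr⟩
  obtain ⟨N, hN⟩ := pow_unbounded_of_one_lt ((r.den : ℝ) * 4) (by norm_num : (1:ℝ) < 2)
  -- the tail products
  set P : ℕ → ℝ := fun i => ∏ k ∈ Finset.Ico (N + 1) (N + 2 + i), u q k with hP
  have hPpos : ∀ i, 0 < P i := fun i => Finset.prod_pos fun k _ => u_pos hq k
  have hPle : ∀ i, P i ≤ u q (N + 1) * (1 / 2) ^ i := by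
    intro i
    rw [hP]
    simp only
    rw [Finset.prod_eq_prod_Ico_succ_bot (by omega) (u q)]
    have h1 : ∏ k ∈ Finset.Ico (N + 2) (N + 2 + i), u q k ≤ (1 / 2) ^ i := by
      have : (1/2 : ℝ) ^ i = ∏ _k ∈ Finset.Ico (N + 2) (N + 2 + i), (1/2 : ℝ) := by
        rw [Finset.prod_const, Nat.card_Ico]; congr 1; omega
      rw [this]
      apply Finset.prod_le_prod (fun k _ => (u_pos hq _).le)
      intro k hk
      exact u_le_half hq (by simp [Finset.mem_Ico] at hk; omega)
    have h2 : (0:ℝ) ≤ ∏ k ∈ Finset.Ico (N + 2) (N + 2 + i), u q k :=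
      Finset.prod_nonneg fun k _ => (u_pos hq _).le
    exact mul_le_mul_of_nonneg_left h1 (u_pos hq _).le
  have hsP : Summable P := by
    apply Summable.of_nonneg_of_le (fun i => (hPpos i).le) hPle
    exact (summable_geometric_of_lt_one (by norm_num) (by norm_num)).mul_left _
  have htP : ∀ i, t q (i + (N + 1)) = t q N * P i := by
    intro i
    rw [t, hP]
    simp only
    rw [show i + (N + 1) + 1 = N + 2 + i by omega,
      ← Finset.prod_range_mul_prod_Ico (u q) (show N + 1 ≤ N + 2 + i by omega)]
    rfl
  -- tail splitting
  have htail : (∑' n, t q n) =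
      (∑ n ∈ range (N + 1), t q n) + t q N * ∑' i, P i := by
    rw [← Summable.sum_add_tsum_nat_add (N + 1) hsum]
    congr 1
    rw [tsum_congr htP, tsum_mul_left]
  -- integer denominators
  set c : ℕ → ℤ := fun n => ∏ k ∈ Finset.Ico (n + 1) (N + 1), (q ^ (2 * k + 1) + 1) with hc
  have hdt : ∀ n ∈ range (N + 1), ((d q N : ℤ) : ℝ) * t q n = (q:ℝ) ^ (n + 1) * ((c n : ℤ) : ℝ) := by
    intro n hn
    simp only [Finset.mem_range] at hn
    have hdc : (d q N : ℝ) = (d q n : ℝ) * (c n : ℝ) := by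
      rw [← Int.cast_mul]
      congr 1
      rw [d, d, hc]
      exact (Finset.prod_range_mul_prod_Ico _ (show n + 1 ≤ N + 1 by omega)).symm
    rw [hdc, t_eq]
    field_simp [d_ne hq n]
  -- the integer z
  set z : ℤ := r.num * d q N - (r.den : ℤ) * ∑ n ∈ range (N + 1), q ^ (n + 1) * c n with hz
  have hzval : (z : ℝ) = (r.den : ℝ) * (((d q N : ℤ) : ℝ) * (t q N * ∑' i, P i)) := by
    have hnum : (r.num : ℝ) = (r.den : ℝ) * (r : ℝ) := by
      rw [← Rat.num_div_den r] ; push_cast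
      rw [Rat.num_div_den r]
      field_simp
    have hS : ∑ n ∈ range (N + 1), (q:ℝ) ^ (n + 1) * ((c n : ℤ) : ℝ)
        = ((d q N : ℤ) : ℝ) * ∑ n ∈ range (N + 1), t q n := by
      rw [Finset.mul_sum]
      exact (Finset.sum_congr rfl hdt).symm
    rw [hz]
    push_cast
    rw [hnum, hr, htail]
    rw [hS]
    ring
  -- z is a nonzero integer
  have hdabs : |((d q N : ℤ) : ℝ)| * t q N = |(q:ℝ)| ^ (N + 1) := by
    have h1 : ((d q N : ℤ) : ℝ) * t q N = (q:ℝ) ^ (N + 1) := by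
      rw [t_eq]; field_simp [d_ne hq N]
    calc |((d q N : ℤ) : ℝ)| * t q N = |((d q N : ℤ) : ℝ) * t q N| := by
          rw [abs_mul, abs_of_pos (t_pos hq N)]
    _ = |(q:ℝ) ^ (N + 1)| := by rw [h1]
    _ = |(q:ℝ)| ^ (N + 1) := abs_pow _ _
  have hTpos : 0 < ∑' i, P i := Summable.tsum_pos hsP (fun i => (hPpos i).le) 0 (hPpos 0)
  have hdenpos : (0:ℝ) < (r.den : ℝ) := by exact_mod_cast r.pos
  have hz0 : z ≠ 0 := by
    intro h0
    rw [h0] at hzval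
    simp only [Int.cast_zero] at hzval
    have : (r.den : ℝ) * (((d q N : ℤ) : ℝ) * (t q N * ∑' i, P i)) ≠ 0 :=
      mul_ne_zero (ne_of_gt hdenpos)
        (mul_ne_zero (d_ne hq N) (ne_of_gt (mul_pos (t_pos hq N) hTpos)))
    exact this hzval.symm
  have h1le : (1:ℝ) ≤ |(z : ℝ)| := by
    have := Int.one_le_abs hz0
    calc (1:ℝ) = ((1:ℤ):ℝ) := by norm_num
    _ ≤ ((|z|:ℤ):ℝ) := by exact_mod_cast this
    _ = |(z:ℝ)| := by push_cast; rfl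
  set A : ℝ := |(q:ℝ)| ^ (N + 1) with hA
  have hApos : (0:ℝ) < A := pow_pos (by linarith [habsx hq]) _
  have habsz : |(z:ℝ)| = (r.den : ℝ) * (A * ∑' i, P i) := by
    calc |(z:ℝ)| = (r.den : ℝ) * (|((d q N : ℤ) : ℝ)| * (t q N * ∑' i, P i)) := by
          rw [hzval, abs_mul, abs_mul,
            abs_of_nonneg (le_of_lt hdenpos),
            abs_of_pos (mul_pos (t_pos hq N) hTpos)]
    _ = (r.den : ℝ) * (A * ∑' i, P i) := by rw [← hdabs]; ring
  have hPsum_le : ∑' i, P i ≤ u q (N + 1) * 2 := by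
    have hg : Summable (fun i => u q (N + 1) * (1/2:ℝ) ^ i) :=
      (summable_geometric_of_lt_one (by norm_num) (by norm_num)).mul_left _
    calc ∑' i, P i ≤ ∑' i, u q (N + 1) * (1/2:ℝ) ^ i := Summable.tsum_le_tsum hPle hsP hg
    _ = u q (N + 1) * ∑' i : ℕ, (1/2:ℝ) ^ i := tsum_mul_left
    _ = u q (N + 1) * 2 := by rw [tsum_geometric_two]
  have hu2 : u q (N + 1) ≤ 2 / (A * A) := by
    have := u_le hq (N + 1)
    have hAA : |(q:ℝ)| ^ (2 * (N + 1)) = A * A := by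
      rw [hA, ← pow_add]; congr 1; ring
    rwa [hAA] at this
  have hup : |(z:ℝ)| ≤ 4 * (r.den : ℝ) / A := by
    calc |(z:ℝ)| = (r.den : ℝ) * (A * ∑' i, P i) := habsz
    _ ≤ (r.den : ℝ) * (A * (u q (N + 1) * 2)) := by
        apply mul_le_mul_of_nonneg_left _ (le_of_lt hdenpos)
        exact mul_le_mul_of_nonneg_left hPsum_le hApos.le
    _ ≤ (r.den : ℝ) * (A * (2 / (A * A) * 2)) := by
        apply mul_le_mul_of_nonneg_left _ (le_of_lt hdenpos)
        apply mul_le_mul_of_nonneg_left _ hApos.le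
        have := u_pos hq (N + 1)
        nlinarith
    _ = 4 * (r.den : ℝ) / A := by field_simp; ring
  have hlt1 : 4 * (r.den : ℝ) / A < 1 := by
    rw [div_lt_one hApos]
    have h2A : (2:ℝ) ^ (N + 1) ≤ A := pow_abs_ge hq (N + 1)
    have h2s : (2:ℝ) ^ (N + 1) = 2 * 2 ^ N := by rw [pow_succ]; ring
    nlinarith
  linarith

end WatsonNuAux

/-- Watson's third-order mock theta function
`ν(x) = Σ_{n=0}^∞ x^{n(n+1)} / ∏_{k=0}^{n} (1 + x^{2k+1})`
takes an irrational value at `x = 1/q` for every integer `q` with `|q| ≥ 2`. -/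
theorem watson_nu_irrational (q : ℤ) (hq : 2 ≤ |q|) :
    Irrational (∑' n : ℕ,
      (1 / (q : ℝ)) ^ (n * (n + 1)) /
        ∏ k ∈ Finset.range (n + 1), (1 + (1 / (q : ℝ)) ^ (2 * k + 1))) := by
  rw [tsum_congr (fun n => WatsonNuAux.key hq n)]
  exact WatsonNuAux.main hq
end

section
/- For every integer q with |q| ≥ 2, the value of the first Rogers–Ramanujan series at x = 1/q, namely 1 + Σ_{n=1}^∞ (1/q)^{n²} / ∏_{k=1}^{n} (1 − (1/q)^k), is irrational; i.e., the series converges to an irrational number at each point ±1/2, ±1/3, ±1/4, … . -/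
open Finset

lemma RR_prod_lb_aux (n : ℕ) :
    (1/4 : ℝ) + (1/2)^(n+1) ≤ ∏ k ∈ range n, (1 - (1/2:ℝ)^(k+1)) := by
  induction n with
  | zero => norm_num
  | succ n ih =>
    match n, ih with
    | 0, _ => norm_num [prod_range_succ]
    | (m+1), ih =>
      rw [prod_range_succ]
      set n := m + 1 with hn
      have h1 : (0:ℝ) < (1/2:ℝ)^(n+1) := by positivity
      have h2 : (1/2:ℝ)^(n+1) ≤ 1/4 := by
        calc (1/2:ℝ)^(n+1) ≤ (1/2:ℝ)^2 :=
          pow_le_pow_of_le_one (by norm_num) (by norm_num) (by omega)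
        _ = 1/4 := by norm_num
      have h3 : (1/2:ℝ)^(n+1+1) = (1/2)^(n+1) * (1/2) := by ring
      have h5 : (0:ℝ) ≤ 1 - (1/2:ℝ)^(n+1) := by linarith
      have h6 := mul_le_mul_of_nonneg_right ih h5
      nlinarith

lemma RR_prod_ub_aux (n : ℕ) :
    ∏ k ∈ range n, (1 + (1/2:ℝ)^(k+1)) ≤ 3 := by
  have h1 : ∏ k ∈ range n, (1 + (1/2:ℝ)^(k+1)) ≤ ∏ k ∈ range n, Real.exp ((1/2)^(k+1)) := by
    apply Finset.prod_le_prod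
    · intro i _; positivity
    · intro i _
      have := Real.add_one_le_exp ((1/2:ℝ)^(i+1))
      linarith
  have h2 : ∏ k ∈ range n, Real.exp ((1/2:ℝ)^(k+1)) = Real.exp (∑ k ∈ range n, (1/2:ℝ)^(k+1)) :=
    (Real.exp_sum _ _).symm
  have h3 : ∑ k ∈ range n, (1/2:ℝ)^(k+1) ≤ 1 := by
    have : ∑ k ∈ range n, (1/2:ℝ)^(k+1) = (1/2) * ∑ k ∈ range n, (1/2:ℝ)^k := by
      rw [Finset.mul_sum]; apply Finset.sum_congr rfl; intro i _; ring
    rw [this]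
    have := sum_geometric_two_le n
    linarith
  have h4 : Real.exp (∑ k ∈ range n, (1/2:ℝ)^(k+1)) ≤ Real.exp 1 := Real.exp_le_exp.2 h3
  have h5 := Real.exp_one_lt_d9
  linarith

noncomputable def RRt (x : ℝ) (n : ℕ) : ℝ :=
  x ^ ((n+1)^2) / ∏ k ∈ range (n+1), (1 - x^(k+1))

lemma RR_absfac_lb {x : ℝ} (hx : |x| ≤ 1/2) (k : ℕ) :
    1 - (1/2:ℝ)^(k+1) ≤ |1 - x^(k+1)| := by
  have h1 : |x^(k+1)| = |x|^(k+1) := abs_pow x (k+1)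
  have h2 : |x|^(k+1) ≤ (1/2:ℝ)^(k+1) := pow_le_pow_left₀ (abs_nonneg x) hx _
  have h3 := abs_sub_abs_le_abs_sub (1:ℝ) (x^(k+1))
  rw [abs_one] at h3
  linarith [h1 ▸ h3]

lemma RR_absfac_ub {x : ℝ} (hx : |x| ≤ 1/2) (k : ℕ) :
    |1 - x^(k+1)| ≤ 1 + (1/2:ℝ)^(k+1) := by
  have h1 : |x^(k+1)| = |x|^(k+1) := abs_pow x (k+1)
  have h2 : |x|^(k+1) ≤ (1/2:ℝ)^(k+1) := pow_le_pow_left₀ (abs_nonneg x) hx _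
  have h3 := abs_sub (1:ℝ) (x^(k+1))
  rw [abs_one] at h3
  linarith [h1 ▸ h3]

lemma RR_prod_abs_lb {x : ℝ} (hx : |x| ≤ 1/2) (n : ℕ) :
    (1/4 : ℝ) ≤ |∏ k ∈ range n, (1 - x^(k+1))| := by
  rw [Finset.abs_prod]
  calc (1/4:ℝ) ≤ ∏ k ∈ range n, (1 - (1/2:ℝ)^(k+1)) := by
        have := RR_prod_lb_aux n
        have : (0:ℝ) < (1/2:ℝ)^(n+1) := by positivity
        linarith [RR_prod_lb_aux n]
    _ ≤ ∏ k ∈ range n, |1 - x^(k+1)| := by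
        apply Finset.prod_le_prod
        · intro i _
          have : (1/2:ℝ)^(i+1) ≤ 1/2 := by
            calc (1/2:ℝ)^(i+1) ≤ (1/2:ℝ)^1 :=
              pow_le_pow_of_le_one (by norm_num) (by norm_num) (by omega)
            _ = 1/2 := pow_one _
          linarith
        · intro i _; exact RR_absfac_lb hx i

lemma RR_prod_abs_ub {x : ℝ} (hx : |x| ≤ 1/2) (n : ℕ) :
    |∏ k ∈ range n, (1 - x^(k+1))| ≤ 3 := by
  rw [Finset.abs_prod]
  calc ∏ k ∈ range n, |1 - x^(k+1)| ≤ ∏ k ∈ range n, (1 + (1/2:ℝ)^(k+1)) := by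
        apply Finset.prod_le_prod
        · intro i _; exact abs_nonneg _
        · intro i _; exact RR_absfac_ub hx i
    _ ≤ 3 := RR_prod_ub_aux n

lemma RRt_abs_ub {x : ℝ} (hx : |x| ≤ 1/2) (n : ℕ) :
    |RRt x n| ≤ 4 * |x|^((n+1)^2) := by
  rw [RRt, abs_div, abs_pow]
  have h1 := RR_prod_abs_lb hx (n+1)
  have h2 : (0:ℝ) ≤ |x|^((n+1)^2) := by positivity
  rw [div_le_iff₀ (by linarith)]
  nlinarith

lemma RRt_abs_lb {x : ℝ} (hx : |x| ≤ 1/2) (n : ℕ) :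
    |x|^((n+1)^2) / 3 ≤ |RRt x n| := by
  rw [RRt, abs_div, abs_pow]
  have h1 := RR_prod_abs_ub hx (n+1)
  have h0 := RR_prod_abs_lb hx (n+1)
  have h2 : (0:ℝ) ≤ |x|^((n+1)^2) := by positivity
  apply div_le_div_of_nonneg_left h2 (by linarith) h1

lemma RR_pow_sq_le {x : ℝ} (hx : |x| ≤ 1/2) (m n : ℕ) :
    |x|^((n+m+1)^2) ≤ |x|^((m+1)^2) * (1/2)^n := by
  have hx0 : (0:ℝ) ≤ |x| := abs_nonneg x
  have hc : (n+m+1)^2 = (m+1)^2 + n*(n+2*m+2) := by ring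
  rw [hc, pow_add]
  apply mul_le_mul_of_nonneg_left _ (by positivity)
  calc |x|^(n*(n+2*m+2)) ≤ (1/2:ℝ)^(n*(n+2*m+2)) :=
        pow_le_pow_left₀ hx0 hx _
    _ ≤ (1/2:ℝ)^n := by
        apply pow_le_pow_of_le_one (by norm_num) (by norm_num)
        nlinarith

lemma RR_summable {x : ℝ} (hx : |x| ≤ 1/2) : Summable (RRt x) := by
  have h : Summable (fun n : ℕ => |RRt x n|) := by
    apply Summable.of_nonneg_of_le (fun n => abs_nonneg _)
      (f := fun n : ℕ => 4 * (1/2:ℝ)^n)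
    · intro n
      have hle : |x|^((n+1)^2) ≤ (1/2:ℝ)^n := by
        calc |x|^((n+1)^2) ≤ (1/2:ℝ)^((n+1)^2) := pow_le_pow_left₀ (abs_nonneg x) hx _
          _ ≤ (1/2:ℝ)^n := pow_le_pow_of_le_one (by norm_num) (by norm_num) (by nlinarith)
      calc |RRt x n| ≤ 4 * |x|^((n+1)^2) := RRt_abs_ub hx n
        _ ≤ 4 * (1/2:ℝ)^n := by linarith
    · exact (summable_geometric_of_lt_one (by norm_num) (by norm_num)).mul_left _
  exact h.of_abs

lemma RR_summable_shift {x : ℝ} (hx : |x| ≤ 1/2) (m : ℕ) :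
    Summable (fun n : ℕ => RRt x (n + m)) :=
  (summable_nat_add_iff m).2 (RR_summable hx)

lemma RR_tail_ub {x : ℝ} (hx : |x| ≤ 1/2) (m : ℕ) :
    |∑' n : ℕ, RRt x (n + m)| ≤ 8 * |x|^((m+1)^2) := by
  have hgeo : Summable (fun n : ℕ => (4 * |x|^((m+1)^2)) * (1/2:ℝ)^n) :=
    (summable_geometric_of_lt_one (by norm_num) (by norm_num)).mul_left _
  have h1 : |∑' n : ℕ, RRt x (n + m)| ≤ ∑' n : ℕ, |RRt x (n + m)| := by
    simpa [Real.norm_eq_abs] using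
      norm_tsum_le_tsum_norm (f := fun n : ℕ => RRt x (n + m))
        (by simpa [Real.norm_eq_abs] using (RR_summable_shift hx m).abs)
  have h2 : ∑' n : ℕ, |RRt x (n + m)| ≤ ∑' n : ℕ, (4 * |x|^((m+1)^2)) * (1/2:ℝ)^n := by
    apply Summable.tsum_le_tsum _ ((RR_summable_shift hx m).abs) hgeo
    intro n
    calc |RRt x (n + m)| ≤ 4 * |x|^((n+m+1)^2) := RRt_abs_ub hx (n+m)
      _ ≤ 4 * (|x|^((m+1)^2) * (1/2)^n) := by
          have := RR_pow_sq_le hx m n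
          linarith
      _ = (4 * |x|^((m+1)^2)) * (1/2)^n := by ring
  have h3 : ∑' n : ℕ, (4 * |x|^((m+1)^2)) * (1/2:ℝ)^n = 8 * |x|^((m+1)^2) := by
    rw [tsum_mul_left, tsum_geometric_of_lt_one (by norm_num) (by norm_num)]
    ring
  linarith [h1, h2, h3 ▸ h2]

lemma RR_tail_lb {x : ℝ} (hx : |x| ≤ 1/2) (m : ℕ) :
    |x|^((m+2)^2) / 12 ≤ |∑' n : ℕ, RRt x (n + (m+1))| := by
  have hs := RR_summable_shift hx (m+1)
  have hsplit : ∑' n : ℕ, RRt x (n + (m+1))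
      = RRt x (m+1) + ∑' n : ℕ, RRt x (n + (m+2)) := by
    rw [Summable.tsum_eq_zero_add hs]
    congr 1
    · norm_num
    · apply tsum_congr; intro n; congr 1; omega
  set u := RRt x (m+1)
  set v := ∑' n : ℕ, RRt x (n + (m+2)) with hv
  have h1 : |x|^((m+2)^2) / 3 ≤ |u| := RRt_abs_lb hx (m+1)
  have h2 : |v| ≤ 8 * |x|^((m+3)^2) := RR_tail_ub hx (m+2)
  have h3 : 8 * |x|^((m+3)^2) ≤ |x|^((m+2)^2) / 4 := by
    have he : (m+3)^2 = (m+2)^2 + (2*m+5) := by ring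
    rw [he, pow_add]
    have hb : |x|^(2*m+5) ≤ (1/2:ℝ)^5 := by
      calc |x|^(2*m+5) ≤ (1/2:ℝ)^(2*m+5) := pow_le_pow_left₀ (abs_nonneg x) hx _
        _ ≤ (1/2:ℝ)^5 := pow_le_pow_of_le_one (by norm_num) (by norm_num) (by omega)
    have hA : (0:ℝ) ≤ |x|^((m+2)^2) := by positivity
    nlinarith
  have h4 : |u| ≤ |u + v| + |v| := by
    have := abs_add_le (u + v) (-v)
    simpa using this
  rw [hsplit]
  linarith

def RRE (n : ℕ) : ℕ := ∑ i ∈ range n, (i+1)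

lemma RRE_succ (n : ℕ) : RRE (n+1) = RRE n + (n+1) := sum_range_succ _ _

lemma RRE_add (n : ℕ) : RRE n + RRE (n+1) = (n+1)^2 := by
  induction n with
  | zero => simp [RRE]
  | succ n ih =>
    have h1 := RRE_succ n
    have h2 := RRE_succ (n+1)
    have h3 : (n+1+1)^2 = (n+1)^2 + (2*n+3) := by ring
    omega

lemma RRE_mono {a b : ℕ} (h : a ≤ b) : RRE a ≤ RRE b :=
  Finset.sum_le_sum_of_subset (Finset.range_subset_range.2 h)

lemma RR_prod_id (q : ℤ) (x : ℝ) (hqx : (q:ℝ) * x = 1) (n : ℕ) :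
    ∏ k ∈ range n, ((q:ℝ)^(k+1) - 1)
      = (q:ℝ)^(RRE n) * ∏ k ∈ range n, (1 - x^(k+1)) := by
  induction n with
  | zero => simp [RRE]
  | succ n ih =>
    rw [prod_range_succ, prod_range_succ, ih, RRE_succ, pow_add]
    have h1 : (q:ℝ)^(n+1) * x^(n+1) = 1 := by rw [← mul_pow, hqx, one_pow]
    linear_combination ((q:ℝ)^(RRE n) * ∏ k ∈ range n, (1 - x^(k+1))) * h1

lemma RR_D_mul (q : ℤ) (x : ℝ) (hqx : (q:ℝ) * x = 1) (hx : |x| ≤ 1/2)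
    {n N : ℕ} (hnN : n ≤ N) :
    ((q ^ (RRE N) * ∏ k ∈ range (N+1), (q^(k+1) - 1) : ℤ) : ℝ) * RRt x n
      = ((q ^ (RRE N - RRE n) * ∏ k ∈ Ico (n+1) (N+1), (q^(k+1) - 1) : ℤ) : ℝ) := by
  have hq0 : (q:ℝ) ≠ 0 := by
    intro h; rw [h, zero_mul] at hqx; exact one_ne_zero hqx.symm
  have hP : (1/4:ℝ) ≤ |∏ k ∈ range (n+1), (1 - x^(k+1))| := RR_prod_abs_lb hx (n+1)
  have hP0 : (∏ k ∈ range (n+1), (1 - x^(k+1))) ≠ 0 := by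
    intro h; rw [h, abs_zero] at hP; linarith
  have hsplit : (∏ k ∈ range (N+1), ((q:ℝ)^(k+1) - 1))
      = (∏ k ∈ range (n+1), ((q:ℝ)^(k+1) - 1))
        * ∏ k ∈ Ico (n+1) (N+1), ((q:ℝ)^(k+1) - 1) := by
    simp only [range_eq_Ico]
    exact (prod_Ico_consecutive _ (Nat.zero_le (n+1)) (by omega : n+1 ≤ N+1)).symm
  have hxs : x^((n+1)^2) = ((q:ℝ)^((n+1)^2))⁻¹ := by
    have h1 : (q:ℝ)^((n+1)^2) * x^((n+1)^2) = 1 := by rw [← mul_pow, hqx, one_pow]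
    field_simp at h1 ⊢
    linarith [h1]
  have hEN : RRE N = (RRE N - RRE n) + RRE n := by
    have := RRE_mono hnN; omega
  push_cast
  rw [RRt, hsplit, RR_prod_id q x hqx (n+1), hxs,
    show (n+1)^2 = RRE n + RRE (n+1) from (RRE_add n).symm, hEN]
  field_simp
  simp only [Nat.add_sub_cancel]
  ring


lemma RR_D_abs (q : ℤ) (hq : (2:ℝ) ≤ |(q:ℝ)|) (N : ℕ) :
    |((q ^ (RRE N) * ∏ k ∈ range (N+1), (q^(k+1) - 1) : ℤ) : ℝ)|
      ≤ |(q:ℝ)| ^ ((N+1)^2 + (N+1)) := by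
  set Q := |(q:ℝ)| with hQ
  push_cast
  rw [abs_mul, abs_pow, Finset.abs_prod]
  have h1 : ∏ k ∈ range (N+1), |(q:ℝ)^(k+1) - 1| ≤ ∏ k ∈ range (N+1), Q^(k+2) := by
    apply Finset.prod_le_prod (fun i _ => abs_nonneg _)
    intro k _
    have h2 : |(q:ℝ)^(k+1) - 1| ≤ |(q:ℝ)^(k+1)| + 1 := by
      have := abs_sub ((q:ℝ)^(k+1)) 1
      simpa using this
    have h3 : |(q:ℝ)^(k+1)| = Q^(k+1) := abs_pow _ _
    have h4 : (1:ℝ) ≤ Q^(k+1) := one_le_pow₀ (by linarith)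
    have h5 : Q^(k+2) = Q * Q^(k+1) := by ring
    nlinarith
  have h6 : ∏ k ∈ range (N+1), Q^(k+2) = Q ^ (∑ k ∈ range (N+1), (k+2)) :=
    (Finset.prod_pow_eq_pow_sum _ _ _)
  have h7 : ∑ k ∈ range (N+1), (k+2) = RRE (N+1) + (N+1) := by
    have : ∑ k ∈ range (N+1), (k+2) = ∑ k ∈ range (N+1), ((k+1) + 1) := by
      apply Finset.sum_congr rfl; intro k _; omega
    rw [this, Finset.sum_add_distrib]
    simp [RRE]
  have h8 : RRE N + (RRE (N+1) + (N+1)) = (N+1)^2 + (N+1) := by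
    have := RRE_add N; omega
  have h9 : (0:ℝ) ≤ Q^(RRE N) := by positivity
  calc Q^(RRE N) * ∏ k ∈ range (N+1), |(q:ℝ)^(k+1) - 1|
      ≤ Q^(RRE N) * ∏ k ∈ range (N+1), Q^(k+2) :=
        mul_le_mul_of_nonneg_left h1 h9
    _ = Q ^ ((N+1)^2 + (N+1)) := by rw [h6, ← pow_add, h7, h8]

lemma RR_pow_cancel (Q : ℝ) (hQ : Q ≠ 0) (a b : ℕ) :
    Q^a * (Q⁻¹)^(a+b) = (Q⁻¹)^b := by
  rw [pow_add, ← mul_assoc, ← mul_pow, mul_inv_cancel₀ hQ, one_pow, one_mul]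

/-- The first Rogers–Ramanujan series
`r₁(x) = 1 + Σ_{n=1}^∞ x^{n²} / ∏_{k=1}^{n} (1 - x^k)`
converges to an irrational number at `x = 1/q` for every integer `q` with `|q| ≥ 2`. -/
theorem rogers_ramanujan_one_irrational (q : ℤ) (hq : 2 ≤ |q|) :
    Irrational (1 + ∑' n : ℕ,
      (1 / (q : ℝ)) ^ ((n + 1) ^ 2) /
        ∏ k ∈ Finset.range (n + 1), (1 - (1 / (q : ℝ)) ^ (k + 1))) := by
  have hq0 : q ≠ 0 := by intro h; rw [h] at hq; simp at hq
  have hq0' : (q:ℝ) ≠ 0 := Int.cast_ne_zero.2 hq0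
  have hqR : (2:ℝ) ≤ |(q:ℝ)| := by
    rw [← Int.cast_abs]; exact_mod_cast hq
  set x : ℝ := 1 / (q:ℝ) with hxdef
  have hqx : (q:ℝ) * x = 1 := by
    rw [hxdef, mul_one_div, div_self hq0']
  have hxQ : |x| = |(q:ℝ)|⁻¹ := by
    rw [hxdef, abs_div, abs_one, one_div]
  have hx : |x| ≤ 1/2 := by
    rw [hxQ, ← one_div]
    exact one_div_le_one_div_of_le (by norm_num) hqR
  have hx0 : 0 < |x| := by rw [hxQ]; positivity
  show Irrational (1 + ∑' n : ℕ, RRt x n)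
  rintro ⟨r, hr⟩
  obtain ⟨N, hN⟩ := pow_unbounded_of_one_lt ((r.den : ℝ) * 2) (by norm_num : (1:ℝ) < 2)
  have hden : (0:ℝ) < r.den := by exact_mod_cast r.pos
  set S : ℝ := ∑ n ∈ range (N+1), RRt x n with hS
  set T : ℝ := ∑' n : ℕ, RRt x (n + (N+1)) with hT
  have hsplit : S + T = ∑' n : ℕ, RRt x n := Summable.sum_add_tsum_nat_add (N+1) (RR_summable hx)
  set D : ℤ := q ^ (RRE N) * ∏ k ∈ range (N+1), (q^(k+1) - 1) with hD
  have hD0 : D ≠ 0 := by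
    rw [hD]
    apply mul_ne_zero (pow_ne_zero _ hq0)
    rw [Finset.prod_ne_zero_iff]
    intro k _
    intro h
    have hk : q^(k+1) = 1 := by omega
    have : (2:ℤ)^(k+1) ≤ |q^(k+1)| := by
      rw [abs_pow]; exact pow_le_pow_left₀ (by norm_num) hq _
    rw [hk, abs_one] at this
    have : (2:ℤ)^(k+1) ≥ 2 := by
      calc (2:ℤ)^(k+1) ≥ 2^1 := pow_le_pow_right₀ (by norm_num) (by omega)
      _ = 2 := pow_one 2
    omega
  set z1 : ℤ := ∑ n ∈ range (N+1),
    (q ^ (RRE N - RRE n) * ∏ k ∈ Ico (n+1) (N+1), (q^(k+1) - 1)) with hz1def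
  have hz1 : (D:ℝ) * S = (z1 : ℝ) := by
    rw [hS, hz1def, Finset.mul_sum, Int.cast_sum]
    apply Finset.sum_congr rfl
    intro n hn
    exact RR_D_mul q x hqx hx (Finset.mem_range_succ_iff.mp hn)
  have h5 : ((r.den:ℝ)) * (r:ℝ) = (r.num:ℝ) := by
    rw [Rat.cast_def]; field_simp
  set Z : ℤ := r.num * D - (r.den : ℤ) * (D + z1) with hZdef
  have hZ : (Z:ℝ) = (r.den:ℝ) * ((D:ℝ) * T) := by
    rw [hZdef]
    push_cast
    linear_combination (r.den:ℝ) * hz1 + (r.den:ℝ) * (D:ℝ) * hr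
      - (D:ℝ) * h5 - (r.den:ℝ) * (D:ℝ) * hsplit
  have hTlb := RR_tail_lb hx N
  have hT0 : T ≠ 0 := by
    intro h
    rw [hT] at h  -- ensure
    rw [h, abs_zero] at hTlb
    have : (0:ℝ) < |x|^((N+2)^2) := pow_pos hx0 _
    linarith
  have hZ0 : Z ≠ 0 := by
    intro h
    rw [h, Int.cast_zero] at hZ
    have hD0' : ((D:ℤ):ℝ) ≠ 0 := Int.cast_ne_zero.2 hD0
    exact (mul_ne_zero (ne_of_gt hden) (mul_ne_zero hD0' hT0)) hZ.symm
  have hZ1 : (1:ℝ) ≤ |(Z:ℝ)| := by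
    have := Int.one_le_abs hZ0
    calc (1:ℝ) = ((1:ℤ):ℝ) := by norm_num
      _ ≤ ((|Z|:ℤ):ℝ) := by exact_mod_cast this
      _ = |(Z:ℝ)| := by push_cast; ring
  set Q : ℝ := |(q:ℝ)| with hQdef
  have hQ0 : (0:ℝ) < Q := by rw [hQdef]; positivity
  have hDabs : |(D:ℝ)| ≤ Q ^ ((N+1)^2 + (N+1)) := RR_D_abs q hqR N
  have hTub : |T| ≤ 8 * |x|^((N+2)^2) := RR_tail_ub hx (N+1)
  have key : Q ^ ((N+1)^2 + (N+1)) * |x|^((N+2)^2) ≤ (1/2:ℝ)^(N+2) := by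
    have he : (N+2)^2 = ((N+1)^2 + (N+1)) + (N+2) := by ring
    rw [hxQ, he, RR_pow_cancel Q (ne_of_gt hQ0)]
    apply pow_le_pow_left₀ (by positivity)
    rw [← hxQ]; exact hx
  have habs : |(Z:ℝ)| ≤ (r.den:ℝ) * 2 * (1/2:ℝ)^N := by
    calc |(Z:ℝ)| = (r.den:ℝ) * (|(D:ℝ)| * |T|) := by
          rw [hZ, abs_mul, abs_mul, abs_of_pos hden]
      _ ≤ (r.den:ℝ) * (Q ^ ((N+1)^2 + (N+1)) * (8 * |x|^((N+2)^2))) := by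
          apply mul_le_mul_of_nonneg_left _ (le_of_lt hden)
          exact mul_le_mul hDabs hTub (abs_nonneg _) (by positivity)
      _ = (r.den:ℝ) * 8 * (Q ^ ((N+1)^2 + (N+1)) * |x|^((N+2)^2)) := by ring
      _ ≤ (r.den:ℝ) * 8 * (1/2:ℝ)^(N+2) := by
          apply mul_le_mul_of_nonneg_left key (by positivity)
      _ = (r.den:ℝ) * 2 * (1/2:ℝ)^N := by ring
  have hfin : (r.den:ℝ) * 2 * (1/2:ℝ)^N < 1 := by
    have hp : (0:ℝ) < (1/2:ℝ)^N := by positivity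
    have := mul_lt_mul_of_pos_right hN hp
    have h2N : (2:ℝ)^N * (1/2:ℝ)^N = 1 := by
      rw [← mul_pow]; norm_num
    linarith
  linarith
end

section
/- For every integer q with |q| ≥ 2, the value of the second Rogers–Ramanujan series at x = 1/q, namely 1 + Σ_{n=1}^∞ (1/q)^{n(n+1)} / ∏_{k=1}^{n} (1 − (1/q)^k), is irrational; i.e., the series converges to an irrational number at each point ±1/2, ±1/3, ±1/4, … . -/
open Finset


lemma irr_of_small_approx (x : ℝ)
    (h : ∀ ε : ℝ, 0 < ε → ∃ A B : ℤ, (B : ℝ) * x - A ≠ 0 ∧ |(B : ℝ) * x - A| < ε) :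
    Irrational x := by
  rintro ⟨r, rfl⟩
  obtain ⟨A, B, h0, h1⟩ := h (1 / r.den) (by positivity)
  have hden : (0:ℝ) < (r.den : ℝ) := by exact_mod_cast r.pos
  have hr : (r : ℝ) = (r.num : ℝ) / (r.den : ℝ) := by
    exact_mod_cast congrArg (Rat.cast (K := ℝ)) (Rat.num_div_den r).symm
  have key : ((B : ℝ) * r - A) * r.den = ((B * r.num - A * r.den : ℤ) : ℝ) := by
    rw [hr]; push_cast; field_simp
  have hZ : (B * r.num - A * r.den : ℤ) ≠ 0 := by
    intro hzero
    have hk : ((B : ℝ) * r - A) * r.den = 0 := by rw [key, hzero]; norm_num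
    rcases mul_eq_zero.mp hk with h | h
    · exact h0 h
    · exact hden.ne' (by exact_mod_cast h)
  have h1' : |((B : ℝ) * r - A) * r.den| < 1 := by
    rw [abs_mul, abs_of_pos hden]
    calc |(B:ℝ) * r - A| * r.den < (1 / r.den) * r.den := by
          exact mul_lt_mul_of_pos_right h1 hden
      _ = 1 := by field_simp
  rw [key] at h1'
  have : (1:ℝ) ≤ |((B * r.num - A * r.den : ℤ) : ℝ)| := by
    rw [← Int.cast_abs]
    exact_mod_cast Int.one_le_abs hZ
  linarith

lemma prod_half_lower_aux (n : ℕ) :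
    (1/4 : ℝ) + (1/2)^(n+2) ≤ ∏ k ∈ range (n+1), (1 - (1/2:ℝ)^(k+1)) := by
  induction n with
  | zero => norm_num
  | succ n ih =>
    rw [prod_range_succ]
    have hs0 : (0:ℝ) < (1/2:ℝ)^(n+2) := by positivity
    have hs : (1/2:ℝ)^(n+2) ≤ 1/4 := by
      calc (1/2:ℝ)^(n+2) ≤ (1/2:ℝ)^2 := by
            apply pow_le_pow_of_le_one (by norm_num) (by norm_num) (by omega)
        _ = 1/4 := by norm_num
    have he : (1/2:ℝ)^(n+1+2) = (1/2)^(n+2) * (1/2) := by ring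
    nlinarith [ih, hs0, hs]

lemma prod_half_lower (n : ℕ) :
    (1/4 : ℝ) ≤ ∏ k ∈ range n, (1 - (1/2:ℝ)^(k+1)) := by
  match n with
  | 0 => norm_num
  | n+1 =>
    have := prod_half_lower_aux n
    have h0 : (0:ℝ) < (1/2:ℝ)^(n+2) := by positivity
    linarith

lemma prod_one_sub_bounds {a : ℕ → ℝ} (ha : ∀ k, |a k| ≤ (1/2)^(k+1)) (n : ℕ) :
    (1/4 : ℝ) ≤ |∏ k ∈ range n, (1 - a k)| ∧ |∏ k ∈ range n, (1 - a k)| ≤ 4 := by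
  have habs : |∏ k ∈ range n, (1 - a k)| = ∏ k ∈ range n, |1 - a k| := by
    exact abs_prod _ _
  have hlow : ∀ k, (1:ℝ) - (1/2)^(k+1) ≤ |1 - a k| := by
    intro k
    have := abs_sub_abs_le_abs_sub (1:ℝ) (a k)
    have h1 : |(1:ℝ)| = 1 := abs_one
    nlinarith [ha k, abs_nonneg (a k), abs_nonneg ((1:ℝ) - a k)]
  have hup : ∀ k, |1 - a k| ≤ 1 + (1/2:ℝ)^(k+1) := by
    intro k
    calc |1 - a k| ≤ |(1:ℝ)| + |a k| := abs_sub _ _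
      _ ≤ 1 + (1/2:ℝ)^(k+1) := by rw [abs_one]; linarith [ha k]
  have hlow0 : ∀ k, (0:ℝ) ≤ 1 - (1/2:ℝ)^(k+1) := by
    intro k
    have : (1/2:ℝ)^(k+1) ≤ 1 := by
      apply pow_le_one₀ (by norm_num) (by norm_num)
    linarith
  have hP : (1/4:ℝ) ≤ ∏ k ∈ range n, (1 - (1/2:ℝ)^(k+1)) := prod_half_lower n
  constructor
  · rw [habs]
    calc (1/4:ℝ) ≤ ∏ k ∈ range n, (1 - (1/2:ℝ)^(k+1)) := hP
      _ ≤ ∏ k ∈ range n, |1 - a k| := by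
          apply prod_le_prod
          · intro k _; exact hlow0 k
          · intro k _; exact hlow k
  · rw [habs]
    have key : ∀ k, (1:ℝ) + (1/2)^(k+1) ≤ (1 - (1/2:ℝ)^(k+1))⁻¹ := by
      intro k
      have h1 : (0:ℝ) < 1 - (1/2:ℝ)^(k+1) := by
        have : (1/2:ℝ)^(k+1) ≤ 1/2 := by
          calc (1/2:ℝ)^(k+1) ≤ (1/2:ℝ)^1 := by
                apply pow_le_pow_of_le_one (by norm_num) (by norm_num) (by omega)
            _ = 1/2 := by norm_num
        linarith
      have h2 : (1 - (1/2:ℝ)^(k+1)) * (1 + (1/2)^(k+1)) ≤ 1 := by nlinarith [pow_pos (by norm_num : (0:ℝ) < 1/2) (k+1)]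
      calc (1:ℝ) + (1/2)^(k+1) = ((1 - (1/2:ℝ)^(k+1)) * (1 + (1/2)^(k+1))) * (1 - (1/2:ℝ)^(k+1))⁻¹ := by
            rw [mul_comm (1 - (1/2:ℝ)^(k+1)), mul_assoc, mul_inv_cancel₀ h1.ne', mul_one]
        _ ≤ 1 * (1 - (1/2:ℝ)^(k+1))⁻¹ := by
            apply mul_le_mul_of_nonneg_right h2 (by positivity)
        _ = (1 - (1/2:ℝ)^(k+1))⁻¹ := by ring
    calc ∏ k ∈ range n, |1 - a k| ≤ ∏ k ∈ range n, (1 - (1/2:ℝ)^(k+1))⁻¹ := by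
          apply prod_le_prod
          · intro k _; exact abs_nonneg _
          · intro k _; exact le_trans (hup k) (key k)
      _ = (∏ k ∈ range n, (1 - (1/2:ℝ)^(k+1)))⁻¹ := by
          rw [← prod_inv_distrib]
      _ ≤ 4 := by
          rw [inv_le_comm₀ (by linarith) (by norm_num)]
          linarith

lemma key_identity (q : ℤ) (hq0 : (q:ℝ) ≠ 0) (n m : ℕ) (hnm : n + 1 ≤ m)
    (hden : ∀ k : ℕ, (1 - (1/(q:ℝ))^(k+1)) ≠ 0) :
    ((∏ k ∈ range m, (q^(k+1) * (q^(k+1) - 1)) : ℤ) : ℝ) *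
      ((1/(q:ℝ))^((n+1)*(n+2)) / ∏ k ∈ range (n+1), (1 - (1/(q:ℝ))^(k+1)))
    = ((∏ k ∈ Finset.Ico (n+1) m, (q^(k+1) * (q^(k+1) - 1)) : ℤ) : ℝ) := by
  have hyx : (q:ℝ) * (1/(q:ℝ)) = 1 := by field_simp
  have hinv : ∀ N : ℕ, (q:ℝ)^N * (1/(q:ℝ))^N = 1 := fun N => by
    rw [← mul_pow, hyx, one_pow]
  have hfac : ∀ k : ℕ, ((q:ℝ)^(k+1) - 1) = (q:ℝ)^(k+1) * (1 - (1/(q:ℝ))^(k+1)) := by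
    intro k; rw [mul_sub, mul_one, hinv]
  push_cast
  rw [← Finset.prod_range_mul_prod_Ico (fun k => ((q:ℝ)^(k+1) * ((q:ℝ)^(k+1) - 1))) hnm]
  have h1 : ∏ k ∈ range (n+1), ((q:ℝ)^(k+1) * ((q:ℝ)^(k+1) - 1))
      = (∏ k ∈ range (n+1), (q:ℝ)^(k+1)) * ((∏ k ∈ range (n+1), (q:ℝ)^(k+1)) *
          ∏ k ∈ range (n+1), (1 - (1/(q:ℝ))^(k+1))) := by
    rw [← prod_mul_distrib, ← prod_mul_distrib]
    exact prod_congr rfl fun k _ => by rw [hfac k]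
  have hsum : (∑ k ∈ range (n+1), (k+1)) + (∑ k ∈ range (n+1), (k+1)) = (n+1)*(n+2) := by
    have e1 : (∑ k ∈ range (n+1), (k+1)) = ∑ i ∈ range (n+2), i := by
      rw [Finset.sum_range_succ' (fun i => i) (n+1)]
      simp
    rw [e1]
    have h := Finset.sum_range_id_mul_two (n+2)
    calc (∑ i ∈ range (n+2), i) + (∑ i ∈ range (n+2), i)
        = (∑ i ∈ range (n+2), i) * 2 := by ring
      _ = (n+2) * (n+2-1) := h
      _ = (n+2) * (n+1) := by rw [Nat.succ_sub_one]
      _ = (n+1)*(n+2) := by ring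
  have h2 : (∏ k ∈ range (n+1), (q:ℝ)^(k+1)) * (∏ k ∈ range (n+1), (q:ℝ)^(k+1))
      = (q:ℝ)^((n+1)*(n+2)) := by
    rw [prod_pow_eq_pow_sum, ← pow_add, hsum]
  have h4 : (∏ k ∈ range (n+1), (1 - (1/(q:ℝ))^(k+1))) ≠ 0 :=
    prod_ne_zero_iff.mpr fun k _ => hden k
  rw [h1]
  rw [div_eq_mul_inv]
  calc (∏ k ∈ range (n+1), (q:ℝ)^(k+1)) * ((∏ k ∈ range (n+1), (q:ℝ)^(k+1)) *
          ∏ k ∈ range (n+1), (1 - (1/(q:ℝ))^(k+1))) *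
        (∏ k ∈ Ico (n+1) m, ((q:ℝ)^(k+1) * ((q:ℝ)^(k+1) - 1))) *
        ((1/(q:ℝ))^((n+1)*(n+2)) * (∏ k ∈ range (n+1), (1 - (1/(q:ℝ))^(k+1)))⁻¹)
      = ((∏ k ∈ range (n+1), (q:ℝ)^(k+1)) * (∏ k ∈ range (n+1), (q:ℝ)^(k+1)))
          * (1/(q:ℝ))^((n+1)*(n+2))
          * ((∏ k ∈ range (n+1), (1 - (1/(q:ℝ))^(k+1))) *
             (∏ k ∈ range (n+1), (1 - (1/(q:ℝ))^(k+1)))⁻¹)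
          * (∏ k ∈ Ico (n+1) m, ((q:ℝ)^(k+1) * ((q:ℝ)^(k+1) - 1))) := by ring
    _ = (∏ k ∈ Ico (n+1) m, ((q:ℝ)^(k+1) * ((q:ℝ)^(k+1) - 1))) := by
          rw [h2, hinv, mul_inv_cancel₀ h4]; ring

lemma abs_div_bounds {a P : ℝ} (h1 : 1/4 ≤ |P|) (h2 : |P| ≤ 4) :
    |a| / 4 ≤ |a / P| ∧ |a / P| ≤ 4 * |a| := by
  have h0 : 0 < |P| := lt_of_lt_of_le (by norm_num) h1
  rw [abs_div]
  constructor
  · exact div_le_div_of_nonneg_left (abs_nonneg a) h0 h2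
  · have h3 : |a|/|P| ≤ |a|/(1/4) :=
      div_le_div_of_nonneg_left (abs_nonneg a) (by norm_num) h1
    have h4 : |a|/(1/4) = 4 * |a| := by ring
    linarith

set_option maxHeartbeats 2000000 in
/-- The second Rogers–Ramanujan series
`r₂(x) = 1 + Σ_{n=1}^∞ x^{n(n+1)} / ∏_{k=1}^{n} (1 - x^k)`
converges to an irrational number at `x = 1/q` for every integer `q` with `|q| ≥ 2`. -/
theorem rogers_ramanujan_two_irrational (q : ℤ) (hq : 2 ≤ |q|) :
    Irrational (1 + ∑' n : ℕ,
      (1 / (q : ℝ)) ^ ((n + 1) * (n + 2)) /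
        ∏ k ∈ Finset.range (n + 1), (1 - (1 / (q : ℝ)) ^ (k + 1))) := by
  have hq2 : (2:ℝ) ≤ |(q:ℝ)| := by
    rw [← Int.cast_abs]; exact_mod_cast hq
  have hq0 : (q:ℝ) ≠ 0 := by
    intro h; rw [h, abs_zero] at hq2; linarith
  set x : ℝ := 1 / (q:ℝ) with hx_def
  have hx0 : x ≠ 0 := hx_def ▸ one_div_ne_zero hq0
  have hxabs : |x| ≤ 1/2 := by
    rw [hx_def, abs_div, abs_one, div_le_div_iff₀ (by positivity) (by norm_num)]
    linarith
  have hxpos : 0 < |x| := abs_pos.mpr hx0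
  have hx1 : |x| ≤ 1 := by linarith
  have hxk : ∀ k : ℕ, |x ^ (k+1)| ≤ (1/2:ℝ)^(k+1) := fun k => by
    rw [abs_pow]; exact pow_le_pow_left₀ (abs_nonneg x) hxabs _
  have hxN : ∀ N : ℕ, |x| ^ N ≤ (1/2:ℝ)^N := fun N =>
    pow_le_pow_left₀ (abs_nonneg x) hxabs N
  have hden : ∀ k : ℕ, (1 - x^(k+1)) ≠ 0 := by
    intro k h
    have h1 : x ^ (k+1) = 1 := by
      have := sub_eq_zero.mp h; linarith
    have h2 := hxk k
    rw [h1, abs_one] at h2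
    have h3 : ((1:ℝ)/2)^(k+1) ≤ (1/2:ℝ)^1 :=
      pow_le_pow_of_le_one (by norm_num) (by norm_num) (by omega)
    norm_num at h3
    linarith
  set f : ℕ → ℝ := fun n : ℕ =>
      x ^ ((n + 1) * (n + 2)) / ∏ k ∈ Finset.range (n + 1), (1 - x ^ (k + 1))
    with hf_def
  have hPn := fun n => prod_one_sub_bounds (a := fun k => x^(k+1)) hxk n
  -- bounds on |f n|
  have hf_up : ∀ n : ℕ, |f n| ≤ 4 * |x|^((n+1)*(n+2)) := by
    intro n
    have h := (abs_div_bounds (a := x ^ ((n+1)*(n+2))) (hPn (n+1)).1 (hPn (n+1)).2).2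
    rw [abs_pow] at h
    exact h
  have hf_lo : ∀ n : ℕ, |x|^((n+1)*(n+2)) / 4 ≤ |f n| := by
    intro n
    have h := (abs_div_bounds (a := x ^ ((n+1)*(n+2))) (hPn (n+1)).1 (hPn (n+1)).2).1
    rw [abs_pow] at h
    exact h
  -- summability
  have hgeo : Summable (fun n : ℕ => ((1:ℝ)/2)^n) :=
    summable_geometric_of_lt_one (by norm_num) (by norm_num)
  have hf_up' : ∀ n : ℕ, |f n| ≤ 4 * (1/2:ℝ)^n := by
    intro n
    refine le_trans (hf_up n) ?_
    have h1 : |x|^((n+1)*(n+2)) ≤ |x|^n := by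
      apply pow_le_pow_of_le_one (abs_nonneg x) hx1
      nlinarith
    have h2 := hxN n
    nlinarith [pow_nonneg (abs_nonneg x) n]
  have hsumf : Summable f := by
    apply Summable.of_abs
    exact Summable.of_nonneg_of_le (fun n => abs_nonneg _) hf_up' (hgeo.mul_left 4)
  have hsum_shift : ∀ N : ℕ, Summable (fun n => f (n + N)) :=
    fun N => (summable_nat_add_iff N).mpr hsumf
  have hsum_shift_abs : ∀ N : ℕ, Summable (fun n => |f (n + N)|) :=
    fun N => (summable_nat_add_iff N).mpr hsumf.abs
  -- tail upper bound
  have hexp_le : ∀ N n : ℕ, (N+1)*(N+2) + n ≤ (n+N+1)*(n+N+2) := by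
    intro N n; nlinarith [Nat.zero_le n, Nat.zero_le N]
  have hbound_shift : ∀ N n : ℕ, |f (n + N)| ≤ (4 * |x|^((N+1)*(N+2))) * (1/2:ℝ)^n := by
    intro N n
    calc |f (n+N)| ≤ 4 * |x|^((n+N+1)*(n+N+2)) := hf_up _
      _ ≤ 4 * (|x|^((N+1)*(N+2)) * (1/2:ℝ)^n) := by
          have h1 : |x|^((n+N+1)*(n+N+2)) ≤ |x|^((N+1)*(N+2) + n) :=
            pow_le_pow_of_le_one (abs_nonneg x) hx1 (hexp_le N n)
          have h2 : |x|^((N+1)*(N+2) + n) = |x|^((N+1)*(N+2)) * |x|^n := pow_add _ _ _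
          have h3 : |x|^((N+1)*(N+2)) * |x|^n ≤ |x|^((N+1)*(N+2)) * (1/2:ℝ)^n :=
            mul_le_mul_of_nonneg_left (hxN n) (by positivity)
          nlinarith [h1, h3]
      _ = (4 * |x|^((N+1)*(N+2))) * (1/2:ℝ)^n := by ring
  have htail_up : ∀ N : ℕ, |∑' n, f (n + N)| ≤ 8 * |x|^((N+1)*(N+2)) := by
    intro N
    calc |∑' n, f (n + N)| ≤ ∑' n, |f (n + N)| := by
          have := norm_tsum_le_tsum_norm (f := fun n => f (n + N)) (by
            simpa [Real.norm_eq_abs] using hsum_shift_abs N)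
          simpa [Real.norm_eq_abs] using this
      _ ≤ ∑' n : ℕ, (4 * |x|^((N+1)*(N+2))) * (1/2:ℝ)^n := by
          apply Summable.tsum_le_tsum (hbound_shift N) (hsum_shift_abs N)
          exact hgeo.mul_left _
      _ = (4 * |x|^((N+1)*(N+2))) * ∑' n : ℕ, (1/2:ℝ)^n := tsum_mul_left
      _ = (4 * |x|^((N+1)*(N+2))) * 2 := by
          rw [tsum_geometric_of_lt_one (by norm_num) (by norm_num)]; norm_num
      _ = 8 * |x|^((N+1)*(N+2)) := by ring
  -- tail lower bound
  have htail_lo : ∀ N : ℕ, 2 ≤ N → |x|^((N+1)*(N+2)) / 8 ≤ |∑' n, f (n + N)| := by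
    intro N hN
    have hsplit : ∑' n, f (n + N) = f N + ∑' n, f (n + (N+1)) := by
      rw [Summable.tsum_eq_zero_add (hsum_shift N)]
      congr 1
      · simp
      · exact tsum_congr fun n => by rw [show n + 1 + N = n + (N+1) by omega]
    have h1 := hf_lo N
    have h2 : |∑' n, f (n + (N+1))| ≤ 8 * |x|^((N+2)*(N+3)) := by
      have h2' := htail_up (N+1)
      have e : (N+1+1)*(N+1+2) = (N+2)*(N+3) := by ring
      rw [e] at h2'
      exact h2'
    have h3 : 8 * |x|^((N+2)*(N+3)) ≤ |x|^((N+1)*(N+2)) / 8 := by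
      have e1 : (N+2)*(N+3) = (N+1)*(N+2) + 2*(N+2) := by ring
      rw [e1, pow_add]
      have h4 : |x|^(2*(N+2)) ≤ (1/2:ℝ)^(2*(N+2)) := hxN _
      have h5 : ((1:ℝ)/2)^(2*(N+2)) ≤ (1/2:ℝ)^8 := by
        apply pow_le_pow_of_le_one (by norm_num) (by norm_num); omega
      have h6 : (0:ℝ) ≤ |x|^((N+1)*(N+2)) := by positivity
      have h7 : |x|^((N+1)*(N+2)) ≤ 1 := pow_le_one₀ (abs_nonneg x) hx1
      nlinarith [pow_nonneg (abs_nonneg x) (2*(N+2))]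
    have habs : |f N| ≤ |∑' n, f (n + N)| + |∑' n, f (n + (N+1))| := by
      rw [hsplit]
      calc |f N| = |(f N + ∑' n, f (n + (N+1))) - ∑' n, f (n + (N+1))| := by
            rw [add_sub_cancel_right]
        _ ≤ |f N + ∑' n, f (n + (N+1))| + |∑' n, f (n + (N+1))| := abs_sub _ _
    linarith
  -- integer structure
  have hE_t : ∀ n m : ℕ, n + 1 ≤ m →
      ((∏ k ∈ range m, (q^(k+1) * (q^(k+1) - 1)) : ℤ) : ℝ) * f n
      = ((∏ k ∈ Finset.Ico (n+1) m, (q^(k+1) * (q^(k+1) - 1)) : ℤ) : ℝ) := by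
    intro n m hnm
    have h := key_identity q hq0 n m hnm (by rw [← hx_def]; exact hden)
    rw [← hx_def] at h
    exact h
  have hE_ne : ∀ m : ℕ, ((∏ k ∈ range m, (q^(k+1) * (q^(k+1) - 1)) : ℤ) : ℝ) ≠ 0 := by
    intro m
    rw [Int.cast_ne_zero]
    apply prod_ne_zero_iff.mpr
    intro k _
    apply mul_ne_zero
    · apply pow_ne_zero; intro h; rw [h] at hq; simp at hq
    · intro h
      have h1 : q^(k+1) = 1 := by omega
      have h2 : (2:ℤ) ≤ |q^(k+1)| := by
        rw [abs_pow]
        calc (2:ℤ) ≤ |q| := hq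
          _ ≤ |q|^(k+1) := le_self_pow₀ (by omega) (by omega)
      rw [h1] at h2; norm_num at h2
  have hE_bound : ∀ M : ℕ,
      |((∏ k ∈ range (M+1), (q^(k+1) * (q^(k+1) - 1)) : ℤ) : ℝ)| * |x|^((M+1)*(M+2)) ≤ 4 := by
    intro M
    have h1 := hE_t M (M+1) le_rfl
    rw [Finset.Ico_self, Finset.prod_empty, Int.cast_one] at h1
    have h2 : |((∏ k ∈ range (M+1), (q^(k+1) * (q^(k+1) - 1)) : ℤ) : ℝ)| * |f M| = 1 := by
      rw [← abs_mul, h1, abs_one]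
    have h3 := hf_lo M
    have hEM : (0:ℝ) ≤ |((∏ k ∈ range (M+1), (q^(k+1) * (q^(k+1) - 1)) : ℤ) : ℝ)| :=
      abs_nonneg _
    nlinarith [h2, h3, mul_le_mul_of_nonneg_left h3 hEM]
  -- apply the criterion
  apply irr_of_small_approx
  intro ε hε
  obtain ⟨n₀, hn₀⟩ := exists_pow_lt_of_lt_one (show (0:ℝ) < ε/32 by positivity)
    (show (1/2:ℝ) < 1 by norm_num)
  set M : ℕ := n₀ + 1 with hM_def
  set N : ℕ := M + 1 with hN_def
  have hN2 : 2 ≤ N := by omega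
  set E : ℤ := ∏ k ∈ range N, (q^(k+1) * (q^(k+1) - 1)) with hE_def
  set C : ℤ := ∑ n ∈ range N, ∏ k ∈ Finset.Ico (n+1) N, (q^(k+1) * (q^(k+1) - 1)) with hC_def
  have hkey : (E:ℝ) * (1 + ∑' n, f n) - ((E + C : ℤ):ℝ) = (E:ℝ) * ∑' n, f (n + N) := by
    have hsplit : ∑' n, f n = ∑ n ∈ range N, f n + ∑' n, f (n + N) :=
      (Summable.sum_add_tsum_nat_add N hsumf).symm
    have hsum_eq : ∑ n ∈ range N, (E:ℝ) * f n
        = ∑ n ∈ range N, ((∏ k ∈ Finset.Ico (n+1) N, (q^(k+1) * (q^(k+1) - 1)) : ℤ) : ℝ) :=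
      sum_congr rfl fun n hn => hE_t n N (mem_range.mp hn)
    have hCcast : ((C : ℤ) : ℝ)
        = ∑ n ∈ range N, ((∏ k ∈ Finset.Ico (n+1) N, (q^(k+1) * (q^(k+1) - 1)) : ℤ) : ℝ) := by
      rw [hC_def, Int.cast_sum]
    rw [hsplit, Int.cast_add, hCcast, ← hsum_eq, mul_add, mul_add, Finset.mul_sum]
    ring
  have htail_ne : ∑' n, f (n + N) ≠ 0 := by
    intro h
    have hlo := htail_lo N hN2
    rw [h, abs_zero] at hlo
    have hpos : (0:ℝ) < |x|^((N+1)*(N+2)) / 8 := by positivity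
    linarith
  have hsmall : |(E:ℝ) * ∑' n, f (n + N)| < ε := by
    rw [abs_mul]
    have hb1 := htail_up N
    have hb2 := hE_bound M
    rw [← hN_def] at hb2
    have he2 : (N+1)*(N+2) = (M+1)*(M+2) + 2*(N+1) := by rw [hN_def]; ring
    have hb3 : |(E:ℝ)| * |∑' n, f (n + N)| ≤ |(E:ℝ)| * (8 * |x|^((N+1)*(N+2))) :=
      mul_le_mul_of_nonneg_left hb1 (abs_nonneg _)
    have hb4 : |(E:ℝ)| * (8 * |x|^((N+1)*(N+2)))
        = 8 * (|(E:ℝ)| * |x|^((M+1)*(M+2))) * |x|^(2*(N+1)) := by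
      rw [he2, pow_add]; ring
    have hb5 : 8 * (|(E:ℝ)| * |x|^((M+1)*(M+2))) * |x|^(2*(N+1))
        ≤ 8 * 4 * |x|^(2*(N+1)) := by
      apply mul_le_mul_of_nonneg_right _ (by positivity)
      nlinarith [hb2]
    have hb6 : |x|^(2*(N+1)) ≤ ((1:ℝ)/2)^n₀ := by
      calc |x|^(2*(N+1)) ≤ ((1:ℝ)/2)^(2*(N+1)) := hxN _
        _ ≤ ((1:ℝ)/2)^n₀ :=
          pow_le_pow_of_le_one (by norm_num) (by norm_num) (by omega)
    calc |(E:ℝ)| * |∑' n, f (n + N)| ≤ 8 * 4 * |x|^(2*(N+1)) := by linarith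
      _ ≤ 32 * ((1:ℝ)/2)^n₀ := by linarith
      _ < 32 * (ε/32) := by linarith
      _ = ε := by ring
  refine ⟨E + C, E, ?_, ?_⟩
  · rw [hkey]
    exact mul_ne_zero (hE_ne N) htail_ne
  · rw [hkey]
    exact hsmall
end

section
/- For every integer q with |q| ≥ 2, the value f₀(1/q) = 1 + Σ_{n=1}^∞ (1/q)^{n²} / ∏_{k=1}^{n} (1 + (1/q)^k) is irrational; i.e., the fifth-order mock theta function f₀ takes an irrational value at each point ±1/2, ±1/3, ±1/4, … . -/
open Finset

/-- `mtQ x n = ∏_{k=1}^n (1 + x^k)` -/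
noncomputable def mtQ (x : ℝ) (n : ℕ) : ℝ := ∏ k ∈ Finset.range n, (1 + x ^ (k + 1))

/-- `mtT x m = x^{(m+1)^2} / mtQ x (m+1)`, the terms of the series. -/
noncomputable def mtT (x : ℝ) (m : ℕ) : ℝ :=
  x ^ ((m + 1) ^ 2) / ∏ k ∈ Finset.range (m + 1), (1 + x ^ (k + 1))

lemma mtT_eq (x : ℝ) (m : ℕ) : mtT x m = x ^ ((m + 1) ^ 2) / mtQ x (m + 1) := rfl

lemma mt_factor_lb {x : ℝ} (hx : |x| ≤ 1 / 2) (k : ℕ) :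
    1 - (1 / 2 : ℝ) ^ (k + 1) ≤ 1 + x ^ (k + 1) := by
  have h : |x ^ (k + 1)| ≤ (1 / 2 : ℝ) ^ (k + 1) := by
    rw [abs_pow]
    exact pow_le_pow_left₀ (abs_nonneg x) hx _
  have := abs_le.1 h
  linarith [this.1]

lemma mt_factor_ub {x : ℝ} (hx : |x| ≤ 1 / 2) (k : ℕ) :
    1 + x ^ (k + 1) ≤ 1 + (1 / 2 : ℝ) ^ (k + 1) := by
  have h : |x ^ (k + 1)| ≤ (1 / 2 : ℝ) ^ (k + 1) := by
    rw [abs_pow]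
    exact pow_le_pow_left₀ (abs_nonneg x) hx _
  have := abs_le.1 h
  linarith [this.2]

lemma mt_prod_lower (m : ℕ) :
    (1 / 4 : ℝ) * (1 + (1 / 2) ^ m) ≤ ∏ k ∈ range (m + 1), (1 - (1 / 2 : ℝ) ^ (k + 1)) := by
  induction m with
  | zero => norm_num
  | succ m ih =>
    rw [prod_range_succ]
    have h1 : (0:ℝ) < (1/2:ℝ) ^ m := by positivity
    have h2 : (1/2:ℝ) ^ m ≤ 1 := pow_le_one₀ (by norm_num) (by norm_num)
    have h3 : (1/2:ℝ) ^ (m + 1 + 1) = (1/4) * (1/2) ^ m := by ring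
    have h4 : (1/2:ℝ) ^ (m + 1) = (1/2) * (1/2) ^ m := by ring
    nlinarith [ih, h1, h2]

lemma mt_prod_lower' (n : ℕ) :
    (1 / 4 : ℝ) ≤ ∏ k ∈ range n, (1 - (1 / 2 : ℝ) ^ (k + 1)) := by
  cases n with
  | zero => norm_num
  | succ m =>
    have h := mt_prod_lower m
    have h2 : (0:ℝ) ≤ (1/2:ℝ) ^ m := by positivity
    nlinarith

lemma mt_prod_pair (n : ℕ) :
    (∏ k ∈ range n, (1 + (1 / 2 : ℝ) ^ (k + 1))) *
      ∏ k ∈ range n, (1 - (1 / 2 : ℝ) ^ (k + 1)) ≤ 1 := by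
  rw [← Finset.prod_mul_distrib]
  apply Finset.prod_le_one
  · intro k _
    have h1 : (1/2:ℝ) ^ (k+1) ≤ 1/2 :=
      calc (1/2:ℝ)^(k+1) ≤ (1/2:ℝ)^1 := pow_le_pow_of_le_one (by norm_num) (by norm_num) (by omega)
      _ = 1/2 := by norm_num
    have h2 : (0:ℝ) ≤ (1/2:ℝ) ^ (k+1) := by positivity
    nlinarith
  · intro k _
    have h2 : (0:ℝ) ≤ (1/2:ℝ) ^ (k+1) := by positivity
    nlinarith

lemma mt_prod_upper (n : ℕ) :
    ∏ k ∈ range n, (1 + (1 / 2 : ℝ) ^ (k + 1)) ≤ 4 := by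
  have h1 := mt_prod_lower' n
  have h2 := mt_prod_pair n
  have h3 : (0:ℝ) ≤ ∏ k ∈ range n, (1 + (1 / 2 : ℝ) ^ (k + 1)) := by
    apply Finset.prod_nonneg; intro k _; positivity
  nlinarith

lemma mtQ_pos {x : ℝ} (hx : |x| ≤ 1 / 2) (n : ℕ) : 0 < mtQ x n := by
  apply Finset.prod_pos
  intro k _
  have := mt_factor_lb hx k
  have h1 : (1/2:ℝ) ^ (k+1) ≤ 1/2 := by
    calc (1/2:ℝ)^(k+1) ≤ (1/2:ℝ)^1 := pow_le_pow_of_le_one (by norm_num) (by norm_num) (by omega)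
    _ = 1/2 := by norm_num
  linarith

lemma mtQ_lower {x : ℝ} (hx : |x| ≤ 1 / 2) (m : ℕ) : (1 / 4 : ℝ) ≤ mtQ x (m + 1) := by
  have h : ∏ k ∈ range (m + 1), (1 - (1 / 2 : ℝ) ^ (k + 1)) ≤ mtQ x (m + 1) := by
    apply Finset.prod_le_prod
    · intro k _
      have h1 : (1/2:ℝ) ^ (k+1) ≤ 1/2 :=
        calc (1/2:ℝ)^(k+1) ≤ (1/2:ℝ)^1 := pow_le_pow_of_le_one (by norm_num) (by norm_num) (by omega)
        _ = 1/2 := by norm_num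
      linarith
    · intro k _; exact mt_factor_lb hx k
  have h2 : (0:ℝ) ≤ (1/2:ℝ) ^ m := by positivity
  nlinarith [mt_prod_lower m]

lemma mtQ_upper {x : ℝ} (hx : |x| ≤ 1 / 2) (n : ℕ) : mtQ x n ≤ 4 := by
  have h : mtQ x n ≤ ∏ k ∈ range n, (1 + (1 / 2 : ℝ) ^ (k + 1)) := by
    apply Finset.prod_le_prod
    · intro k _
      have h1 : (1/2:ℝ) ^ (k+1) ≤ 1/2 :=
        calc (1/2:ℝ)^(k+1) ≤ (1/2:ℝ)^1 := pow_le_pow_of_le_one (by norm_num) (by norm_num) (by omega)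
        _ = 1/2 := by norm_num
      linarith [mt_factor_lb hx k]
    · intro k _; exact mt_factor_ub hx k
  linarith [mt_prod_upper n]

lemma mtT_abs_le {x : ℝ} (hx : |x| ≤ 1 / 2) (m : ℕ) :
    |mtT x m| ≤ 4 * |x| ^ ((m + 1) ^ 2) := by
  rw [mtT_eq, abs_div, abs_pow]
  rw [abs_of_pos (mtQ_pos hx (m + 1))]
  rw [div_le_iff₀ (mtQ_pos hx (m + 1))]
  have h1 := mtQ_lower hx m
  have h2 : (0:ℝ) ≤ |x| ^ ((m+1)^2) := by positivity
  nlinarith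

lemma mt_factor_half {x : ℝ} (hx : |x| ≤ 1 / 2) (k : ℕ) :
    (1 / 2 : ℝ) ≤ 1 + x ^ (k + 1) := by
  have h := mt_factor_lb hx k
  have h1 : (1/2:ℝ) ^ (k+1) ≤ 1/2 :=
    calc (1/2:ℝ)^(k+1) ≤ (1/2:ℝ)^1 := pow_le_pow_of_le_one (by norm_num) (by norm_num) (by omega)
    _ = 1/2 := by norm_num
  linarith

lemma mtQ_succ (x : ℝ) (n : ℕ) : mtQ x (n + 1) = mtQ x n * (1 + x ^ (n + 1)) :=
  Finset.prod_range_succ _ _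

lemma mtT_ratio {x : ℝ} (hx : |x| ≤ 1 / 2) (k : ℕ) :
    |mtT x (k + 1)| ≤ (1 / 4) * |mtT x k| := by
  have hf := mt_factor_half hx (k + 1)
  have hfne : (1 + x ^ (k + 1 + 1)) ≠ 0 := by linarith
  have hqne : mtQ x (k + 1) ≠ 0 := ne_of_gt (mtQ_pos hx _)
  have hid : mtT x (k + 1) * (1 + x ^ (k + 1 + 1)) = mtT x k * x ^ (2 * k + 3) := by
    rw [mtT_eq, mtT_eq, mtQ_succ]
    have hexp : (k + 1 + 1) ^ 2 = (k + 1) ^ 2 + (2 * k + 3) := by ring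
    rw [hexp, pow_add]
    field_simp
  have habs : |mtT x (k + 1)| * |1 + x ^ (k + 1 + 1)| = |mtT x k| * |x ^ (2 * k + 3)| := by
    rw [← abs_mul, ← abs_mul, hid]
  have h1 : |x ^ (2 * k + 3)| ≤ 1 / 8 := by
    rw [abs_pow]
    calc |x| ^ (2 * k + 3) ≤ (1/2:ℝ) ^ (2 * k + 3) := pow_le_pow_left₀ (abs_nonneg x) hx _
    _ ≤ (1/2:ℝ) ^ 3 := pow_le_pow_of_le_one (by norm_num) (by norm_num) (by omega)
    _ = 1/8 := by norm_num
  have h2 : (1 / 2 : ℝ) ≤ |1 + x ^ (k + 1 + 1)| := by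
    rw [abs_of_pos (by linarith)]; exact hf
  have h3 : (0:ℝ) ≤ |mtT x (k+1)| := abs_nonneg _
  have h4 : (0:ℝ) ≤ |mtT x k| := abs_nonneg _
  nlinarith [habs, mul_le_mul_of_nonneg_left h1 h4, mul_le_mul_of_nonneg_left h2 h3]

lemma mtT_decay {x : ℝ} (hx : |x| ≤ 1 / 2) (n : ℕ) :
    ∀ m : ℕ, |mtT x (n + m)| ≤ |mtT x n| * (1 / 4) ^ m := by
  intro m
  induction m with
  | zero => simp
  | succ m ih =>
    have h := mtT_ratio hx (n + m)
    calc |mtT x (n + (m + 1))| = |mtT x (n + m + 1)| := by ring_nf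
    _ ≤ (1/4) * |mtT x (n + m)| := h
    _ ≤ (1/4) * (|mtT x n| * (1/4) ^ m) := by linarith
    _ = |mtT x n| * (1/4) ^ (m + 1) := by ring

lemma mtT_summable {x : ℝ} (hx : |x| ≤ 1 / 2) : Summable (mtT x) := by
  rw [← summable_abs_iff]
  have hg : Summable (fun m : ℕ => |mtT x 0| * (1 / 4 : ℝ) ^ m) :=
    (summable_geometric_of_lt_one (by norm_num) (by norm_num)).mul_left _
  refine hg.of_nonneg_of_le (fun m => abs_nonneg _) (fun m => ?_)
  simpa using mtT_decay hx 0 m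

lemma mtT_tail_abs_summable {x : ℝ} (hx : |x| ≤ 1 / 2) (n : ℕ) :
    Summable (fun m => |mtT x (m + n)|) :=
  (summable_nat_add_iff (f := fun m => |mtT x m|) n).2 (mtT_summable hx).abs

lemma mtT_tail_ub {x : ℝ} (hx : |x| ≤ 1 / 2) (n : ℕ) :
    |∑' m : ℕ, mtT x (m + n)| ≤ 2 * |mtT x n| := by
  have hg : Summable (fun m : ℕ => |mtT x n| * (1 / 4 : ℝ) ^ m) :=
    (summable_geometric_of_lt_one (by norm_num) (by norm_num)).mul_left _
  have h1 : |∑' m : ℕ, mtT x (m + n)| ≤ ∑' m : ℕ, |mtT x (m + n)| := by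
    have := norm_tsum_le_tsum_norm (f := fun m : ℕ => mtT x (m + n))
      (by simpa [Real.norm_eq_abs] using mtT_tail_abs_summable hx n)
    simpa [Real.norm_eq_abs] using this
  have h2 : ∑' m : ℕ, |mtT x (m + n)| ≤ ∑' m : ℕ, |mtT x n| * (1 / 4) ^ m := by
    refine Summable.tsum_le_tsum (fun m => ?_) (mtT_tail_abs_summable hx n) hg
    simpa [add_comm] using mtT_decay hx n m
  have h3 : ∑' m : ℕ, |mtT x n| * (1 / 4 : ℝ) ^ m = |mtT x n| * (1 - 1 / 4)⁻¹ := by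
    rw [tsum_mul_left, tsum_geometric_of_lt_one (by norm_num) (by norm_num)]
  have h4 := abs_nonneg (mtT x n)
  nlinarith [h1, h2, h3]

lemma mtT_tail_lb {x : ℝ} (hx : |x| ≤ 1 / 2) (n : ℕ) :
    (1 / 2) * |mtT x n| ≤ |∑' m : ℕ, mtT x (m + n)| := by
  have hs : Summable (fun m => mtT x (m + n)) :=
    ((summable_nat_add_iff n).2 (mtT_summable hx))
  have hsplit : ∑' m : ℕ, mtT x (m + n) = mtT x n + ∑' m : ℕ, mtT x (m + 1 + n) := by
    rw [Summable.tsum_eq_zero_add hs]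
    simp [add_comm, add_assoc, add_left_comm]
  have hrest : |∑' m : ℕ, mtT x (m + 1 + n)| ≤ (1/2) * |mtT x n| := by
    have heq : ∀ m : ℕ, mtT x (m + 1 + n) = mtT x (m + (n + 1)) := by intro m; ring_nf
    calc |∑' m : ℕ, mtT x (m + 1 + n)| = |∑' m : ℕ, mtT x (m + (n + 1))| := by
          congr 1; exact tsum_congr heq
    _ ≤ 2 * |mtT x (n + 1)| := mtT_tail_ub hx (n + 1)
    _ ≤ 2 * ((1/4) * |mtT x n|) := by linarith [mtT_ratio hx n, abs_nonneg (mtT x (n+1))]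
    _ = (1/2) * |mtT x n| := by ring
  calc (1/2) * |mtT x n| = |mtT x n| - (1/2) * |mtT x n| := by ring
  _ ≤ |mtT x n| - |∑' m : ℕ, mtT x (m + 1 + n)| := by linarith
  _ ≤ |mtT x n + ∑' m : ℕ, mtT x (m + 1 + n)| := by
        have := abs_sub_abs_le_abs_sub (mtT x n)
          (-(∑' m : ℕ, mtT x (m + 1 + n)))
        simp only [abs_neg, sub_neg_eq_add] at this
        exact this
  _ = |∑' m : ℕ, mtT x (m + n)| := by rw [hsplit]

lemma mt_pow_mul_pow_one_div {q : ℝ} (hq : q ≠ 0) (e : ℕ) : q ^ e * (1 / q) ^ e = 1 := by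
  rw [← mul_pow, mul_one_div, div_self hq, one_pow]

lemma mtD_step {q : ℝ} (hq : q ≠ 0) (n : ℕ) :
    q ^ ((n + 1) ^ 2) * mtQ (1 / q) (n + 1)
      = (q ^ (2 * n + 1) + q ^ n) * (q ^ (n ^ 2) * mtQ (1 / q) n) := by
  rw [mtQ_succ]
  have hexp : (n + 1) ^ 2 = n ^ 2 + (2 * n + 1) := by ring
  have key : q ^ (2 * n + 1) * (1 + (1 / q) ^ (n + 1)) = q ^ (2 * n + 1) + q ^ n := by
    rw [mul_add, mul_one, show 2 * n + 1 = n + (n + 1) by ring, pow_add, mul_assoc,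
      mt_pow_mul_pow_one_div hq, mul_one]
  rw [hexp]
  calc q ^ (n ^ 2 + (2 * n + 1)) * (mtQ (1 / q) n * (1 + (1 / q) ^ (n + 1)))
      = (q ^ (2 * n + 1) * (1 + (1 / q) ^ (n + 1))) * (q ^ (n ^ 2) * mtQ (1 / q) n) := by
        rw [pow_add]; ring
  _ = (q ^ (2 * n + 1) + q ^ n) * (q ^ (n ^ 2) * mtQ (1 / q) n) := by rw [key]

lemma mtD_int (q : ℤ) (hq : (q : ℝ) ≠ 0) (n : ℕ) :
    ∃ z : ℤ, (q : ℝ) ^ (n ^ 2) * mtQ (1 / q) n = z := by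
  induction n with
  | zero => exact ⟨1, by simp [mtQ]⟩
  | succ n ih =>
    obtain ⟨z, hz⟩ := ih
    refine ⟨(q ^ (2 * n + 1) + q ^ n) * z, ?_⟩
    rw [mtD_step hq n, hz]
    push_cast
    ring

lemma mtDt_int (q : ℤ) (hq : (q : ℝ) ≠ 0) (hx : |1 / (q : ℝ)| ≤ 1 / 2) (m : ℕ) :
    ∀ n : ℕ, m < n → ∃ z : ℤ, (q : ℝ) ^ (n ^ 2) * mtQ (1 / q) n * mtT (1 / q) m = z := by
  have base : (q : ℝ) ^ ((m + 1) ^ 2) * mtQ (1 / q) (m + 1) * mtT (1 / q) m = 1 := by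
    rw [mtT_eq]
    have hQ := ne_of_gt (mtQ_pos hx (m + 1))
    rw [mul_assoc, mul_div_assoc', mul_comm (mtQ (1 / (q:ℝ)) (m+1)), mul_div_assoc,
      div_self hQ, mul_one, mt_pow_mul_pow_one_div hq]
  intro n
  refine Nat.le_induction ?_ ?_ n
  · exact ⟨1, by rw [base]; norm_num⟩
  · rintro n hn ⟨z, hz⟩
    refine ⟨(q ^ (2 * n + 1) + q ^ n) * z, ?_⟩
    calc (q : ℝ) ^ ((n + 1) ^ 2) * mtQ (1 / q) (n + 1) * mtT (1 / q) m
        = (q ^ (2 * n + 1) + q ^ n) * ((q : ℝ) ^ (n ^ 2) * mtQ (1 / q) n * mtT (1 / q) m) := by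
          rw [mtD_step hq n]; ring
    _ = ((q ^ (2 * n + 1) + q ^ n) * z : ℤ) := by rw [hz]; push_cast; ring

lemma mtP_int (q : ℤ) (hq : (q : ℝ) ≠ 0) (hx : |1 / (q : ℝ)| ≤ 1 / 2) (n : ℕ) :
    ∃ z : ℤ, (q : ℝ) ^ (n ^ 2) * mtQ (1 / q) n * ∑ m ∈ range n, mtT (1 / q) m = z := by
  classical
  refine ⟨∑ m ∈ range n, if h : m < n then (mtDt_int q hq hx m n h).choose else 0, ?_⟩
  rw [Finset.mul_sum]
  push_cast
  refine Finset.sum_congr rfl fun m hm => ?_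
  rw [dif_pos (mem_range.1 hm)]
  exact (mtDt_int q hq hx m n (mem_range.1 hm)).choose_spec

/-- The fifth-order mock theta function
`f₀(x) = 1 + Σ_{n=1}^∞ x^{n²} / ∏_{k=1}^{n} (1 + x^k)`
takes an irrational value at `x = 1/q` for every integer `q` with `|q| ≥ 2`. -/
theorem mock_theta_f0_irrational (q : ℤ) (hq : 2 ≤ |q|) :
    Irrational (1 + ∑' n : ℕ,
      (1 / (q : ℝ)) ^ ((n + 1) ^ 2) /
        ∏ k ∈ Finset.range (n + 1), (1 + (1 / (q : ℝ)) ^ (k + 1))) := by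
  have hq2 : (2 : ℝ) ≤ |(q : ℝ)| := by
    rw [← Int.cast_abs]; exact_mod_cast hq
  have hqne : (q : ℝ) ≠ 0 := by
    intro h; rw [h] at hq2; simp at hq2; linarith
  have hqpos : (0 : ℝ) < |(q : ℝ)| := by linarith
  have hx : |1 / (q : ℝ)| ≤ 1 / 2 := by
    rw [abs_div, abs_one, div_le_div_iff₀ hqpos (by norm_num)]
    linarith
  have hsum : Summable (mtT (1 / (q : ℝ))) := mtT_summable hx
  have hterm : (∑' n : ℕ, (1 / (q : ℝ)) ^ ((n + 1) ^ 2) /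
      ∏ k ∈ Finset.range (n + 1), (1 + (1 / (q : ℝ)) ^ (k + 1)))
      = ∑' n : ℕ, mtT (1 / (q : ℝ)) n := rfl
  rw [hterm]
  by_contra hirr
  obtain ⟨r, hr⟩ := not_not.mp hirr
  set S : ℝ := ∑' n : ℕ, mtT (1 / (q : ℝ)) n with hSdef
  have hS : ((r - 1 : ℚ) : ℝ) = S := by push_cast; linarith
  set a : ℤ := (r - 1).num with hadef
  set b : ℕ := (r - 1).den with hbdef
  have hbpos : 0 < b := (r - 1).pos
  have hbne : (b : ℝ) ≠ 0 := Nat.cast_ne_zero.mpr hbpos.ne'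
  have hba : (b : ℝ) * S = a := by
    rw [← hS, Rat.cast_def]
    field_simp
    rw [hbdef, hadef]
  obtain ⟨n, hndef⟩ : ∃ n : ℕ, n = b + 3 := ⟨_, rfl⟩
  obtain ⟨zD, hzD⟩ := mtD_int q hqne n
  obtain ⟨zP, hzP⟩ := mtP_int q hqne hx n
  have hsplit : (∑ m ∈ range n, mtT (1 / (q : ℝ)) m)
      + ∑' m : ℕ, mtT (1 / (q : ℝ)) (m + n) = S := Summable.sum_add_tsum_nat_add n hsum
  set T : ℝ := ∑' m : ℕ, mtT (1 / (q : ℝ)) (m + n) with hTdef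
  set D : ℝ := (q : ℝ) ^ (n ^ 2) * mtQ (1 / (q : ℝ)) n with hDdef
  set P : ℝ := ∑ m ∈ range n, mtT (1 / (q : ℝ)) m with hPdef
  have hZr : ((a * zD - (b : ℤ) * zP : ℤ) : ℝ) = (b : ℝ) * D * T := by
    push_cast
    linear_combination (-(a : ℝ)) * hzD + (b : ℝ) * hzP + (-D) * hba
      + (-(b : ℝ) * D) * hsplit
  have hQpos := mtQ_pos hx n
  have hDne : D ≠ 0 := mul_ne_zero (pow_ne_zero _ hqne) (ne_of_gt hQpos)
  have htne : mtT (1 / (q : ℝ)) n ≠ 0 := by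
    rw [mtT_eq]
    exact div_ne_zero (pow_ne_zero _ (one_div_ne_zero hqne)) (ne_of_gt (mtQ_pos hx (n + 1)))
  have habs : (0 : ℝ) < |mtT (1 / (q : ℝ)) n| := abs_pos.mpr htne
  have hTlb : 1 / 2 * |mtT (1 / (q : ℝ)) n| ≤ |T| := by
    rw [hTdef]; exact mtT_tail_lb hx n
  have hTub : |T| ≤ 2 * |mtT (1 / (q : ℝ)) n| := by
    rw [hTdef]; exact mtT_tail_ub hx n
  have hTne : T ≠ 0 := by
    intro h
    rw [h] at hTlb
    simp only [abs_zero] at hTlb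
    linarith
  have hZne : (a * zD - (b : ℤ) * zP : ℤ) ≠ 0 := by
    intro h
    rw [h] at hZr
    simp only [Int.cast_zero] at hZr
    exact (mul_ne_zero (mul_ne_zero hbne hDne) hTne) hZr.symm
  have h1le : (1 : ℝ) ≤ |((a * zD - (b : ℤ) * zP : ℤ) : ℝ)| := by
    rw [← Int.cast_abs]
    exact_mod_cast Int.one_le_abs hZne
  -- the magnitude bound
  have hDb : |D| ≤ 4 * |(q : ℝ)| ^ (n ^ 2) := by
    rw [hDdef, abs_mul, abs_pow, abs_of_pos hQpos]
    have := mtQ_upper hx n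
    have h0 : (0 : ℝ) ≤ |(q : ℝ)| ^ (n ^ 2) := by positivity
    nlinarith
  have htb : |mtT (1 / (q : ℝ)) n| ≤ 4 * |1 / (q : ℝ)| ^ ((n + 1) ^ 2) := mtT_abs_le hx n
  have hTb : |T| ≤ 8 * |1 / (q : ℝ)| ^ ((n + 1) ^ 2) := by linarith
  have hcollapse : |(q : ℝ)| ^ (n ^ 2) * |1 / (q : ℝ)| ^ ((n + 1) ^ 2)
      = |1 / (q : ℝ)| ^ (2 * n + 1) := by
    rw [show (n + 1) ^ 2 = n ^ 2 + (2 * n + 1) by ring, pow_add, ← mul_assoc,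
      ← mul_pow, ← abs_mul, mul_one_div, div_self hqne, abs_one, one_pow, one_mul]
  have hxpow : |1 / (q : ℝ)| ^ (2 * n + 1) ≤ (1 / 2 : ℝ) ^ (2 * n + 1) :=
    pow_le_pow_left₀ (abs_nonneg _) hx _
  have hDT : |D| * |T| ≤ (4 * |(q : ℝ)| ^ (n ^ 2)) * (8 * |1 / (q : ℝ)| ^ ((n + 1) ^ 2)) :=
    mul_le_mul hDb hTb (abs_nonneg _) (by positivity)
  have h5 : (0 : ℝ) ≤ (b : ℝ) := Nat.cast_nonneg _
  have hbound : |(b : ℝ) * D * T| ≤ 32 * (b : ℝ) * ((1 / 2 : ℝ) ^ (2 * n + 1)) := by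
    calc |(b : ℝ) * D * T| = (b : ℝ) * (|D| * |T|) := by
          rw [abs_mul, abs_mul, Nat.abs_cast]; ring
    _ ≤ (b : ℝ) * ((4 * |(q : ℝ)| ^ (n ^ 2)) * (8 * |1 / (q : ℝ)| ^ ((n + 1) ^ 2))) :=
          mul_le_mul_of_nonneg_left hDT h5
    _ = 32 * (b : ℝ) * (|(q : ℝ)| ^ (n ^ 2) * |1 / (q : ℝ)| ^ ((n + 1) ^ 2)) := by ring
    _ = 32 * (b : ℝ) * |1 / (q : ℝ)| ^ (2 * n + 1) := by rw [hcollapse]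
    _ ≤ 32 * (b : ℝ) * ((1 / 2 : ℝ) ^ (2 * n + 1)) :=
          mul_le_mul_of_nonneg_left hxpow (by positivity)
  have hsmall : 32 * (b : ℝ) * ((1 / 2 : ℝ) ^ (2 * n + 1)) < 1 := by
    have hb2 : (b : ℝ) < 2 ^ b := by exact_mod_cast Nat.lt_two_pow_self (n := b)
    have hpow : (1 / 2 : ℝ) ^ (2 * n + 1) ≤ (1 / 2 : ℝ) ^ (b + 6) := by
      apply pow_le_pow_of_le_one (by norm_num) (by norm_num)
      omega
    have heq : (1 / 2 : ℝ) ^ (b + 6) = ((2 : ℝ) ^ b)⁻¹ * (1 / 64) := by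
      rw [pow_add, one_div, inv_pow]
      norm_num
    have h2bpos : (0 : ℝ) < 2 ^ b := by positivity
    have hfinal : 32 * (b : ℝ) * ((1 / 2 : ℝ) ^ (b + 6)) < 1 := by
      rw [heq,
        show 32 * (b : ℝ) * (((2 : ℝ) ^ b)⁻¹ * (1 / 64)) = (b : ℝ) / (2 ^ b) / 2 by ring]
      have hlt : (b : ℝ) / 2 ^ b < 1 := (div_lt_one h2bpos).mpr hb2
      linarith
    have hmono : 32 * (b : ℝ) * ((1 / 2 : ℝ) ^ (2 * n + 1))
        ≤ 32 * (b : ℝ) * ((1 / 2 : ℝ) ^ (b + 6)) :=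
      mul_le_mul_of_nonneg_left hpow (by positivity)
    linarith
  rw [hZr] at h1le
  linarith [le_trans h1le hbound]
end

section
/- For every integer q with |q| ≥ 2, the value f₁(1/q) = 1 + Σ_{n=1}^∞ (1/q)^{n(n+1)} / ∏_{k=1}^{n} (1 + (1/q)^k) is irrational; i.e., the fifth-order mock theta function f₁ takes an irrational value at each point ±1/2, ±1/3, ±1/4, … . -/
open Finset

namespace MockF1irr

def aa (q : ℤ) (k : ℕ) : ℤ := q ^ (k + 1) * (q ^ (k + 1) + 1)

def ee (q : ℤ) (n : ℕ) : ℤ := ∏ k ∈ range (n + 1), aa q k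

variable {q : ℤ}

lemma abs_aa_ge (hq : 2 ≤ |q|) (k : ℕ) :
    2 ^ (k + 1) * (2 ^ (k + 1) - 1) ≤ |aa q k| := by
  have h1 : (2:ℤ) ^ (k+1) ≤ |q ^ (k+1)| := by
    rw [abs_pow]; exact pow_le_pow_left₀ (by norm_num) hq _
  have h2 : (2:ℤ) ^ (k+1) - 1 ≤ |q ^ (k+1) + 1| := by
    have := abs_sub_abs_le_abs_sub (q ^ (k+1)) (-1)
    simp only [abs_neg, abs_one, sub_neg_eq_add] at this
    omega
  rw [aa, abs_mul]
  have h2' : (0:ℤ) ≤ 2 ^ (k+1) - 1 := by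
    have h := pow_pos (show (0:ℤ) < 2 by norm_num) (k+1)
    linarith [Int.add_one_le_iff.mpr h]
  exact mul_le_mul h1 h2 h2' (abs_nonneg _)

lemma two_le_abs_aa (hq : 2 ≤ |q|) (k : ℕ) : 2 ≤ |aa q k| := by
  have := abs_aa_ge hq k
  have h1 : (2:ℤ) ≤ 2 ^ (k+1) := by
    calc (2:ℤ) = 2^1 := by norm_num
    _ ≤ 2^(k+1) := pow_le_pow_right₀ (by norm_num) (by omega)
  nlinarith

lemma pow_le_abs_aa (hq : 2 ≤ |q|) (k : ℕ) : 2 ^ (k+1) ≤ |aa q k| := by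
  have := abs_aa_ge hq k
  have h1 : (1:ℤ) ≤ 2 ^ (k+1) - 1 := by
    have : (2:ℤ) ≤ 2 ^ (k+1) := by
      calc (2:ℤ) = 2^1 := by norm_num
      _ ≤ 2^(k+1) := pow_le_pow_right₀ (by norm_num) (by omega)
    omega
  nlinarith [pow_pos (show (0:ℤ) < 2 by norm_num) (k+1)]

lemma aa_ne (hq : 2 ≤ |q|) (k : ℕ) : aa q k ≠ 0 := by
  have := two_le_abs_aa hq k
  intro h; rw [h] at this; simp at this

lemma abs_ee_ge (hq : 2 ≤ |q|) (n : ℕ) : 2 ^ (n+1) ≤ |ee q n| := by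
  rw [ee, Finset.abs_prod]
  calc (2:ℤ) ^ (n+1) = ∏ _k ∈ range (n+1), 2 := by
        rw [Finset.prod_const, card_range]
    _ ≤ ∏ k ∈ range (n+1), |aa q k| :=
        Finset.prod_le_prod (fun _ _ => by norm_num) (fun k _ => two_le_abs_aa hq k)

lemma ee_ne (hq : 2 ≤ |q|) (n : ℕ) : ee q n ≠ 0 := by
  have := abs_ee_ge hq n
  intro h; rw [h] at this
  simp at this
  nlinarith [pow_pos (show (0:ℤ) < 2 by norm_num) (n+1)]

lemma ee_succ (n : ℕ) : ee q (n+1) = ee q n * aa q (n+1) :=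
  Finset.prod_range_succ _ _

lemma ee_dvd (hmn : m ≤ n) : ee q m ∣ ee q n :=
  Finset.prod_dvd_prod_of_subset _ _ _ (by
    intro x hx; simp only [mem_range] at *; omega)


lemma qR_ne (hq : 2 ≤ |q|) : (q:ℝ) ≠ 0 := by
  have : q ≠ 0 := by intro h; rw [h] at hq; simp at hq
  exact_mod_cast this

lemma term_eq (hq : 2 ≤ |q|) (n : ℕ) :
    (1 / (q : ℝ)) ^ ((n + 1) * (n + 2)) /
        ∏ k ∈ Finset.range (n + 1), (1 + (1 / (q : ℝ)) ^ (k + 1)) =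
      1 / (ee q n : ℝ) := by
  have hq0 := qR_ne hq
  have hsum : ∑ k ∈ range (n+1), 2 * (k+1) = (n+1) * (n+2) := by
    induction n with
    | zero => simp
    | succ m ih => rw [Finset.sum_range_succ, ih]; ring
  have hnum : (1 / (q : ℝ)) ^ ((n + 1) * (n + 2)) =
      ∏ k ∈ range (n+1), (1 / (q : ℝ)) ^ (2 * (k+1)) := by
    rw [Finset.prod_pow_eq_pow_sum, hsum]
  rw [hnum, ← Finset.prod_div_distrib, ee]
  push_cast
  rw [show (1:ℝ) / ∏ i ∈ range (n+1), ((aa q i : ℤ):ℝ) =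
      ∏ i ∈ range (n+1), (1 / ((aa q i : ℤ):ℝ)) by
    rw [Finset.prod_div_distrib, Finset.prod_const_one]]
  refine Finset.prod_congr rfl fun k _ => ?_
  have hpow : (2:ℤ) ^ (k+1) ≤ |q ^ (k+1)| := by
    rw [abs_pow]; exact pow_le_pow_left₀ (by norm_num) hq _
  have h2 : (2:ℤ) ≤ |q ^ (k+1)| := le_trans (by
    calc (2:ℤ) = 2^1 := by norm_num
    _ ≤ 2^(k+1) := pow_le_pow_right₀ (by norm_num) (by omega)) hpow
  have h1 : (q:ℝ) ^ (k+1) + 1 ≠ 0 := by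
    intro h
    have hz : (q:ℝ) ^ (k+1) = -1 := by linarith
    have hz' : q ^ (k+1) = -1 := by exact_mod_cast hz
    rw [hz'] at h2; simp at h2
  rw [aa]
  push_cast
  have hx : (q:ℝ)^(k+1) ≠ 0 := pow_ne_zero _ hq0
  rw [pow_mul', one_div_pow, one_div_pow]
  field_simp


lemma abs_eeR (hq : 2 ≤ |q|) (n : ℕ) : (2:ℝ) ^ (n+1) ≤ |(ee q n : ℝ)| := by
  have := abs_ee_ge hq n
  rw [← Int.cast_abs]
  exact_mod_cast this

lemma abs_eeR_pos (hq : 2 ≤ |q|) (n : ℕ) : (0:ℝ) < |(ee q n : ℝ)| := by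
  have := abs_eeR hq n
  nlinarith [pow_pos (show (0:ℝ) < 2 by norm_num) (n+1)]

lemma summable_f (hq : 2 ≤ |q|) : Summable (fun n => 1 / (ee q n : ℝ)) := by
  refine Summable.of_norm_bounded (g := fun n => (1/2:ℝ)^n)
    (summable_geometric_of_lt_one (by norm_num) (by norm_num)) (fun n => ?_)
  have h1 : (2:ℝ)^n ≤ |(ee q n : ℝ)| :=
    le_trans (pow_le_pow_right₀ (by norm_num) (by omega : n ≤ n + 1)) (abs_eeR hq n)
  calc ‖1 / (ee q n : ℝ)‖ = 1 / |(ee q n : ℝ)| := by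
        rw [Real.norm_eq_abs, abs_div, abs_one]
    _ ≤ 1 / (2:ℝ)^n := one_div_le_one_div_of_le (by positivity) h1
    _ = (1/2:ℝ)^n := by rw [div_pow, one_pow]

lemma abs_ee_add (hq : 2 ≤ |q|) (N m : ℕ) :
    |(ee q N : ℝ)| * 2 ^ m ≤ |(ee q (N + m) : ℝ)| := by
  induction m with
  | zero => simp
  | succ m ih =>
    have h2 : (2:ℝ) ≤ |(aa q (N + m + 1) : ℝ)| := by
      have := two_le_abs_aa hq (N + m + 1)
      rw [← Int.cast_abs]; exact_mod_cast this
    have : ((ee q (N + (m+1)) : ℤ) : ℝ) = (ee q (N+m) : ℝ) * (aa q (N+m+1) : ℝ) := by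
      rw [show N + (m+1) = (N + m) + 1 from rfl, ee_succ]; push_cast; ring
    rw [this, abs_mul, pow_succ, ← mul_assoc]
    have h3 : (0:ℝ) ≤ |(ee q N : ℝ)| * 2 ^ m := by positivity
    calc |(ee q N : ℝ)| * 2 ^ m * 2 ≤ |(ee q (N+m) : ℝ)| * 2 := by nlinarith
      _ ≤ |(ee q (N+m) : ℝ)| * |(aa q (N+m+1) : ℝ)| := by
          have := abs_nonneg ((ee q (N+m) : ℝ)); nlinarith

lemma tail_abs_le (hq : 2 ≤ |q|) (N : ℕ) :
    |∑' m : ℕ, 1 / (ee q (m + N) : ℝ)| ≤ 2 / |(ee q N : ℝ)| := by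
  have hpos := abs_eeR_pos hq N
  have hg : HasSum (fun m : ℕ => (1 / |(ee q N : ℝ)|) * (1/2)^m)
      (1 / |(ee q N : ℝ)| * 2) := by
    have h := (hasSum_geometric_of_lt_one (show (0:ℝ) ≤ 1/2 by norm_num)
      (by norm_num)).mul_left (1 / |(ee q N : ℝ)|)
    have h2 : (1 - (1/2:ℝ))⁻¹ = 2 := by norm_num
    rwa [h2] at h
  have hb : ∀ m : ℕ, ‖1 / (ee q (m + N) : ℝ)‖ ≤ (1 / |(ee q N : ℝ)|) * (1/2)^m := by
    intro m
    rw [Real.norm_eq_abs, abs_div, abs_one]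
    have h1 := abs_ee_add hq N m
    rw [show N + m = m + N from by omega] at h1
    have key : 1 / |(ee q N : ℝ)| * (1/2:ℝ)^m = 1 / (|(ee q N : ℝ)| * 2^m) := by
      rw [div_pow, one_pow]; field_simp
    rw [key]
    exact one_div_le_one_div_of_le (by positivity) h1
  rw [← Real.norm_eq_abs]
  calc ‖∑' m : ℕ, 1 / (ee q (m + N) : ℝ)‖ ≤ 1 / |(ee q N : ℝ)| * 2 :=
        tsum_of_norm_bounded hg hb
    _ = 2 / |(ee q N : ℝ)| := by ring


lemma tail_ne (hq : 2 ≤ |q|) (N : ℕ) : (∑' m : ℕ, 1 / (ee q (m + N) : ℝ)) ≠ 0 := by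
  have hsum : Summable (fun m : ℕ => 1 / (ee q (m + N) : ℝ)) :=
    (summable_nat_add_iff N).mpr (summable_f hq)
  have hsplit : (∑' m : ℕ, 1 / (ee q (m + N) : ℝ)) =
      1 / (ee q N : ℝ) + ∑' m : ℕ, 1 / (ee q (m + (N+1)) : ℝ) := by
    rw [Summable.tsum_eq_zero_add hsum]
    congr 1
    · norm_num
    · exact tsum_congr fun m => by rw [show m + 1 + N = m + (N+1) from by omega]
  have hT' := tail_abs_le hq (N+1)
  have hposN := abs_eeR_pos hq N
  have hposN1 := abs_eeR_pos hq (N+1)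
  have hA : (4:ℝ) ≤ |(aa q (N+1) : ℝ)| := by
    have h1 := pow_le_abs_aa hq (N+1)
    have h2 : (4:ℤ) ≤ 2^(N+2) := by
      calc (4:ℤ) = 2^2 := by norm_num
      _ ≤ 2^(N+2) := pow_le_pow_right₀ (by norm_num) (by omega)
    have : (4:ℤ) ≤ |aa q (N+1)| := le_trans h2 h1
    rw [← Int.cast_abs]; exact_mod_cast this
  have heq : |(ee q (N+1) : ℝ)| = |(ee q N : ℝ)| * |(aa q (N+1) : ℝ)| := by
    rw [show ((ee q (N+1) : ℤ):ℝ) = (ee q N : ℝ) * (aa q (N+1) : ℝ) by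
      rw [ee_succ]; push_cast; ring, abs_mul]
  have hT'le : |∑' m : ℕ, 1 / (ee q (m + (N+1)) : ℝ)| ≤ 1 / (2 * |(ee q N : ℝ)|) := by
    calc |∑' m : ℕ, 1 / (ee q (m + (N+1)) : ℝ)| ≤ 2 / |(ee q (N+1) : ℝ)| := hT'
      _ ≤ 1 / (2 * |(ee q N : ℝ)|) := by
          rw [heq, div_le_div_iff₀ (by positivity) (by positivity)]
          nlinarith
  intro h0
  rw [hsplit] at h0
  have hneg : (∑' m : ℕ, 1 / (ee q (m + (N+1)) : ℝ)) = -(1 / (ee q N : ℝ)) := by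
    linarith
  rw [hneg, abs_neg, abs_div, abs_one] at hT'le
  rw [div_le_div_iff₀ hposN (by positivity)] at hT'le
  nlinarith

lemma irrational_S (hq : 2 ≤ |q|) : Irrational (∑' n : ℕ, 1 / (ee q n : ℝ)) := by
  set S := ∑' n : ℕ, 1 / (ee q n : ℝ) with hSdef
  rintro ⟨r, hr⟩
  set b : ℕ := r.den with hbdef
  have hb : 0 < b := r.pos
  have hbne : (b:ℝ) ≠ 0 := by positivity
  set N : ℕ := b with hNdef
  have hsum := summable_f (q := q) hq
  have hsplit := Summable.sum_add_tsum_nat_add (f := fun n => 1 / (ee q n : ℝ)) (N+1) hsum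
  set T := ∑' m : ℕ, 1 / (ee q (m + (N+1)) : ℝ) with hTdef
  have hP : ∃ P : ℤ, (ee q N : ℝ) * (∑ n ∈ range (N+1), 1 / (ee q n : ℝ)) = P := by
    refine ⟨∑ n ∈ range (N+1), ee q N / ee q n, ?_⟩
    rw [Int.cast_sum, Finset.mul_sum]
    refine Finset.sum_congr rfl fun n hn => ?_
    have hd : ee q n ∣ ee q N := ee_dvd (by simp only [mem_range] at hn; omega)
    obtain ⟨c, hc⟩ := hd
    have hne : ee q n ≠ 0 := ee_ne hq n
    have hneR : ((ee q n : ℤ):ℝ) ≠ 0 := Int.cast_ne_zero.mpr hne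
    rw [hc, Int.mul_ediv_cancel_left _ hne]
    push_cast
    field_simp
  obtain ⟨P, hP⟩ := hP
  have hTne : T ≠ 0 := tail_ne hq (N+1)
  have hTle : |T| ≤ 2 / |(ee q (N+1) : ℝ)| := tail_abs_le hq (N+1)
  have hSr : S = (r.num : ℝ) / (b : ℝ) := by rw [← hr, Rat.cast_def]
  set J : ℤ := r.num * ee q N - (b : ℤ) * P with hJdef
  have hsplit' : (∑ n ∈ range (N+1), 1 / (ee q n : ℝ)) + T = S := by
    rw [hSdef, hTdef]; exact hsplit
  have hT : T = S - ∑ n ∈ range (N+1), 1 / (ee q n : ℝ) := by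
    linarith
  have h1 : (b:ℝ) * S = (r.num : ℝ) := by
    rw [hSr]; field_simp
    exact mul_div_cancel_left₀ _ hbne
  have hJR : (J : ℝ) = (b:ℝ) * (ee q N : ℝ) * T := by
    calc (J:ℝ) = (r.num:ℝ) * (ee q N:ℝ) - (b:ℝ) * (P:ℝ) := by rw [hJdef]; push_cast; ring
      _ = (b:ℝ) * S * (ee q N:ℝ)
          - (b:ℝ) * ((ee q N:ℝ) * (∑ n ∈ range (N+1), 1 / (ee q n : ℝ))) := by
          rw [h1, hP]
      _ = (b:ℝ) * (ee q N:ℝ) * T := by rw [hT]; ring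
  have heNne : ((ee q N : ℤ):ℝ) ≠ 0 := Int.cast_ne_zero.mpr (ee_ne hq N)
  have hJne : J ≠ 0 := by
    intro h
    apply hTne
    rw [h] at hJR
    simp only [Int.cast_zero] at hJR
    have := hJR.symm
    rcases mul_eq_zero.mp this with h' | h'
    · rcases mul_eq_zero.mp h' with h'' | h''
      · exact absurd h'' hbne
      · exact absurd h'' heNne
    · exact h'
  have hA : (2:ℝ)^(N+2) ≤ |(aa q (N+1) : ℝ)| := by
    have h1' := pow_le_abs_aa hq (N+1)
    rw [← Int.cast_abs]
    exact_mod_cast h1'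
  have hb2 : 2 * (b:ℝ) < 2^(N+2) := by
    have hnat : 2 * b < 2^(b+2) := by
      have h := Nat.lt_two_pow_self (n := b)
      calc 2 * b < 2 * 2^b := by omega
        _ = 2^(b+1) := by rw [pow_succ]; ring
        _ ≤ 2^(b+2) := Nat.pow_le_pow_right (by norm_num) (by omega)
    rw [hNdef]
    exact_mod_cast hnat
  have heq : |(ee q (N+1) : ℝ)| = |(ee q N : ℝ)| * |(aa q (N+1) : ℝ)| := by
    rw [show ((ee q (N+1) : ℤ):ℝ) = (ee q N : ℝ) * (aa q (N+1) : ℝ) by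
      rw [ee_succ]; push_cast; ring, abs_mul]
  have hposN := abs_eeR_pos hq N
  have hposN1 := abs_eeR_pos hq (N+1)
  have hApos : (0:ℝ) < |(aa q (N+1) : ℝ)| := by
    have : (0:ℝ) < 2^(N+2) := by positivity
    linarith
  have habs : |(J:ℝ)| < 1 := by
    rw [hJR, abs_mul, abs_mul, Nat.abs_cast]
    calc (b:ℝ) * |(ee q N:ℝ)| * |T| ≤ (b:ℝ) * |(ee q N:ℝ)| * (2 / |(ee q (N+1):ℝ)|) := by
          apply mul_le_mul_of_nonneg_left hTle (by positivity)
      _ = 2 * (b:ℝ) / |(aa q (N+1) : ℝ)| := by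
          rw [heq]; field_simp
      _ < 1 := by
          rw [div_lt_one hApos]
          calc 2 * (b:ℝ) < 2^(N+2) := hb2
            _ ≤ |(aa q (N+1) : ℝ)| := hA
  have hge : (1:ℝ) ≤ |(J:ℝ)| := by
    have h2 := Int.one_le_abs hJne
    rw [← Int.cast_abs]
    exact_mod_cast h2
  linarith

end MockF1irr

/-- The fifth-order mock theta function
`f₁(x) = 1 + Σ_{n=1}^∞ x^{n(n+1)} / ∏_{k=1}^{n} (1 + x^k)`
takes an irrational value at `x = 1/q` for every integer `q` with `|q| ≥ 2`. -/
theorem mock_theta_f1_irrational (q : ℤ) (hq : 2 ≤ |q|) :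
    Irrational (1 + ∑' n : ℕ,
      (1 / (q : ℝ)) ^ ((n + 1) * (n + 2)) /
        ∏ k ∈ Finset.range (n + 1), (1 + (1 / (q : ℝ)) ^ (k + 1))) := by
  have hrw : (∑' n : ℕ,
      (1 / (q : ℝ)) ^ ((n + 1) * (n + 2)) /
        ∏ k ∈ Finset.range (n + 1), (1 + (1 / (q : ℝ)) ^ (k + 1))) =
      ∑' n : ℕ, 1 / (MockF1irr.ee q n : ℝ) :=
    tsum_congr (MockF1irr.term_eq hq)
  rw [hrw]
  have hS := MockF1irr.irrational_S hq
  have := hS.ratCast_add 1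
  simpa using this
end
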